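/- arXiv:2411.07554 — 8 statements merged into one kernel-verified Lean document; each statement's English description precedes it below -/
import Mathlib

section
/- Let N be a binomial random variable with parameters n and p, where p > 0. Then there exists a universal constant C > 0 (independent of n and p) such that |E[1{N ≥ 1}/N] − 1/(np)| ≤ C (1 + 1/(np)) / (1 + (n−1)p)^2. -/
open Finset Real

/-- Expectation of `f(N)` for `N ~ Binomial(n, p)`. -/
noncomputable def binExp (n : ℕ) (p : ℝ) (f : ℕ → ℝ) : ℝ :=
  ∑ k ∈ Finset.range (n + 1), (n.choose k : ℝ) * p ^ k * (1 - p) ^ (n - k) * f k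

lemma chooseR (n k : ℕ) : ((n:ℝ)+1) * (n.choose k) = ((n+1).choose (k+1)) * ((k:ℝ)+1) := by
  exact_mod_cast congrArg (Nat.cast (R := ℝ)) (Nat.add_one_mul_choose_eq n k)

lemma chooseR2 (n k : ℕ) :
    ((n:ℝ)+1)*((n:ℝ)+2) * (n.choose k) = ((n+2).choose (k+2)) * (((k:ℝ)+1)*((k:ℝ)+2)) := by
  have h1 := chooseR n k
  have h2 := chooseR (n+1) (k+1)
  push_cast at h2
  linear_combination ((n:ℝ)+2) * h1 + ((k:ℝ)+1) * h2

lemma sum_pmf (n : ℕ) (p : ℝ) :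
    ∑ k ∈ range (n+1), (n.choose k : ℝ) * p^k * (1-p)^(n-k) = 1 := by
  have h := add_pow p (1-p) n
  rw [show p + (1-p) = 1 by ring, one_pow] at h
  rw [show ∑ k ∈ range (n+1), (n.choose k : ℝ) * p^k * (1-p)^(n-k)
      = ∑ k ∈ range (n+1), p^k * (1-p)^(n-k) * (n.choose k : ℝ) from
    Finset.sum_congr rfl fun k _ => by ring]
  exact h.symm

lemma A_id (n : ℕ) (p : ℝ) (hp : 0 < p) :
    ∑ k ∈ range (n+1), (n.choose k : ℝ) * p^k * (1-p)^(n-k) / ((k:ℝ)+1)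
      = (1 - (1-p)^(n+1)) / (((n:ℝ)+1) * p) := by
  have hnp : (0:ℝ) < ((n:ℝ)+1) * p := by positivity
  rw [eq_div_iff (ne_of_gt hnp)]
  have h := add_pow p (1-p) (n+1)
  rw [show p + (1-p) = 1 by ring, one_pow, Finset.sum_range_succ'] at h
  simp only [pow_zero, Nat.choose_zero_right, Nat.cast_one, Nat.sub_zero, one_mul, mul_one] at h
  have h2 : ∑ k ∈ range (n+1), p^(k+1) * (1-p)^((n+1)-(k+1)) * (((n+1).choose (k+1)):ℝ)
      = 1 - (1-p)^(n+1) := by linarith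
  refine Eq.trans ?_ h2
  rw [Finset.sum_mul]
  refine Finset.sum_congr rfl fun k hk => ?_
  rw [show (n+1) - (k+1) = n - k from by omega]
  have hk1 : ((k:ℝ)+1) ≠ 0 := by positivity
  field_simp
  linear_combination (p^(k+1) * (1-p)^(n-k)) * chooseR n k

lemma B_bound (n : ℕ) (p : ℝ) (hp : 0 < p) (hp1 : p ≤ 1) :
    (((n:ℝ)+1)*((n:ℝ)+2)*p^2) *
      ∑ k ∈ range (n+1), (n.choose k : ℝ)*p^k*(1-p)^(n-k)/(((k:ℝ)+1)*((k:ℝ)+2)) ≤ 1 := by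
  have hq : (0:ℝ) ≤ 1-p := by linarith
  have h := add_pow p (1-p) (n+2)
  rw [show p+(1-p)=1 by ring, one_pow, Finset.sum_range_succ', Finset.sum_range_succ'] at h
  have heq : (((n:ℝ)+1)*((n:ℝ)+2)*p^2) *
      (∑ k ∈ range (n+1), (n.choose k : ℝ)*p^k*(1-p)^(n-k)/(((k:ℝ)+1)*((k:ℝ)+2)))
      = ∑ k ∈ range (n+1), p^(k+1+1)*(1-p)^(n-k)*(((n+2).choose (k+1+1)):ℝ) := by
    rw [Finset.mul_sum]
    refine Finset.sum_congr rfl fun k hk => ?_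
    have hk1 : (((k:ℝ)+1)*((k:ℝ)+2)) ≠ 0 := by positivity
    field_simp
    linear_combination (p^(k+2) * (1-p)^(n-k)) * chooseR2 n k
  rw [heq]
  push_cast at h
  have ht0 : (0:ℝ) ≤ p^1*(1-p)^(n+1)*(((n+2).choose 1):ℝ) := by positivity
  have ht1 : (0:ℝ) ≤ p^0*(1-p)^(n+2)*(((n+2).choose 0):ℝ) := by positivity
  nlinarith [h]

lemma exp_bound (n : ℕ) (p : ℝ) (hp : 0 < p) (hp1 : p ≤ 1) :
    (1-p)^n * (1 + (n:ℝ)*p)^2 ≤ 4 := by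
  set s := (n:ℝ)*p with hsdef
  have hs0 : (0:ℝ) ≤ s := by positivity
  have h1 : (1-p) ≤ Real.exp (-p) := by nlinarith [Real.add_one_le_exp (-p)]
  have h2 : (1-p)^n ≤ Real.exp (-p)^n := pow_le_pow_left₀ (by linarith) h1 n
  have h3 : Real.exp (-p)^n = Real.exp (-s) := by
    rw [← Real.exp_nat_mul]; congr 1; rw [hsdef]; ring
  have h4 : 1 + s/2 ≤ Real.exp (s/2) := by linarith [Real.add_one_le_exp (s/2)]
  have h5 : (1+s/2)^2 ≤ Real.exp s := by
    have hh := pow_le_pow_left₀ (by linarith : (0:ℝ) ≤ 1+s/2) h4 2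
    have he : Real.exp (s/2) ^ 2 = Real.exp s := by
      rw [sq, ← Real.exp_add]; ring_nf
    linarith [hh, he ▸ hh]
  have h6 : (1+s)^2 ≤ 4*(1+s/2)^2 := by nlinarith
  have hexp := Real.exp_pos s
  have hexn := Real.exp_pos (-s)
  calc (1-p)^n * (1+s)^2 ≤ Real.exp (-s) * (4*Real.exp s) := by
        refine mul_le_mul (h3 ▸ h2) (by linarith) (by positivity) hexn.le
    _ = 4 := by rw [Real.exp_neg]; field_simp
  
set_option maxHeartbeats 2000000 in
/-- there is a universal constant `C > 0` such that for `N ~ Binomial(n,p)`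
with `n ≥ 1`, `0 < p ≤ 1`, one has
`|E[1{N ≥ 1}/N] − 1/(np)| ≤ C (1 + 1/(np)) / (1 + (n−1)p)^2`. -/
theorem stmt0 :
    ∃ C : ℝ, 0 < C ∧ ∀ (n : ℕ) (p : ℝ), 1 ≤ n → 0 < p → p ≤ 1 →
      |binExp n p (fun k => if 1 ≤ k then 1 / (k : ℝ) else 0) - 1 / ((n : ℝ) * p)|
        ≤ C * (1 + 1 / ((n : ℝ) * p)) / (1 + ((n : ℝ) - 1) * p) ^ 2 := by
  refine ⟨100, by norm_num, fun n p hn hp hp1 => ?_⟩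
  have hN : (1:ℝ) ≤ (n:ℝ) := by exact_mod_cast hn
  set N := (n:ℝ) with hNdef
  set s := N * p with hsdef
  have hs : 0 < s := by positivity
  have hq0 : (0:ℝ) ≤ 1 - p := by linarith
  have hq1 : (1:ℝ) - p ≤ 1 := by linarith
  set pmf : ℕ → ℝ := fun k => (n.choose k : ℝ) * p^k * (1-p)^(n-k) with hpmfdef
  have hpmf : ∀ k, 0 ≤ pmf k := fun k => by positivity
  set A := ∑ k ∈ range (n+1), pmf k / ((k:ℝ)+1) with hAdef
  set BS := ∑ k ∈ range (n+1), pmf k / (((k:ℝ)+1)*((k:ℝ)+2)) with hBSdef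
  have hBS0 : 0 ≤ BS := Finset.sum_nonneg fun k _ => by positivity
  -- BS ≤ 1/2
  have hBShalf : BS ≤ 1/2 := by
    have h1 : BS ≤ ∑ k ∈ range (n+1), pmf k / 2 := by
      refine Finset.sum_le_sum fun k _ => ?_
      refine div_le_div_of_nonneg_left (hpmf k) (by norm_num) ?_
      nlinarith [Nat.cast_nonneg (α := ℝ) k]
    have h2 : ∑ k ∈ range (n+1), pmf k / 2 = 1/2 := by
      rw [← Finset.sum_div, sum_pmf n p]
    linarith
  -- s^2 * BS ≤ 1
  have hBSs : s^2 * BS ≤ 1 := by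
    have hBB := B_bound n p hp hp1
    have hsq : s^2 ≤ (N+1)*(N+2)*p^2 := by rw [hsdef]; nlinarith
    nlinarith [mul_le_mul_of_nonneg_right hsq hBS0]
  -- value of A
  have hAval : A = (1 - (1-p)^(n+1)) / ((N+1) * p) := A_id n p hp
  -- E and its bounds
  set E := binExp n p (fun k => if 1 ≤ k then 1 / (k : ℝ) else 0) with hEdef
  have hEeq : E = ∑ k ∈ range (n+1), pmf k * (if 1 ≤ k then 1 / (k : ℝ) else 0) := rfl
  clear_value E
  -- upper bound : E ≤ A + 3 * BS
  have hhigh : E ≤ A + 3 * BS := by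
    have h1 : E ≤ ∑ k ∈ range (n+1), (pmf k / ((k:ℝ)+1) + 3 * (pmf k / (((k:ℝ)+1)*((k:ℝ)+2)))) := by
      rw [hEeq]
      refine Finset.sum_le_sum fun k _ => ?_
      rcases Nat.eq_zero_or_pos k with hk | hk
      · subst hk; simp; positivity
      · have hk' : 1 ≤ k := hk
        have hx : (1:ℝ) ≤ (k:ℝ) := by exact_mod_cast hk
        have hx0 : (0:ℝ) < (k:ℝ) := by linarith
        rw [if_pos hk']
        have key : 1/(k:ℝ) ≤ 1/((k:ℝ)+1) + 3/(((k:ℝ)+1)*((k:ℝ)+2)) := by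
          have e : 1/((k:ℝ)+1) + 3/(((k:ℝ)+1)*((k:ℝ)+2)) = ((k:ℝ)+5)/(((k:ℝ)+1)*((k:ℝ)+2)) := by
            field_simp; ring
          rw [e, div_le_div_iff₀ hx0 (by positivity)]
          nlinarith
        have := mul_le_mul_of_nonneg_left key (hpmf k)
        calc pmf k * (1/(k:ℝ)) ≤ pmf k * (1/((k:ℝ)+1) + 3/(((k:ℝ)+1)*((k:ℝ)+2))) := this
          _ = pmf k / ((k:ℝ)+1) + 3 * (pmf k / (((k:ℝ)+1)*((k:ℝ)+2))) := by ring
    rw [Finset.sum_add_distrib] at h1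
    rw [← Finset.mul_sum] at h1
    exact h1
  -- lower bound : A + BS - (3/2)*(1-p)^n ≤ E
  have hlow : A + BS - (3/2)*(1-p)^n ≤ E := by
    have h1 : ∑ k ∈ range (n+1),
        (pmf k / ((k:ℝ)+1) + pmf k / (((k:ℝ)+1)*((k:ℝ)+2))
          - (if k = 0 then (3/2)*(1-p)^n else 0)) ≤ E := by
      rw [hEeq]
      refine Finset.sum_le_sum fun k _ => ?_
      rcases Nat.eq_zero_or_pos k with hk | hk
      · subst hk
        have hpmf0 : pmf 0 = (1-p)^n := by simp [hpmfdef]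
        simp [hpmf0]
        ring_nf
        nlinarith [pow_nonneg hq0 n]
      · have hk' : 1 ≤ k := hk
        have hx : (1:ℝ) ≤ (k:ℝ) := by exact_mod_cast hk
        have hx0 : (0:ℝ) < (k:ℝ) := by linarith
        rw [if_pos hk', if_neg (show ¬ k = 0 by omega)]
        have key : 1/((k:ℝ)+1) + 1/(((k:ℝ)+1)*((k:ℝ)+2)) ≤ 1/(k:ℝ) := by
          have e : 1/((k:ℝ)+1) + 1/(((k:ℝ)+1)*((k:ℝ)+2)) = ((k:ℝ)+3)/(((k:ℝ)+1)*((k:ℝ)+2)) := by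
            field_simp; ring
          rw [e, div_le_div_iff₀ (by positivity) hx0]
          nlinarith
        have := mul_le_mul_of_nonneg_left key (hpmf k)
        calc pmf k / ((k:ℝ)+1) + pmf k / (((k:ℝ)+1)*((k:ℝ)+2)) - 0
            = pmf k * (1/((k:ℝ)+1) + 1/(((k:ℝ)+1)*((k:ℝ)+2))) := by ring
          _ ≤ pmf k * (1/(k:ℝ)) := this
          _ = pmf k * (1/(k:ℝ)) := rfl
    rw [Finset.sum_sub_distrib, Finset.sum_add_distrib] at h1
    have h2 : ∑ k ∈ range (n+1), (if k = 0 then (3/2)*(1-p)^n else 0) = (3/2)*(1-p)^n := by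
      rw [Finset.sum_ite_eq' (range (n+1)) 0 (fun _ => (3/2)*(1-p)^n)]
      simp
    rw [h2] at h1
    linarith
  clear_value A BS pmf
  -- A - 1/s
  have hD : (0:ℝ) < N*(N+1)*p := by positivity
  have hAdiff : A - 1/s = -((1 + N*(1-p)^(n+1))/(N*(N+1)*p)) := by
    rw [hAval, hsdef]
    field_simp
    ring
  -- exponential bound
  have hqe : (1-p)^n * (1+s)^2 ≤ 4 := by
    have := exp_bound n p hp hp1
    rwa [hsdef, hNdef]
  have hqn0 : (0:ℝ) ≤ (1-p)^n := pow_nonneg hq0 n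
  have hqn1 : (1-p)^(n+1) ≤ (1-p)^n := by
    calc (1-p)^(n+1) = (1-p)^n * (1-p) := by ring
      _ ≤ (1-p)^n * 1 := mul_le_mul_of_nonneg_left hq1 hqn0
      _ = (1-p)^n := by ring
  have hqn1' : (0:ℝ) ≤ (1-p)^(n+1) := pow_nonneg hq0 (n+1)
  clear hAdef hBSdef hpmfdef hEdef hEeq hAval hpmf
  -- master bound
  set M := (1 + N*(1-p)^(n+1))/(N*(N+1)*p) + 3*BS + (3/2)*(1-p)^n with hMdef
  clear_value M
  have hNq : 0 ≤ N*(1-p)^(n+1) := mul_nonneg (by linarith) hqn1'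
  have hApos : 0 ≤ (1 + N*(1-p)^(n+1))/(N*(N+1)*p) := div_nonneg (by linarith) hD.le
  have hM0 : 0 ≤ M := by rw [hMdef]; linarith
  have hX : |E - 1/s| ≤ M := by
    rw [abs_le, hMdef]
    constructor
    · linarith [hlow, hAdiff]
    · linarith [hhigh, hAdiff]
  -- bound M * (s * (1+s)^2) ≤ 100*(s+1)
  have hMs : M * (s * (1+s)^2) ≤ 100*(s+1) := by
    have hfirst : (1 + N*(1-p)^(n+1))/(N*(N+1)*p) * (s*(1+s)^2)
        = (1 + N*(1-p)^(n+1)) * (1+s)^2 / (N+1) := by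
      rw [div_mul_eq_mul_div, div_eq_div_iff (ne_of_gt hD) (by linarith : (0:ℝ) < N+1).ne']
      rw [hsdef]; ring
    have hfb : (1 + N*(1-p)^(n+1)) * (1+s)^2 / (N+1) ≤ (s+1) + 4 := by
      rw [div_le_iff₀ (by linarith : (0:ℝ) < N+1)]
      have h1s : 1 + s ≤ N + 1 := by rw [hsdef]; nlinarith
      have hb1 : (1+s)^2 ≤ (s+1)*(N+1) := by nlinarith
      have hb2 : N*(1-p)^(n+1) * (1+s)^2 ≤ 4*(N+1) := by
        have : N*(1-p)^(n+1)*(1+s)^2 ≤ N*((1-p)^n*(1+s)^2) := by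
          nlinarith [mul_le_mul_of_nonneg_right hqn1 (by positivity : (0:ℝ) ≤ (1+s)^2)]
        nlinarith
      nlinarith
    have hg3 : 3*BS * (s*(1+s)^2) ≤ 9 + 3*s := by
      have e1 : 2*s*BS ≤ 3/2 := by nlinarith [mul_nonneg (sq_nonneg (s-1)) hBS0]
      have e2 : s^3*BS ≤ s := by nlinarith [mul_le_mul_of_nonneg_left hBSs hs.le]
      nlinarith
    have hg4 : (3/2)*(1-p)^n * (s*(1+s)^2) ≤ 6*s := by
      nlinarith [mul_le_mul_of_nonneg_left hqe hs.le]
    calc M * (s*(1+s)^2)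
        = (1 + N*(1-p)^(n+1))/(N*(N+1)*p) * (s*(1+s)^2)
          + 3*BS*(s*(1+s)^2) + (3/2)*(1-p)^n*(s*(1+s)^2) := by rw [hMdef]; ring
      _ ≤ ((s+1)+4) + (9+3*s) + 6*s := by rw [hfirst]; gcongr <;> linarith
      _ ≤ 100*(s+1) := by linarith
  -- conclude
  have hT1 : (1:ℝ) ≤ 1 + (N-1)*p := by nlinarith
  have hT0 : (0:ℝ) < (1 + (N-1)*p)^2 := by positivity
  have hT2 : (1 + (N-1)*p)^2 ≤ (1+s)^2 := by rw [hsdef]; nlinarith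
  have hnum : (0:ℝ) ≤ 100*(1+1/s) := by positivity
  have step1 : |E - 1/s| ≤ 100*(1+1/s)/(1+s)^2 := by
    refine le_trans hX ?_
    rw [le_div_iff₀ (by positivity : (0:ℝ) < (1+s)^2), ← mul_le_mul_iff_of_pos_right hs]
    have e : 100*(1+1/s)*s = 100*(s+1) := by field_simp
    rw [e]
    ring_nf at hMs ⊢
    linarith
  have step2 : 100*(1+1/s)/(1+s)^2 ≤ 100*(1+1/s)/(1 + (N-1)*p)^2 :=
    div_le_div_of_nonneg_left hnum hT0 hT2
  calc |E - 1/s| ≤ 100*(1+1/s)/(1+s)^2 := step1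
    _ ≤ 100*(1+1/s)/(1 + (N-1)*p)^2 := step2
end

section
/- Let N ∼ Binomial(n, p), r a positive integer, and a ≥ 1 a real constant. Then 0 ≤ E[1/(a + N)^r] − 1/(a + np)^r ≤ C/(a + np)^{r+1} for some constant C depending only on r. -/
lemma binExp_zero (p : ℝ) (f : ℕ → ℝ) : binExp 0 p f = f 0 := by
  simp [binExp]

lemma binExp_one (n : ℕ) (p : ℝ) : binExp n p (fun _ => 1) = 1 := by
  calc binExp n p (fun _ => 1)
      = ∑ k ∈ Finset.range (n+1), p ^ k * (1-p) ^ (n-k) * (n.choose k : ℝ) :=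
        Finset.sum_congr rfl fun k _ => by ring
    _ = (p + (1-p))^n := (add_pow p (1-p) n).symm
    _ = 1 := by norm_num

lemma binExp_add (n : ℕ) (p : ℝ) (f g : ℕ → ℝ) :
    binExp n p (fun k => f k + g k) = binExp n p f + binExp n p g := by
  unfold binExp
  rw [← Finset.sum_add_distrib]
  exact Finset.sum_congr rfl fun k _ => by ring

lemma binExp_smul (n : ℕ) (p c : ℝ) (f : ℕ → ℝ) :
    binExp n p (fun k => c * f k) = c * binExp n p f := by
  unfold binExp
  rw [Finset.mul_sum]
  exact Finset.sum_congr rfl fun k _ => by ring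

lemma binExp_mono (n : ℕ) {p : ℝ} (hp0 : 0 ≤ p) (hp1 : p ≤ 1) {f g : ℕ → ℝ}
    (h : ∀ k, k ≤ n → f k ≤ g k) : binExp n p f ≤ binExp n p g := by
  apply Finset.sum_le_sum
  intro k hk
  have hk' : k ≤ n := by
    have := Finset.mem_range.mp hk; omega
  have hw : (0:ℝ) ≤ (n.choose k : ℝ) * p ^ k * (1 - p) ^ (n - k) := by
    have h1 : (0:ℝ) ≤ 1 - p := by linarith
    positivity
  exact mul_le_mul_of_nonneg_left (h k hk') hw

lemma binExp_nonneg (n : ℕ) {p : ℝ} (hp0 : 0 ≤ p) (hp1 : p ≤ 1) {f : ℕ → ℝ}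
    (h : ∀ k, 0 ≤ f k) : 0 ≤ binExp n p f := by
  apply Finset.sum_nonneg
  intro k _
  have h1 : (0:ℝ) ≤ 1 - p := by linarith
  have := h k
  positivity

lemma binExp_succ (n : ℕ) (p : ℝ) (f : ℕ → ℝ) :
    binExp (n+1) p f = (1 - p) * binExp n p f + p * binExp n p (fun k => f (k+1)) := by
  unfold binExp
  rw [Finset.sum_range_succ' (fun k => ((n+1).choose k : ℝ) * p ^ k * (1 - p) ^ (n+1-k) * f k) (n+1)]
  have e1 : ∀ k ∈ Finset.range (n+1),
      ((n+1).choose (k+1) : ℝ) * p ^ (k+1) * (1 - p) ^ (n+1-(k+1)) * f (k+1)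
      = (n.choose k : ℝ) * p ^ (k+1) * (1 - p) ^ (n-k) * f (k+1)
        + (n.choose (k+1) : ℝ) * p ^ (k+1) * (1 - p) ^ (n-k) * f (k+1) := by
    intro k hk
    have h : (n+1).choose (k+1) = n.choose k + n.choose (k+1) := Nat.choose_succ_succ n k
    have h2 : n + 1 - (k+1) = n - k := by omega
    rw [h, h2]
    push_cast
    ring
  rw [Finset.sum_congr rfl e1, Finset.sum_add_distrib]
  have e2 : ∑ k ∈ Finset.range (n+1), (n.choose k : ℝ) * p ^ (k+1) * (1 - p) ^ (n-k) * f (k+1)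
      = p * ∑ k ∈ Finset.range (n+1), (n.choose k : ℝ) * p ^ k * (1 - p) ^ (n-k) * f (k+1) := by
    rw [Finset.mul_sum]; exact Finset.sum_congr rfl fun k _ => by ring
  have e3 : ∑ k ∈ Finset.range (n+1), (n.choose (k+1) : ℝ) * p ^ (k+1) * (1 - p) ^ (n-k) * f (k+1)
        + ((n+1).choose 0 : ℝ) * p ^ 0 * (1 - p) ^ (n+1-0) * f 0
      = (1-p) * ∑ k ∈ Finset.range (n+1), (n.choose k : ℝ) * p ^ k * (1 - p) ^ (n-k) * f k := by
    have e4 : (1-p) * ∑ k ∈ Finset.range (n+1), (n.choose k : ℝ) * p ^ k * (1 - p) ^ (n-k) * f k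
        = ∑ k ∈ Finset.range (n+1), (n.choose k : ℝ) * p ^ k * (1 - p) ^ (n+1-k) * f k := by
      rw [Finset.mul_sum]
      apply Finset.sum_congr rfl
      intro k hk
      have hk' : k ≤ n := by have := Finset.mem_range.mp hk; omega
      have h2 : n + 1 - k = (n - k) + 1 := by omega
      rw [h2]
      ring
    rw [e4, Finset.sum_range_succ' (fun k => (n.choose k : ℝ) * p ^ k * (1 - p) ^ (n+1-k) * f k) n]
    rw [Finset.sum_range_succ
      (fun k => (n.choose (k+1) : ℝ) * p ^ (k+1) * (1 - p) ^ (n-k) * f (k+1)) n]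
    simp only [Nat.choose_succ_self, Nat.cast_zero, zero_mul, add_zero, Nat.choose_zero_right,
      Nat.cast_one, one_mul, pow_zero, Nat.sub_zero]
    congr 1
    apply Finset.sum_congr rfl
    intro k hk
    have hk' : k < n := Finset.mem_range.mp hk
    have h2 : n + 1 - (k+1) = n - k := by omega
    rw [h2]
  rw [add_assoc, e3, e2]
  ring

lemma binExp_mean (n : ℕ) (p : ℝ) : binExp n p (fun k => (k:ℝ)) = n * p := by
  induction n with
  | zero => simp [binExp_zero]
  | succ n ih =>
    rw [binExp_succ]
    have h1 : binExp n p (fun k => ((k+1 : ℕ) : ℝ)) =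
        binExp n p (fun k => (k:ℝ)) + binExp n p (fun _ => 1) := by
      rw [← binExp_add]
      apply congrArg
      funext k
      push_cast
      ring
    rw [h1, ih, binExp_one]
    push_cast
    ring

lemma binExp_affine (n : ℕ) (p c d : ℝ) :
    binExp n p (fun k => c + d * k) = c + d * (n * p) := by
  have h1 : binExp n p (fun k => c + d * k)
      = binExp n p (fun _ => c * 1) + binExp n p (fun k => d * k) := by
    rw [← binExp_add]; apply congrArg; funext k; ring
  rw [h1, binExp_smul, binExp_smul, binExp_one, binExp_mean]
  ring

lemma tangent (s : ℕ) {u v : ℝ} (hu : 0 < u) (hv : 0 < v) :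
    1/v^s - s*(u - v)/v^(s+1) ≤ 1/u^s := by
  have lhs_eq : 1/v^s - s*(u - v)/v^(s+1) = ((s+1)*v - s*u)/v^(s+1) := by
    field_simp
    ring
  rw [lhs_eq, div_le_div_iff₀ (pow_pos hv _) (pow_pos hu _), one_mul]
  have hb : (-2:ℝ) ≤ v/u - 1 := by
    have : 0 < v/u := div_pos hv hu
    linarith
  have hber := one_add_mul_le_pow hb (s+1)
  rw [add_sub_cancel] at hber
  have hu1 : (0:ℝ) < u^(s+1) := pow_pos hu _
  have h2 := mul_le_mul_of_nonneg_right hber hu1.le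
  have h3 : (v/u)^(s+1) * u^(s+1) = v^(s+1) := by
    rw [div_pow]
    field_simp
  have h4 : (1 + ((s:ℝ)+1)*(v/u - 1)) * u^(s+1) = ((s+1)*v - s*u) * u^s := by
    field_simp
    ring
  push_cast at h2
  rw [h4, h3] at h2
  exact h2

lemma jensen (s n : ℕ) {p a : ℝ} (hp0 : 0 ≤ p) (hp1 : p ≤ 1) (ha : 1 ≤ a) :
    1 / (a + n*p) ^ s ≤ binExp n p (fun k => 1 / (a + k) ^ s) := by
  set v := a + n*p with hv
  have hv0 : 0 < v := by
    have : (0:ℝ) ≤ n*p := by positivity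
    simp only [hv]; linarith
  have key : binExp n p (fun k => (1/v^s - s*(a - v)/v^(s+1)) + (-(s/v^(s+1))) * k)
      = 1/v^s := by
    rw [binExp_affine]
    field_simp
    ring
  have step : binExp n p (fun k => (1/v^s - s*(a - v)/v^(s+1)) + (-(s/v^(s+1))) * k)
      ≤ binExp n p (fun k => 1 / (a + k) ^ s) := by
    apply binExp_mono n hp0 hp1
    intro k _
    have hu : (0:ℝ) < a + k := by
      have : (0:ℝ) ≤ k := Nat.cast_nonneg k
      linarith
    have ht := tangent s hu hv0
    have heq : 1/v^s - s*((a+k) - v)/v^(s+1)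
        = (1/v^s - s*(a - v)/v^(s+1)) + (-(s/v^(s+1))) * k := by ring
    linarith [heq ▸ ht]
  linarith [key ▸ step]

lemma asc_choose : ∀ (s n k : ℕ),
    n.choose k * (n+1).ascFactorial s = (n+s).choose (k+s) * (k+1).ascFactorial s
  | 0, n, k => by simp
  | s+1, n, k => by
    have ih := asc_choose s n k
    have h := Nat.add_one_mul_choose_eq (n+s) (k+s)
    rw [Nat.ascFactorial_succ, Nat.ascFactorial_succ]
    have e3 : n + (s+1) = (n+s) + 1 := by omega
    have e4 : k + (s+1) = (k+s) + 1 := by omega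
    rw [e3, e4]
    calc n.choose k * ((n+1+s) * (n+1).ascFactorial s)
        = ((n+s)+1) * (n.choose k * (n+1).ascFactorial s) := by ring
      _ = ((n+s)+1) * ((n+s).choose (k+s) * (k+1).ascFactorial s) := by rw [ih]
      _ = (((n+s)+1) * (n+s).choose (k+s)) * (k+1).ascFactorial s := by ring
      _ = ((n+s)+1).choose ((k+s)+1) * ((k+s)+1) * (k+1).ascFactorial s := by rw [h]
      _ = ((n+s)+1).choose ((k+s)+1) * ((k+1+s) * (k+1).ascFactorial s) := by ring

lemma asc_le_fact_pow : ∀ (s k : ℕ), (k+1).ascFactorial s ≤ s.factorial * (k+1)^s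
  | 0, k => by simp
  | s+1, k => by
    rw [Nat.ascFactorial_succ]
    have ih := asc_le_fact_pow s k
    have h1 : k+1+s ≤ (s+1) * (k+1) := by nlinarith
    calc (k+1+s) * (k+1).ascFactorial s ≤ ((s+1)*(k+1)) * (s.factorial * (k+1)^s) :=
          Nat.mul_le_mul h1 ih
      _ = (s+1).factorial * (k+1)^(s+1) := by
          rw [Nat.factorial_succ, pow_succ]
          ring

lemma pow_le_asc (s n : ℕ) : n^s ≤ (n+1).ascFactorial s := by
  calc n^s ≤ (n+1)^s := Nat.pow_le_pow_left (by omega) s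
    _ ≤ (n+1).ascFactorial s := Nat.pow_succ_le_ascFactorial (n+1) s
lemma claimA (s n : ℕ) {p a : ℝ} (hp0 : 0 ≤ p) (hp1 : p ≤ 1) (ha : 1 ≤ a) :
    binExp n p (fun k => 1/(a+k)^s) ≤ (s.factorial : ℝ) * 2^s / (a + n*p)^s := by
  have hq0 : (0:ℝ) ≤ 1 - p := by linarith
  have hnp : (0:ℝ) ≤ n*p := by positivity
  have hb : (0:ℝ) < a + n*p := by linarith
  have hfact : (1:ℝ) ≤ s.factorial := by exact_mod_cast Nat.one_le_iff_ne_zero.mpr s.factorial_ne_zero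
  rcases le_or_gt ((n:ℝ)*p) a with hc | hc
  · -- easy case : a + np ≤ 2a
    have h1 : binExp n p (fun k => 1/(a+k)^s) ≤ binExp n p (fun _ => (1/a^s) * 1) := by
      apply binExp_mono n hp0 hp1
      intro k _
      rw [mul_one]
      have hk0 : (0:ℝ) ≤ k := Nat.cast_nonneg k
      apply one_div_le_one_div_of_le (by positivity)
      exact pow_le_pow_left₀ (by linarith) (by linarith) s
    rw [binExp_smul, binExp_one, mul_one] at h1
    refine h1.trans ?_
    rw [div_le_div_iff₀ (by positivity) (pow_pos hb s), one_mul]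
    calc (a + n*p)^s ≤ (2*a)^s := pow_le_pow_left₀ (by linarith) (by linarith) s
      _ = 2^s * a^s := by rw [mul_pow]
      _ = 1 * (2^s * a^s) := by ring
      _ ≤ (s.factorial : ℝ) * (2^s * a^s) := by
          apply mul_le_mul_of_nonneg_right hfact
          positivity
      _ = (s.factorial : ℝ) * 2^s * a^s := by ring
  · -- hard case : a < np
    have hp : 0 < p := by
      by_contra h
      push_neg at h
      have : (n:ℝ)*p ≤ 0 := mul_nonpos_of_nonneg_of_nonpos (Nat.cast_nonneg n) h
      linarith
    have hn : (1:ℝ) ≤ n := by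
      rcases Nat.eq_zero_or_pos n with h | h
      · subst h; simp at hc; linarith
      · exact_mod_cast h
    have hascpos : ∀ m : ℕ, (0:ℝ) < ((m+1).ascFactorial s : ℝ) := by
      intro m
      exact_mod_cast Nat.ascFactorial_pos m s
    -- step 1 : termwise bound
    have h1 : binExp n p (fun k => 1/(a+k)^s)
        ≤ binExp n p (fun k => (s.factorial : ℝ) / ((k+1).ascFactorial s : ℝ)) := by
      apply binExp_mono n hp0 hp1
      intro k _
      have hk0 : (0:ℝ) ≤ k := Nat.cast_nonneg k
      have hak : (0:ℝ) < a + k := by linarith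
      rw [div_le_div_iff₀ (by positivity) (hascpos k), one_mul]
      calc (((k+1).ascFactorial s : ℕ) : ℝ) ≤ ((s.factorial * (k+1)^s : ℕ) : ℝ) := by
            exact_mod_cast asc_le_fact_pow s k
        _ = (s.factorial : ℝ) * ((k:ℝ)+1)^s := by push_cast; ring
        _ ≤ (s.factorial : ℝ) * (a+k)^s := by
            have : ((k:ℝ)+1)^s ≤ (a+k)^s := pow_le_pow_left₀ (by linarith) (by linarith) s
            nlinarith
    -- step 2 : rewrite via the choose identity
    have h2 : binExp n p (fun k => (s.factorial : ℝ) / ((k+1).ascFactorial s : ℝ))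
        = ((s.factorial : ℝ) / ((n+1).ascFactorial s : ℝ)) *
          ∑ k ∈ Finset.range (n+1), ((n+s).choose (k+s) : ℝ) * p^k * (1-p)^(n-k) := by
      unfold binExp
      rw [Finset.mul_sum]
      apply Finset.sum_congr rfl
      intro k _
      have hid : (n.choose k : ℝ) * ((n+1).ascFactorial s : ℝ)
          = ((n+s).choose (k+s) : ℝ) * ((k+1).ascFactorial s : ℝ) := by
        exact_mod_cast asc_choose s n k
      field_simp
      linear_combination (1-p)^(n-k) * hid
    have h3 : ∑ k ∈ Finset.range (n+1), ((n+s).choose (k+s) : ℝ) * p^k * (1-p)^(n-k) ≤ 1/p^s := by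
      rw [le_div_iff₀ (pow_pos hp s)]
      have e1 : (∑ k ∈ Finset.range (n+1), ((n+s).choose (k+s) : ℝ) * p^k * (1-p)^(n-k)) * p^s
          = ∑ j ∈ (Finset.range (n+1)).image (· + s), ((n+s).choose j : ℝ) * p^j * (1-p)^((n+s)-j) := by
        rw [Finset.sum_image (by intro x _ y _ h; beta_reduce at h; omega), Finset.sum_mul]
        apply Finset.sum_congr rfl
        intro k _
        have hnk : (n+s) - (k+s) = n - k := by omega
        rw [hnk, pow_add]
        ring
      rw [e1]
      have e3 : (Finset.range (n+1)).image (· + s) ⊆ Finset.range (n+s+1) := by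
        intro j hj
        simp only [Finset.mem_image, Finset.mem_range] at hj ⊢
        obtain ⟨x, hx, rfl⟩ := hj
        omega
      calc ∑ j ∈ (Finset.range (n+1)).image (· + s), ((n+s).choose j : ℝ) * p^j * (1-p)^((n+s)-j)
          ≤ ∑ j ∈ Finset.range (n+s+1), ((n+s).choose j : ℝ) * p^j * (1-p)^((n+s)-j) := by
            apply Finset.sum_le_sum_of_subset_of_nonneg e3
            intro j _ _
            positivity
        _ = ∑ j ∈ Finset.range (n+s+1), p^j * (1-p)^((n+s)-j) * ((n+s).choose j : ℝ) :=
              Finset.sum_congr rfl fun j _ => by ring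
        _ = (p + (1-p))^(n+s) := (add_pow p (1-p) (n+s)).symm
        _ = 1 := by norm_num
    have hcoef : (0:ℝ) ≤ (s.factorial : ℝ) / ((n+1).ascFactorial s : ℝ) := by positivity
    have h4 : binExp n p (fun k => 1/(a+k)^s)
        ≤ ((s.factorial : ℝ) / ((n+1).ascFactorial s : ℝ)) * (1/p^s) := by
      rw [h2] at h1
      exact h1.trans (mul_le_mul_of_nonneg_left h3 hcoef)
    refine h4.trans ?_
    have hnn : (0:ℝ) < (n:ℝ)^s * p^s := by positivity
    have hasc_ge : ((n:ℝ))^s ≤ ((n+1).ascFactorial s : ℝ) := by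
      exact_mod_cast pow_le_asc s n
    have h5 : ((s.factorial : ℝ) / ((n+1).ascFactorial s : ℝ)) * (1/p^s)
        ≤ (s.factorial : ℝ)/((n:ℝ)*p)^s := by
      rw [div_mul_div_comm, mul_one, mul_pow]
      apply div_le_div_of_nonneg_left (by positivity) hnn
      apply mul_le_mul_of_nonneg_right hasc_ge (by positivity)
    refine h5.trans ?_
    rw [div_le_div_iff₀ (by positivity) (pow_pos hb s)]
    calc (s.factorial : ℝ) * (a + n*p)^s ≤ (s.factorial : ℝ) * (2*((n:ℝ)*p))^s := by
          apply mul_le_mul_of_nonneg_left _ (by positivity)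
          apply pow_le_pow_left₀ (by linarith) (by linarith) s
      _ = (s.factorial : ℝ) * 2^s * ((n:ℝ)*p)^s := by rw [mul_pow]; ring
set_option maxHeartbeats 1000000 in
lemma defect (r : ℕ) (hr : 1 ≤ r) {b p : ℝ} (hb : 1 ≤ b) (hp0 : 0 ≤ p) (hp1 : p ≤ 1) :
    (1-p)/b^r + p/(b+1)^r ≤ 1/(b+p)^r + p * r^2 / b^(r+2) := by
  set x := b with hxdef
  set y := b + p with hydef
  set z := b + 1 with hzdef
  have hx : (0:ℝ) < x := by linarith
  have hy : (0:ℝ) < y := by simp only [hydef]; linarith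
  have hz : (0:ℝ) < z := by simp only [hzdef]; linarith
  have hxy : x ≤ y := by simp only [hydef]; linarith
  have hyz : y ≤ z := by simp only [hydef, hzdef]; linarith
  set A := ∑ i ∈ Finset.range r, y^i * x^(r-1-i) with hAdef
  set B := ∑ i ∈ Finset.range r, z^i * y^(r-1-i) with hBdef
  set D := ∑ i ∈ Finset.range r, z^i * x^(r-1-i) with hDdef
  have hyA : y^r - x^r = A * p := by
    have := geom_sum₂_mul y x r
    have hyx : y - x = p := by simp only [hydef]; ring
    rw [hyx] at this
    linarith [this]
  have hzB : z^r - y^r = B * (1-p) := by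
    have := geom_sum₂_mul z y r
    have hzy : z - y = 1 - p := by simp only [hydef, hzdef]; ring
    rw [hzy] at this
    linarith [this]
  have hzD : z^r - x^r = D := by
    have := geom_sum₂_mul z x r
    have hzx : z - x = 1 := by simp only [hzdef]; ring
    rw [hzx, mul_one] at this
    linarith [this]
  have hA0 : 0 ≤ A := by
    apply Finset.sum_nonneg
    intro i _
    positivity
  have hD0 : 0 ≤ D := by
    apply Finset.sum_nonneg
    intro i _
    positivity
  have hAB : A ≤ B := by
    apply Finset.sum_le_sum
    intro i _
    apply mul_le_mul (pow_le_pow_left₀ hy.le hyz i) (pow_le_pow_left₀ hx.le hxy _) (by positivity)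
      (by positivity)
  have hA : A ≤ r * y^(r-1) := by
    calc A ≤ ∑ _i ∈ Finset.range r, y^(r-1) := by
          apply Finset.sum_le_sum
          intro i hi
          have hir : i ≤ r - 1 := by have := Finset.mem_range.mp hi; omega
          have : y^i * x^(r-1-i) ≤ y^i * y^(r-1-i) :=
            mul_le_mul_of_nonneg_left (pow_le_pow_left₀ hx.le hxy _) (by positivity)
          rw [← pow_add] at this
          have he : i + (r-1-i) = r - 1 := by omega
          rw [he] at this
          exact this
      _ = r * y^(r-1) := by rw [Finset.sum_const, Finset.card_range, nsmul_eq_mul]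
  have hD : D ≤ r * z^(r-1) := by
    calc D ≤ ∑ _i ∈ Finset.range r, z^(r-1) := by
          apply Finset.sum_le_sum
          intro i hi
          have hir : i ≤ r - 1 := by have := Finset.mem_range.mp hi; omega
          have : z^i * x^(r-1-i) ≤ z^i * z^(r-1-i) :=
            mul_le_mul_of_nonneg_left (pow_le_pow_left₀ hx.le (hxy.trans hyz) _) (by positivity)
          rw [← pow_add] at this
          have he : i + (r-1-i) = r - 1 := by omega
          rw [he] at this
          exact this
      _ = r * z^(r-1) := by rw [Finset.sum_const, Finset.card_range, nsmul_eq_mul]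
  have hyr : y^(r-1) * y = y^r := by
    rw [← pow_succ]
    congr 1
    omega
  have hzr : z^(r-1) * z = z^r := by
    rw [← pow_succ]
    congr 1
    omega
  have h6 : 1/x^r - 1/y^r = A*p/(x^r*y^r) := by
    field_simp
    linear_combination hyA
  have h7 : 1/y^r - 1/z^r = B*(1-p)/(y^r*z^r) := by
    field_simp
    linear_combination hzB
  have hq0 : (0:ℝ) ≤ 1 - p := by linarith
  have t1 : p*(A*(1-p)/(y^r*z^r)) ≤ p*(B*(1-p)/(y^r*z^r)) := by gcongr
  have t2 : (1-p)*(A*p/(x^r*y^r)) - p*(A*(1-p)/(y^r*z^r)) = p*(1-p)*A*D/(x^r*y^r*z^r) := by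
    rw [← hzD]
    field_simp
  have hnum : p*(1-p)*A*D ≤ p*((r:ℝ)*y^(r-1))*((r:ℝ)*z^(r-1)) := by
    have e1 : p*(1-p)*A*D = (p*A*D)*(1-p) := by ring
    have e2 : (p*A*D)*(1-p) ≤ (p*A*D)*1 := by
      apply mul_le_mul_of_nonneg_left (by linarith)
      positivity
    have e3 : p*(A*D) ≤ p*(((r:ℝ)*y^(r-1))*((r:ℝ)*z^(r-1))) := by
      apply mul_le_mul_of_nonneg_left _ hp0
      apply mul_le_mul hA hD hD0
      positivity
    calc p*(1-p)*A*D = (p*A*D)*(1-p) := e1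
      _ ≤ (p*A*D)*1 := e2
      _ = p*(A*D) := by ring
      _ ≤ p*(((r:ℝ)*y^(r-1))*((r:ℝ)*z^(r-1))) := e3
      _ = p*((r:ℝ)*y^(r-1))*((r:ℝ)*z^(r-1)) := by ring
  have t3 : p*(1-p)*A*D/(x^r*y^r*z^r) ≤ p*((r:ℝ)*y^(r-1))*((r:ℝ)*z^(r-1))/(x^r*y^r*z^r) := by
    apply div_le_div_of_nonneg_right hnum
    positivity
  have t4 : p*((r:ℝ)*y^(r-1))*((r:ℝ)*z^(r-1))/(x^r*y^r*z^r) = p*(r:ℝ)^2/(x^r*y*z) := by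
    rw [← hyr, ← hzr, div_eq_div_iff (by positivity) (by positivity)]
    ring
  have hden : x^(r+2) ≤ x^r*y*z := by
    have e1 : x^(r+2) = x^r*x*x := by ring
    rw [e1]
    calc x^r*x*x ≤ x^r*y*x := by
          apply mul_le_mul_of_nonneg_right _ hx.le
          exact mul_le_mul_of_nonneg_left hxy (by positivity)
      _ ≤ x^r*y*z := mul_le_mul_of_nonneg_left (hxy.trans hyz) (by positivity)
  have t5 : p*(r:ℝ)^2/(x^r*y*z) ≤ p*(r:ℝ)^2/x^(r+2) := by
    exact div_le_div_of_nonneg_left (by positivity) (by positivity) hden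
  calc (1-p)/x^r + p/z^r
      = 1/y^r + ((1-p)*(A*p/(x^r*y^r)) - p*(B*(1-p)/(y^r*z^r))) := by
        rw [← h6, ← h7]
        ring
    _ ≤ 1/y^r + p*(r:ℝ)^2/x^(r+2) := by linarith


lemma binExp_succ_inv (s n : ℕ) (p a : ℝ) :
    binExp (n+1) p (fun k => 1/(a+k)^s)
      = (1-p) * binExp n p (fun k => 1/(a+k)^s) + p * binExp n p (fun k => 1/((a+1)+k)^s) := by
  rw [binExp_succ]
  have h : (fun k : ℕ => 1/(a+((k+1:ℕ):ℝ))^s) = (fun k : ℕ => 1/((a+1)+(k:ℝ))^s) := by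
    funext k
    push_cast
    ring_nf
  rw [h]

lemma main_ind (r : ℕ) (hr : 1 ≤ r) {p : ℝ} (hp0 : 0 ≤ p) (hp1 : p ≤ 1) :
    ∀ n : ℕ, ∀ a : ℝ, 1 ≤ a →
      binExp n p (fun k => 1/(a+k)^r)
        ≤ 1/(a + n*p)^r
          + ((r:ℝ)^2 * 2^(r+2)) * p * n * binExp n p (fun k => 1/(a+k)^(r+2)) := by
  intro n
  induction n with
  | zero =>
    intro a ha
    rw [binExp_zero]
    norm_num
  | succ n ih =>
    intro a ha
    have ha1 : 1 ≤ a + 1 := by linarith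
    have hnp : (0:ℝ) ≤ (n:ℝ)*p := by positivity
    have hb1 : (1:ℝ) ≤ a + n*p := by linarith
    have hq0 : (0:ℝ) ≤ 1 - p := by linarith
    set K := ((r:ℝ)^2 * 2^(r+2)) with hK
    have hK0 : (0:ℝ) ≤ K := by positivity
    have hg1 : (0:ℝ) ≤ binExp (n+1) p (fun k => 1/(a+k)^(r+2)) := by
      apply binExp_nonneg (n+1) hp0 hp1
      intro k
      positivity
    have hjen : 1/(a+(n+1:ℕ)*p)^(r+2) ≤ binExp (n+1) p (fun k => 1/(a+k)^(r+2)) :=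
      jensen (r+2) (n+1) hp0 hp1 ha
    have hdefect := defect r hr hb1 hp0 hp1
    have hcmp : p*(r:ℝ)^2/(a+n*p)^(r+2) ≤ K * p * binExp (n+1) p (fun k => 1/(a+k)^(r+2)) := by
      have h1 : (a+((n:ℕ)+1:ℕ)*p) ≤ 2*(a+n*p) := by
        push_cast
        linarith
      have h2 : (a+((n:ℕ)+1:ℕ)*p)^(r+2) ≤ 2^(r+2)*(a+n*p)^(r+2) := by
        calc (a+((n:ℕ)+1:ℕ)*p)^(r+2) ≤ (2*(a+n*p))^(r+2) := by
              apply pow_le_pow_left₀ _ h1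
              push_cast
              positivity
          _ = 2^(r+2)*(a+n*p)^(r+2) := by rw [mul_pow]
      have h3 : 1/(a+n*p)^(r+2) ≤ 2^(r+2)/(a+((n:ℕ)+1:ℕ)*p)^(r+2) := by
        rw [div_le_div_iff₀ (by positivity) (by push_cast; positivity), one_mul]
        linarith
      calc p*(r:ℝ)^2/(a+n*p)^(r+2) = (p*(r:ℝ)^2) * (1/(a+n*p)^(r+2)) := by ring
        _ ≤ (p*(r:ℝ)^2) * (2^(r+2)/(a+((n:ℕ)+1:ℕ)*p)^(r+2)) := by
            apply mul_le_mul_of_nonneg_left h3 (by positivity)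
        _ = K * p * (1/(a+((n:ℕ)+1:ℕ)*p)^(r+2)) := by rw [hK]; ring
        _ ≤ K * p * binExp (n+1) p (fun k => 1/(a+k)^(r+2)) := by
            apply mul_le_mul_of_nonneg_left hjen (by positivity)
    calc binExp (n+1) p (fun k => 1/(a+k)^r)
        = (1-p) * binExp n p (fun k => 1/(a+k)^r)
          + p * binExp n p (fun k => 1/((a+1)+k)^r) := binExp_succ_inv r n p a
      _ ≤ (1-p) * (1/(a+n*p)^r + K * p * n * binExp n p (fun k => 1/(a+k)^(r+2)))
          + p * (1/((a+1)+n*p)^r + K * p * n * binExp n p (fun k => 1/((a+1)+k)^(r+2))) := by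
          apply add_le_add
          · exact mul_le_mul_of_nonneg_left (ih a ha) hq0
          · exact mul_le_mul_of_nonneg_left (ih (a+1) ha1) hp0
      _ = ((1-p)/(a+n*p)^r + p/((a+n*p)+1)^r)
          + K * p * n * ((1-p) * binExp n p (fun k => 1/(a+k)^(r+2))
            + p * binExp n p (fun k => 1/((a+1)+k)^(r+2))) := by
          have e : (a+1)+n*p = (a+n*p)+1 := by ring
          rw [e]
          ring
      _ = ((1-p)/(a+n*p)^r + p/((a+n*p)+1)^r)
          + K * p * n * binExp (n+1) p (fun k => 1/(a+k)^(r+2)) := by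
          rw [← binExp_succ_inv (r+2) n p a]
      _ ≤ (1/((a+n*p)+p)^r + p*(r:ℝ)^2/(a+n*p)^(r+2))
          + K * p * n * binExp (n+1) p (fun k => 1/(a+k)^(r+2)) := by
          apply add_le_add_left hdefect
      _ ≤ (1/((a+n*p)+p)^r + K * p * binExp (n+1) p (fun k => 1/(a+k)^(r+2)))
          + K * p * n * binExp (n+1) p (fun k => 1/(a+k)^(r+2)) := by
          apply add_le_add_left
          apply add_le_add_right hcmp
      _ = 1/(a+((n:ℕ)+1:ℕ)*p)^r
          + K * p * ((n:ℕ)+1:ℕ) * binExp (n+1) p (fun k => 1/(a+k)^(r+2)) := by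
          push_cast
          ring

/-- for `N ~ Binomial(n,p)`, `r ≥ 1` an integer and `a ≥ 1`,
`0 ≤ E[1/(a+N)^r] − 1/(a+np)^r ≤ C/(a+np)^{r+1}` with `C` depending only on `r`. -/
theorem stmt2 (r : ℕ) (hr : 1 ≤ r) :
    ∃ C : ℝ, 0 < C ∧ ∀ (n : ℕ) (p a : ℝ), 0 ≤ p → p ≤ 1 → 1 ≤ a →
      0 ≤ binExp n p (fun k => 1 / (a + (k : ℝ)) ^ r) - 1 / (a + (n : ℝ) * p) ^ r ∧
      binExp n p (fun k => 1 / (a + (k : ℝ)) ^ r) - 1 / (a + (n : ℝ) * p) ^ r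
        ≤ C / (a + (n : ℝ) * p) ^ (r + 1) := by
  have hr0 : (0:ℝ) < r := by exact_mod_cast hr
  refine ⟨(r:ℝ)^2 * 4^(r+2) * (r+2).factorial, by positivity, ?_⟩
  intro n p a hp0 hp1 ha
  have hnp : (0:ℝ) ≤ (n:ℝ)*p := by positivity
  have hb : (0:ℝ) < a + n*p := by linarith
  constructor
  · have := jensen r n hp0 hp1 ha
    linarith
  · have hmain := main_ind r hr hp0 hp1 n a ha
    have hA := claimA (r+2) n hp0 hp1 ha
    set K := ((r:ℝ)^2 * 2^(r+2)) with hK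
    have hK0 : (0:ℝ) ≤ K := by positivity
    have h1 : binExp n p (fun k => 1/(a+k)^r) - 1/(a+n*p)^r
        ≤ K * p * n * (((r+2).factorial : ℝ) * 2^(r+2) / (a+n*p)^(r+2)) := by
      have h2 := mul_le_mul_of_nonneg_left hA (show (0:ℝ) ≤ K*p*(n:ℝ) by positivity)
      linarith
    refine h1.trans ?_
    have hpn : (n:ℝ)*p ≤ a + n*p := by linarith
    have e1 : K * p * n * (((r+2).factorial : ℝ) * 2^(r+2) / (a+n*p)^(r+2))
        = ((r:ℝ)^2 * 4^(r+2) * (r+2).factorial) * (((n:ℝ)*p) / (a+n*p)^(r+2)) := by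
      rw [hK]
      have h4 : (4:ℝ)^(r+2) = 2^(r+2) * 2^(r+2) := by
        rw [← mul_pow]; norm_num
      rw [h4]
      ring
    rw [e1]
    have e2 : ((n:ℝ)*p) / (a+n*p)^(r+2) ≤ 1/(a+n*p)^(r+1) := by
      rw [div_le_div_iff₀ (by positivity) (by positivity), one_mul]
      calc (n:ℝ)*p * (a+n*p)^(r+1) ≤ (a+n*p) * (a+n*p)^(r+1) :=
            mul_le_mul_of_nonneg_right hpn (by positivity)
        _ = (a+n*p)^(r+2) := by ring
    calc ((r:ℝ)^2 * 4^(r+2) * (r+2).factorial) * (((n:ℝ)*p) / (a+n*p)^(r+2))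
        ≤ ((r:ℝ)^2 * 4^(r+2) * (r+2).factorial) * (1/(a+n*p)^(r+1)) := by
          apply mul_le_mul_of_nonneg_left e2 (by positivity)
      _ = ((r:ℝ)^2 * 4^(r+2) * (r+2).factorial) / (a+n*p)^(r+1) := by ring
end

section
/- Let (N_1, …, N_K) ∼ Multinomial(n, (p_1, …, p_K)) with all p_i > 0, and let a_{ij} ≥ 1 for i = 1,…,K and j = 1,…,m_i. Then E[∏_{i=1}^K ∏_{j=1}^{m_i} 1/(N_i + a_{ij})] ≤ C ∏_{i=1}^K ∏_{j=1}^{m_i} 1/(n p_i + a_{ij}) for a constant C depending only on K and the m_i's. -/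
open MeasureTheory
open scoped Classical

open Finset
open scoped ENNReal

lemma countDist {α : Type} [MeasurableSpace α] (ν : Measure α) [IsProbabilityMeasure ν]
    (n : ℕ) (A : Set α) (hA : MeasurableSet A) (g : ℕ → ℝ≥0∞) :
    (∫⁻ ω : Fin n → α, g ((univ.filter fun k => ω k ∈ A).card) ∂(Measure.pi fun _ => ν))
      = ∑ k ∈ range (n + 1), (n.choose k : ℝ≥0∞) * (ν A) ^ k * (ν Aᶜ) ^ (n - k) * g k := by
  have hE : ∀ s : Finset (Fin n), MeasurableSet (Set.pi Set.univ
      (fun k => if k ∈ s then A else Aᶜ) : Set (Fin n → α)) := by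
    intro s
    exact MeasurableSet.univ_pi fun k => by split <;> [exact hA; exact hA.compl]
  have hpt : ∀ ω : Fin n → α, g ((univ.filter fun k => ω k ∈ A).card)
      = ∑ s : Finset (Fin n), (Set.pi Set.univ (fun k => if k ∈ s then A else Aᶜ)).indicator
          (fun _ => g s.card) ω := by
    intro ω
    set s₀ : Finset (Fin n) := univ.filter fun k => ω k ∈ A with hs₀
    have hmem : ∀ s : Finset (Fin n),
        ω ∈ Set.pi Set.univ (fun k => if k ∈ s then A else Aᶜ) ↔ s = s₀ := by
      intro s
      constructor
      · intro h
        ext k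
        have := h k (Set.mem_univ k)
        simp only [hs₀, mem_filter, mem_univ, true_and]
        by_cases hk : k ∈ s <;> simp [hk] at this ⊢ <;> tauto
      · rintro rfl k -
        simp only [hs₀, mem_filter, mem_univ, true_and]
        by_cases hk : ω k ∈ A <;> simp [hk]
    rw [Finset.sum_eq_single_of_mem s₀ (mem_univ s₀)]
    · rw [Set.indicator_of_mem ((hmem s₀).2 rfl)]
    · intro s _ hs
      rw [Set.indicator_of_notMem]
      rw [hmem s]; exact hs
  calc (∫⁻ ω : Fin n → α, g ((univ.filter fun k => ω k ∈ A).card) ∂(Measure.pi fun _ => ν))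
      = ∑ s : Finset (Fin n), (ν A) ^ s.card * (ν Aᶜ) ^ (n - s.card) * g s.card := by
        rw [lintegral_congr hpt, lintegral_finset_sum]
        · refine Finset.sum_congr rfl fun s _ => ?_
          rw [lintegral_indicator_const (hE s), Measure.pi_pi]
          have : (∏ k : Fin n, ν (if k ∈ s then A else Aᶜ))
              = (ν A) ^ s.card * (ν Aᶜ) ^ (n - s.card) := by
            simp only [apply_ite ν]
            rw [Finset.prod_ite, Finset.prod_const, Finset.prod_const]
            congr 1
            · congr 1; rw [Finset.filter_mem_eq_inter, Finset.univ_inter]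
            · congr 1
              have : Finset.filter (fun k => k ∉ s) univ = sᶜ := by
                ext k; simp
              rw [this, Finset.card_compl, Fintype.card_fin]
          rw [this]; ring
        · intro s _
          exact (measurable_const.indicator (hE s))
    _ = ∑ k ∈ range (n + 1), (n.choose k : ℝ≥0∞) * (ν A) ^ k * (ν Aᶜ) ^ (n - k) * g k := by
        rw [← Finset.powerset_univ, Finset.powerset_card_disjiUnion, Finset.sum_disjiUnion _ _ ((Finset.pairwise_disjoint_powersetCard _).set_pairwise _)]
        rw [Finset.card_univ, Fintype.card_fin]
        refine Finset.sum_congr rfl fun k hk => ?_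
        have : ∀ s ∈ Finset.powersetCard k (univ : Finset (Fin n)),
            (ν A) ^ s.card * (ν Aᶜ) ^ (n - s.card) * g s.card
              = (ν A) ^ k * (ν Aᶜ) ^ (n - k) * g k := by
          intro s hs
          rw [(Finset.mem_powersetCard.1 hs).2]
        rw [Finset.sum_congr rfl this, Finset.sum_const, Finset.card_powersetCard,
          Finset.card_univ, Fintype.card_fin, nsmul_eq_mul]
        ring

-- L1: choose n k * (n+1).ascFactorial M = (n+M).choose (k+M) * (k+1).ascFactorial M
lemma chooseAsc (n k : ℕ) : ∀ M : ℕ,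
    n.choose k * (n + 1).ascFactorial M = (n + M).choose (k + M) * (k + 1).ascFactorial M
  | 0 => by simp [Nat.ascFactorial_zero]
  | M + 1 => by
    have h1 : (n + 1).ascFactorial (M + 1) = (n + 1 + M) * (n + 1).ascFactorial M :=
      Nat.ascFactorial_succ
    have h2 : (k + 1).ascFactorial (M + 1) = (k + 1 + M) * (k + 1).ascFactorial M :=
      Nat.ascFactorial_succ
    have h3 := Nat.add_one_mul_choose_eq (n + M) (k + M)
    -- (n+M).succ * (n+M).choose (k+M) = ((n+M)+1).choose ((k+M)+1) * (k+M).succ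
    have IH := chooseAsc n k M
    calc n.choose k * (n + 1).ascFactorial (M + 1)
        = (n + M + 1) * (n.choose k * (n + 1).ascFactorial M) := by rw [h1]; ring
      _ = (n + M + 1) * ((n + M).choose (k + M) * (k + 1).ascFactorial M) := by rw [IH]
      _ = ((n + M).succ * (n + M).choose (k + M)) * (k + 1).ascFactorial M := by
          rw [Nat.succ_eq_add_one]; ring
      _ = ((n + M + 1).choose (k + M + 1) * (k + M + 1)) * (k + 1).ascFactorial M := by
          rw [h3]
      _ = (n + (M + 1)).choose (k + (M + 1)) * (k + 1).ascFactorial (M + 1) := by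
          rw [h2]; ring_nf
-- L2: (k+1).ascFactorial M ≤ M! * (k+1)^M
lemma ascLe (k : ℕ) : ∀ M : ℕ, (k + 1).ascFactorial M ≤ M.factorial * (k + 1) ^ M
  | 0 => by simp
  | M + 1 => by
    have h2 : (k + 1).ascFactorial (M + 1) = (k + 1 + M) * (k + 1).ascFactorial M :=
      Nat.ascFactorial_succ
    have IH := ascLe k M
    calc (k + 1 + M) * (k + 1).ascFactorial M ≤ ((M + 1) * (k + 1)) * (M.factorial * (k + 1) ^ M) := by
          refine Nat.mul_le_mul ?_ IH; nlinarith
      _ = (M + 1).factorial * (k + 1) ^ (M + 1) := by rw [Nat.factorial_succ]; ring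
-- L3: n^M ≤ (n+1).ascFactorial M
lemma powLeAsc (n : ℕ) : ∀ M : ℕ, n ^ M ≤ (n + 1).ascFactorial M
  | 0 => by simp
  | M + 1 => by
    have h2 : (n + 1).ascFactorial (M + 1) = (n + 1 + M) * (n + 1).ascFactorial M :=
      Nat.ascFactorial_succ
    rw [h2, pow_succ, mul_comm]
    exact Nat.mul_le_mul (by omega) (powLeAsc n M)

lemma sumOne (n : ℕ) {p q : ℝ} (hpq : p + q = 1) :
    ∑ k ∈ range (n + 1), (n.choose k : ℝ) * p ^ k * q ^ (n - k) = 1 := by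
  have h : ∑ k ∈ range (n + 1), (n.choose k : ℝ) * p ^ k * q ^ (n - k) = (p + q) ^ n := by
    rw [add_pow]
    exact Finset.sum_congr rfl fun k _ => by ring
  rw [h, hpq, one_pow]

lemma binMoment (n M : ℕ) {p q a : ℝ} (hp : 0 < p) (hq : 0 ≤ q)
    (hpq : p + q = 1) (ha : 1 ≤ a) :
    ∑ k ∈ range (n + 1), (n.choose k : ℝ) * p ^ k * q ^ (n - k) * ((k + a)⁻¹) ^ M
      ≤ 2 ^ M * M.factorial * (((n : ℝ) * p + a)⁻¹) ^ M := by
  have hp1 : p ≤ 1 := by linarith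
  have ha0 : (0:ℝ) < a := by linarith
  have hnpa : (0:ℝ) < n * p + a := by positivity
  by_cases hcase : (n : ℝ) * p ≤ a
  · -- easy case
    have hstep : ∑ k ∈ range (n + 1), (n.choose k : ℝ) * p ^ k * q ^ (n - k) * ((k + a)⁻¹) ^ M
        ≤ ∑ k ∈ range (n + 1), (n.choose k : ℝ) * p ^ k * q ^ (n - k) * (a⁻¹) ^ M := by
      refine Finset.sum_le_sum fun k _ => ?_
      have h1 : ((k : ℝ) + a)⁻¹ ≤ a⁻¹ := by
        exact inv_anti₀ ha0 (by linarith [show (0:ℝ) ≤ (k:ℝ) from Nat.cast_nonneg k])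
      have h2 : (((k : ℝ) + a)⁻¹) ^ M ≤ (a⁻¹) ^ M := by
        apply pow_le_pow_left₀ (by positivity) h1
      have h3 : (0:ℝ) ≤ (n.choose k : ℝ) * p ^ k * q ^ (n - k) := by positivity
      nlinarith [h3, h2]
    rw [← Finset.sum_mul, sumOne n hpq, one_mul] at hstep
    refine hstep.trans ?_
    have h4 : a⁻¹ ≤ 2 * ((n : ℝ) * p + a)⁻¹ := by
      have h5 : 2 * ((n : ℝ) * p + a)⁻¹ = (((n : ℝ) * p + a) / 2)⁻¹ := by
        field_simp
      rw [h5]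
      exact inv_anti₀ (by linarith) (by linarith)
    have hfac : (1:ℝ) ≤ M.factorial := by exact_mod_cast Nat.one_le_iff_ne_zero.2 M.factorial_ne_zero
    calc (a⁻¹) ^ M ≤ (2 * ((n : ℝ) * p + a)⁻¹) ^ M := pow_le_pow_left₀ (by positivity) h4 M
      _ = 2 ^ M * (((n : ℝ) * p + a)⁻¹) ^ M := mul_pow _ _ _
      _ ≤ 2 ^ M * M.factorial * (((n : ℝ) * p + a)⁻¹) ^ M := by
          have h9 : (0:ℝ) ≤ (((n : ℝ) * p + a)⁻¹) ^ M := by positivity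
          nlinarith [mul_nonneg (mul_nonneg (by positivity : (0:ℝ) ≤ (2:ℝ)^M)
            (by linarith : (0:ℝ) ≤ (M.factorial:ℝ) - 1)) h9]
  · -- hard case : a < n * p
    push_neg at hcase
    have hnp : (0:ℝ) < (n : ℝ) * p := by linarith
    set AscN : ℕ := (n + 1).ascFactorial M with hAscN
    have hAscpos : (0:ℝ) < (AscN : ℝ) := by exact_mod_cast Nat.ascFactorial_pos n M
    set D : ℝ := (M.factorial : ℝ) * ((p ^ M) * (AscN : ℝ))⁻¹ with hD
    have hDpos : 0 < D := by positivity
    -- termwise bound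
    have hterm : ∀ k ∈ range (n + 1),
        (n.choose k : ℝ) * p ^ k * q ^ (n - k) * ((k + a)⁻¹) ^ M
          ≤ D * (((n + M).choose (k + M) : ℝ) * p ^ (k + M) * q ^ (n + M - (k + M))) := by
      intro k _
      have hk0 : (0:ℝ) ≤ (k:ℝ) := Nat.cast_nonneg k
      have h1 : (((k:ℝ) + a)⁻¹) ^ M ≤ (((k:ℝ) + 1)⁻¹) ^ M := by
        apply pow_le_pow_left₀ (by positivity)
        exact inv_anti₀ (by positivity) (by linarith)
      have hnat : n.choose k * AscN ≤ M.factorial * ((n + M).choose (k + M)) * (k + 1) ^ M := by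
        rw [hAscN, chooseAsc n k M]
        calc (n + M).choose (k + M) * (k + 1).ascFactorial M
            ≤ (n + M).choose (k + M) * (M.factorial * (k + 1) ^ M) :=
              Nat.mul_le_mul_left _ (ascLe k M)
          _ = M.factorial * ((n + M).choose (k + M)) * (k + 1) ^ M := by ring
      have key : (n.choose k : ℝ) * (((k:ℝ) + 1)⁻¹) ^ M
          ≤ (M.factorial : ℝ) * ((AscN : ℝ))⁻¹ * ((n + M).choose (k + M) : ℝ) := by
        have hreal : (n.choose k : ℝ) * (AscN : ℝ)
            ≤ (M.factorial : ℝ) * ((n + M).choose (k + M) : ℝ) * ((k:ℝ) + 1) ^ M := by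
          exact_mod_cast hnat
        rw [inv_pow, ← div_eq_mul_inv]
        rw [div_le_iff₀ (by positivity)]
        calc (n.choose k : ℝ) ≤ (M.factorial : ℝ) * ((n + M).choose (k + M) : ℝ)
              * ((k:ℝ) + 1) ^ M * ((AscN : ℝ))⁻¹ := by
              rw [← div_eq_mul_inv, le_div_iff₀ hAscpos]; linarith
          _ = (M.factorial : ℝ) * ((AscN : ℝ))⁻¹ * ((n + M).choose (k + M) : ℝ)
              * ((k:ℝ) + 1) ^ M := by ring
      have hsub : n + M - (k + M) = n - k := by omega
      have hrhs : D * (((n + M).choose (k + M) : ℝ) * p ^ (k + M) * q ^ (n + M - (k + M)))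
          = ((M.factorial : ℝ) * ((AscN : ℝ))⁻¹ * ((n + M).choose (k + M) : ℝ))
              * (p ^ k * q ^ (n - k)) := by
        rw [hsub, hD, pow_add]
        field_simp
      rw [hrhs]
      have hpq0 : (0:ℝ) ≤ p ^ k * q ^ (n - k) := by positivity
      calc (n.choose k : ℝ) * p ^ k * q ^ (n - k) * (((k:ℝ) + a)⁻¹) ^ M
          ≤ (n.choose k : ℝ) * p ^ k * q ^ (n - k) * (((k:ℝ) + 1)⁻¹) ^ M := by
            have : (0:ℝ) ≤ (n.choose k : ℝ) * p ^ k * q ^ (n - k) := by positivity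
            nlinarith
        _ = ((n.choose k : ℝ) * (((k:ℝ) + 1)⁻¹) ^ M) * (p ^ k * q ^ (n - k)) := by ring
        _ ≤ ((M.factorial : ℝ) * ((AscN : ℝ))⁻¹ * ((n + M).choose (k + M) : ℝ))
              * (p ^ k * q ^ (n - k)) := by
            exact mul_le_mul_of_nonneg_right key hpq0
    -- sum of shifted binomial terms is ≤ 1
    have hS : ∑ k ∈ range (n + 1),
        (((n + M).choose (k + M) : ℝ) * p ^ (k + M) * q ^ (n + M - (k + M)))
          ≤ 1 := by
      have hre : ∑ k ∈ range (n + 1),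
          (((n + M).choose (k + M) : ℝ) * p ^ (k + M) * q ^ (n + M - (k + M)))
            = ∑ j ∈ Finset.Ico M (M + (n + 1)),
                (((n + M).choose j : ℝ) * p ^ j * q ^ (n + M - j)) := by
        rw [Finset.sum_Ico_eq_sum_range]
        simp only [Nat.add_sub_cancel_left]
        exact Finset.sum_congr rfl fun i _ => by rw [Nat.add_comm M i]
      rw [hre]
      have hsubset : Finset.Ico M (M + (n + 1)) ⊆ range (n + M + 1) := by
        intro j hj
        rw [Finset.mem_Ico] at hj
        rw [Finset.mem_range]
        omega
      calc ∑ j ∈ Finset.Ico M (M + (n + 1)), (((n + M).choose j : ℝ) * p ^ j * q ^ (n + M - j))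
          ≤ ∑ j ∈ range (n + M + 1), (((n + M).choose j : ℝ) * p ^ j * q ^ (n + M - j)) := by
            refine Finset.sum_le_sum_of_subset_of_nonneg hsubset fun j _ _ => by positivity
        _ = 1 := sumOne (n + M) hpq
    -- bound D
    have hDle : D ≤ 2 ^ M * M.factorial * (((n : ℝ) * p + a)⁻¹) ^ M := by
      have hasc : ((n : ℝ)) ^ M ≤ (AscN : ℝ) := by
        rw [hAscN]; exact_mod_cast powLeAsc n M
      have h6 : ((n : ℝ) * p) ^ M ≤ p ^ M * (AscN : ℝ) := by
        calc ((n : ℝ) * p) ^ M = p ^ M * ((n:ℝ)) ^ M := by rw [mul_pow]; ring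
          _ ≤ p ^ M * (AscN : ℝ) := by
            exact mul_le_mul_of_nonneg_left hasc (by positivity)
      have h7 : ((p ^ M) * (AscN : ℝ))⁻¹ ≤ (((n : ℝ) * p) ^ M)⁻¹ :=
        inv_anti₀ (by positivity) h6
      have h8 : ((n : ℝ) * p)⁻¹ ≤ 2 * ((n : ℝ) * p + a)⁻¹ := by
        have h5 : 2 * ((n : ℝ) * p + a)⁻¹ = (((n : ℝ) * p + a) / 2)⁻¹ := by field_simp
        rw [h5]
        exact inv_anti₀ (by linarith) (by linarith)
      calc D ≤ (M.factorial : ℝ) * (((n : ℝ) * p) ^ M)⁻¹ := by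
            rw [hD]; exact mul_le_mul_of_nonneg_left h7 (by positivity)
        _ = (M.factorial : ℝ) * (((n : ℝ) * p)⁻¹) ^ M := by rw [inv_pow]
        _ ≤ (M.factorial : ℝ) * (2 * ((n : ℝ) * p + a)⁻¹) ^ M := by
            refine mul_le_mul_of_nonneg_left (pow_le_pow_left₀ (by positivity) h8 M) (by positivity)
        _ = 2 ^ M * M.factorial * (((n : ℝ) * p + a)⁻¹) ^ M := by rw [mul_pow]; ring
    calc ∑ k ∈ range (n + 1), (n.choose k : ℝ) * p ^ k * q ^ (n - k) * ((k + a)⁻¹) ^ M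
        ≤ ∑ k ∈ range (n + 1),
            D * (((n + M).choose (k + M) : ℝ) * p ^ (k + M) * q ^ (n + M - (k + M))) :=
          Finset.sum_le_sum hterm
      _ = D * ∑ k ∈ range (n + 1),
            (((n + M).choose (k + M) : ℝ) * p ^ (k + M) * q ^ (n + M - (k + M))) := by
          rw [Finset.mul_sum]
      _ ≤ D * 1 := by exact mul_le_mul_of_nonneg_left hS hDpos.le
      _ = D := mul_one D
      _ ≤ 2 ^ M * M.factorial * (((n : ℝ) * p + a)⁻¹) ^ M := hDle

lemma momentC {α : Type} [MeasurableSpace α] (ν : Measure α) [IsProbabilityMeasure ν]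
    (n M : ℕ) (A : Set α) (hA : MeasurableSet A) {a : ℝ} (ha : 1 ≤ a)
    (hp : 0 < (ν A).toReal) :
    (∫⁻ ω : Fin n → α,
        ENNReal.ofReal (((((univ.filter fun k => ω k ∈ A).card : ℝ) + a)⁻¹) ^ M)
        ∂(Measure.pi fun _ => ν))
      ≤ ENNReal.ofReal (2 ^ M * M.factorial * (((n : ℝ) * (ν A).toReal + a)⁻¹) ^ M) := by
  set p : ℝ := (ν A).toReal with hpdef
  set q : ℝ := (ν Aᶜ).toReal with hqdef
  have hq0 : 0 ≤ q := ENNReal.toReal_nonneg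
  have hpq : p + q = 1 := by
    rw [hpdef, hqdef, ← ENNReal.toReal_add (measure_ne_top ν A) (measure_ne_top ν Aᶜ),
      measure_add_measure_compl hA, measure_univ, ENNReal.toReal_one]
  have hA' : ν A = ENNReal.ofReal p := (ENNReal.ofReal_toReal (measure_ne_top ν A)).symm
  have hAc : ν Aᶜ = ENNReal.ofReal q := (ENNReal.ofReal_toReal (measure_ne_top ν Aᶜ)).symm
  rw [countDist ν n A hA (fun k => ENNReal.ofReal ((((k : ℝ) + a)⁻¹) ^ M))]
  have hsum : ∑ k ∈ range (n + 1),
      (n.choose k : ℝ≥0∞) * (ν A) ^ k * (ν Aᶜ) ^ (n - k)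
        * ENNReal.ofReal ((((k : ℝ) + a)⁻¹) ^ M)
      = ENNReal.ofReal (∑ k ∈ range (n + 1),
          (n.choose k : ℝ) * p ^ k * q ^ (n - k) * ((((k : ℝ) + a)⁻¹) ^ M)) := by
    rw [ENNReal.ofReal_sum_of_nonneg]
    · refine Finset.sum_congr rfl fun k _ => ?_
      rw [hA', hAc, ← ENNReal.ofReal_pow hp.le, ← ENNReal.ofReal_pow hq0,
        ← ENNReal.ofReal_natCast (n.choose k), ← ENNReal.ofReal_mul (by positivity),
        ← ENNReal.ofReal_mul (by positivity), ← ENNReal.ofReal_mul (by positivity)]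
    · intro k _
      have : (0:ℝ) < (k : ℝ) + a := by
        have : (0:ℝ) ≤ (k:ℝ) := Nat.cast_nonneg k
        linarith
      positivity
  rw [hsum]
  exact ENNReal.ofReal_le_ofReal (binMoment n M hp hq0 hpq ha)

lemma measN {α : Type} [MeasurableSpace α] {n : ℕ} (A : Set α) (hA : MeasurableSet A) :
    Measurable fun ω : Fin n → α => (univ.filter fun k => ω k ∈ A).card := by
  have h : (fun ω : Fin n → α => (univ.filter fun k => ω k ∈ A).card)
      = fun ω => ∑ k : Fin n, if ω k ∈ A then 1 else 0 := by
    funext ω; rw [Finset.card_filter]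
  rw [h]
  refine Finset.measurable_sum _ fun k _ => ?_
  exact Measurable.ite ((measurable_pi_apply k) hA) measurable_const measurable_const

/-- for multinomial counts `(N_1,…,N_K)` over disjoint cells `A_1,…,A_K`
(with positive probabilities) of an i.i.d. sample of size `n`, and constants `a_{ij} ≥ 1`,
`E[∏_i ∏_j 1/(N_i + a_{ij})] ≤ C ∏_i ∏_j 1/(n p_i + a_{ij})`,
where `C` depends only on `K` and the `m_i`'s. -/
theorem stmt5 (K : ℕ) (m : Fin K → ℕ) :
    ∃ C : ℝ, 0 < C ∧
      ∀ (α : Type) [MeasurableSpace α] (ν : Measure α) [IsProbabilityMeasure ν]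
        (n : ℕ) (A : Fin K → Set α) (a : (i : Fin K) → Fin (m i) → ℝ),
        (∀ i, MeasurableSet (A i)) →
        (∀ i j, i ≠ j → Disjoint (A i) (A j)) →
        (∀ i, 0 < (ν (A i)).toReal) →
        (∀ i j, 1 ≤ a i j) →
        (∫ ω : Fin n → α,
            ∏ i, ∏ j, 1 / (((Finset.univ.filter fun k => ω k ∈ A i).card : ℝ) + a i j)
            ∂(Measure.pi fun _ => ν))
          ≤ C * ∏ i, ∏ j, 1 / ((n : ℝ) * (ν (A i)).toReal + a i j) := by
  set T : ℕ := ∑ i, m i with hT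
  set B : ℝ := 2 ^ T * T.factorial with hB
  have hB1 : (1:ℝ) ≤ B := by
    rw [hB]
    have h1 : (1:ℝ) ≤ 2 ^ T := one_le_pow₀ (by norm_num)
    have h2 : (1:ℝ) ≤ T.factorial := by
      exact_mod_cast Nat.one_le_iff_ne_zero.2 T.factorial_ne_zero
    nlinarith
  refine ⟨B ^ T, by positivity, ?_⟩
  intro α _ ν _ n A a hA _ hp ha
  -- basic positivity facts
  have hNnn : ∀ (i : Fin K) (ω : Fin n → α), (0:ℝ) ≤ ((univ.filter fun k => ω k ∈ A i).card : ℝ) :=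
    fun i ω => Nat.cast_nonneg _
  have hden : ∀ (i : Fin K) (j : Fin (m i)) (ω : Fin n → α),
      (0:ℝ) < ((univ.filter fun k => ω k ∈ A i).card : ℝ) + a i j := by
    intro i j ω; have := ha i j; have := hNnn i ω; linarith
  have hden2 : ∀ (i : Fin K) (j : Fin (m i)), (0:ℝ) < (n : ℝ) * (ν (A i)).toReal + a i j := by
    intro i j
    have h1 := hp i; have h2 := ha i j
    have : (0:ℝ) ≤ (n : ℝ) * (ν (A i)).toReal := by positivity
    linarith
  have hRHS0 : (0:ℝ) ≤ ∏ i, ∏ j, 1 / ((n : ℝ) * (ν (A i)).toReal + a i j) :=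
    Finset.prod_nonneg fun i _ => Finset.prod_nonneg fun j _ => by
      have := hden2 i j; positivity
  -- measurability of integrand
  have hfm : Measurable fun ω : Fin n → α =>
      ∏ i, ∏ j, 1 / (((univ.filter fun k => ω k ∈ A i).card : ℝ) + a i j) := by
    refine Finset.measurable_prod _ fun i _ => Finset.measurable_prod _ fun j _ => ?_
    exact (measurable_from_top (f := fun c : ℕ => 1 / ((c : ℝ) + a i j))).comp (measN (A i) (hA i))
  have hf0 : ∀ ω : Fin n → α,
      0 ≤ ∏ i, ∏ j, 1 / (((univ.filter fun k => ω k ∈ A i).card : ℝ) + a i j) :=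
    fun ω => Finset.prod_nonneg fun i _ => Finset.prod_nonneg fun j _ =>
      le_of_lt (by have := hden i j ω; positivity)
  rw [integral_eq_lintegral_of_nonneg_ae (Filter.Eventually.of_forall hf0)
    hfm.aestronglyMeasurable]
  by_cases hT0 : T = 0
  · -- all m i = 0
    have hmi : ∀ i, m i = 0 := by
      intro i
      exact Finset.sum_eq_zero_iff.1 (hT.symm.trans hT0) i (mem_univ i)
    have hone : ∀ (g : (i : Fin K) → Fin (m i) → ℝ),
        ∏ i, ∏ j, g i j = 1 := by
      intro g
      refine Finset.prod_eq_one fun i _ => ?_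
      haveI : IsEmpty (Fin (m i)) := by rw [hmi i]; infer_instance
      rw [Finset.univ_eq_empty, Finset.prod_empty]
    have h1 : (fun ω : Fin n → α => ENNReal.ofReal
        (∏ i, ∏ j, 1 / (((univ.filter fun k => ω k ∈ A i).card : ℝ) + a i j)))
        = fun _ => (1 : ℝ≥0∞) := by
      funext ω
      rw [hone fun i j => 1 / (((univ.filter fun k => ω k ∈ A i).card : ℝ) + a i j),
        ENNReal.ofReal_one]
    rw [h1, lintegral_one, measure_univ, ENNReal.toReal_one,
      hone fun i j => 1 / ((n : ℝ) * (ν (A i)).toReal + a i j), hT0]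
    norm_num
  · -- main case
    have hT1 : 1 ≤ T := Nat.one_le_iff_ne_zero.2 hT0
    have hTR : ((T:ℝ)) ≠ 0 := by exact_mod_cast hT0
    have hTR1 : (1:ℝ) ≤ (T:ℝ) := by exact_mod_cast hT1
    have hcard : Fintype.card ((i : Fin K) × Fin (m i)) = T := by
      simp [hT]
    set F : ((i : Fin K) × Fin (m i)) → (Fin n → α) → ℝ≥0∞ := fun x ω =>
      (ENNReal.ofReal ((((univ.filter fun k => ω k ∈ A x.1).card : ℝ) + a x.1 x.2)⁻¹))
        ^ (T:ℝ) with hF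
    have hpt : ∀ ω : Fin n → α,
        ENNReal.ofReal (∏ i, ∏ j, 1 / (((univ.filter fun k => ω k ∈ A i).card : ℝ) + a i j))
          = ∏ x : (i : Fin K) × Fin (m i), (F x ω) ^ (1 / (T:ℝ)) := by
      intro ω
      simp only [one_div]
      rw [ENNReal.ofReal_prod_of_nonneg (fun i _ => Finset.prod_nonneg fun j _ =>
        le_of_lt (by have := hden i j ω; positivity))]
      have : ∀ i : Fin K, ENNReal.ofReal
          (∏ j, (((univ.filter fun k => ω k ∈ A i).card : ℝ) + a i j)⁻¹)
          = ∏ j, ENNReal.ofReal ((((univ.filter fun k => ω k ∈ A i).card : ℝ) + a i j)⁻¹) :=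
        fun i => ENNReal.ofReal_prod_of_nonneg (fun j _ =>
          le_of_lt (by have := hden i j ω; positivity))
      rw [Finset.prod_congr rfl fun i _ => this i, Finset.prod_sigma', Finset.univ_sigma_univ]
      refine Finset.prod_congr rfl fun x _ => ?_
      rw [hF]
      rw [← ENNReal.rpow_mul, mul_inv_cancel₀ hTR, ENNReal.rpow_one]
    have hmeas : ∀ x ∈ (univ : Finset ((i : Fin K) × Fin (m i))),
        AEMeasurable (F x) (Measure.pi fun _ : Fin n => ν) := by
      intro x _
      exact (Measurable.comp (measurable_from_top
        (f := fun c : ℕ => (ENNReal.ofReal (((c : ℝ) + a x.1 x.2)⁻¹)) ^ (T:ℝ)))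
        (measN (A x.1) (hA x.1))).aemeasurable
    have hsum1 : ∑ _x : (i : Fin K) × Fin (m i), 1 / (T:ℝ) = 1 := by
      rw [Finset.sum_const, card_univ, hcard, nsmul_eq_mul, mul_one_div, div_self hTR]
    have holder := ENNReal.lintegral_prod_norm_pow_le (μ := Measure.pi fun _ : Fin n => ν)
      univ hmeas hsum1 (fun x _ => by positivity)
    have hsingle : ∀ x : (i : Fin K) × Fin (m i),
        (∫⁻ ω : Fin n → α, F x ω ∂(Measure.pi fun _ => ν))
          ≤ ENNReal.ofReal (2 ^ T * T.factorial
              * (((n : ℝ) * (ν (A x.1)).toReal + a x.1 x.2)⁻¹) ^ T) := by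
      intro x
      have heq : ∀ ω : Fin n → α, F x ω = ENNReal.ofReal
          (((((univ.filter fun k => ω k ∈ A x.1).card : ℝ) + a x.1 x.2)⁻¹) ^ T) := by
        intro ω
        simp only [hF]
        rw [← Real.rpow_natCast
          ((((univ.filter fun k => ω k ∈ A x.1).card : ℝ) + a x.1 x.2)⁻¹) T,
          ENNReal.ofReal_rpow_of_nonneg
            (le_of_lt (by have := hden x.1 x.2 ω; positivity)) (Nat.cast_nonneg T)]
      rw [lintegral_congr heq]
      exact momentC ν n T (A x.1) (hA x.1) (ha x.1 x.2) (hp x.1)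
    have hxbound : ∀ x : (i : Fin K) × Fin (m i),
        (∫⁻ ω : Fin n → α, F x ω ∂(Measure.pi fun _ => ν)) ^ (1 / (T:ℝ))
          ≤ ENNReal.ofReal B
              * ENNReal.ofReal (((n : ℝ) * (ν (A x.1)).toReal + a x.1 x.2)⁻¹) := by
      intro x
      set d : ℝ := ((n : ℝ) * (ν (A x.1)).toReal + a x.1 x.2)⁻¹ with hd
      have hd0 : 0 ≤ d := le_of_lt (by have := hden2 x.1 x.2; rw [hd]; positivity)
      have h1T : (0:ℝ) ≤ 1 / (T:ℝ) := by positivity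
      calc (∫⁻ ω : Fin n → α, F x ω ∂(Measure.pi fun _ => ν)) ^ (1 / (T:ℝ))
          ≤ (ENNReal.ofReal (2 ^ T * T.factorial * d ^ T)) ^ (1 / (T:ℝ)) :=
            ENNReal.rpow_le_rpow (hsingle x) h1T
        _ = ((ENNReal.ofReal B) ^ (1 / (T:ℝ)))
              * (((ENNReal.ofReal d) ^ (T:ℕ)) ^ (1 / (T:ℝ))) := by
            rw [ENNReal.ofReal_mul (by positivity), ENNReal.ofReal_pow hd0, ← hB,
              ENNReal.mul_rpow_of_nonneg _ _ h1T]
        _ ≤ (ENNReal.ofReal B) * (ENNReal.ofReal d) := by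
            have e2 : ((ENNReal.ofReal d) ^ (T:ℕ)) ^ (1 / (T:ℝ)) = ENNReal.ofReal d := by
              rw [← ENNReal.rpow_natCast (ENNReal.ofReal d) T, ← ENNReal.rpow_mul,
                mul_one_div, div_self hTR, ENNReal.rpow_one]
            rw [e2]
            refine mul_le_mul_left ?_ _
            have e3 : (1:ℝ≥0∞) ≤ ENNReal.ofReal B := ENNReal.one_le_ofReal.2 hB1
            calc (ENNReal.ofReal B) ^ (1 / (T:ℝ)) ≤ (ENNReal.ofReal B) ^ (1:ℝ) :=
                  ENNReal.rpow_le_rpow_of_exponent_le e3 (by rw [div_le_one]; · exact hTR1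
                                                             · positivity)
              _ = ENNReal.ofReal B := ENNReal.rpow_one _
    -- final chain
    refine ENNReal.toReal_le_of_le_ofReal
      (mul_nonneg (by positivity) hRHS0) ?_
    have hfinal : ENNReal.ofReal (B ^ T * ∏ i, ∏ j, 1 / ((n : ℝ) * (ν (A i)).toReal + a i j))
        = (ENNReal.ofReal B) ^ T
            * ∏ x : (i : Fin K) × Fin (m i),
                ENNReal.ofReal (((n : ℝ) * (ν (A x.1)).toReal + a x.1 x.2)⁻¹) := by
      simp only [one_div]
      rw [ENNReal.ofReal_mul (by positivity), ENNReal.ofReal_pow (by positivity)]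
      congr 1
      rw [ENNReal.ofReal_prod_of_nonneg (fun i _ => Finset.prod_nonneg fun j _ =>
        le_of_lt (by have := hden2 i j; positivity))]
      rw [Finset.prod_congr rfl fun i (_ : i ∈ univ) =>
        ENNReal.ofReal_prod_of_nonneg (fun j _ => le_of_lt (by have := hden2 i j; positivity))]
      rw [Finset.prod_sigma', Finset.univ_sigma_univ]
    calc ∫⁻ ω : Fin n → α, ENNReal.ofReal
          (∏ i, ∏ j, 1 / (((univ.filter fun k => ω k ∈ A i).card : ℝ) + a i j))
          ∂(Measure.pi fun _ => ν)
        = ∫⁻ ω : Fin n → α, ∏ x : (i : Fin K) × Fin (m i), (F x ω) ^ (1 / (T:ℝ))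
            ∂(Measure.pi fun _ => ν) := lintegral_congr hpt
      _ ≤ ∏ x : (i : Fin K) × Fin (m i),
            (∫⁻ ω : Fin n → α, F x ω ∂(Measure.pi fun _ => ν)) ^ (1 / (T:ℝ)) := holder
      _ ≤ ∏ x : (i : Fin K) × Fin (m i),
            (ENNReal.ofReal B
              * ENNReal.ofReal (((n : ℝ) * (ν (A x.1)).toReal + a x.1 x.2)⁻¹)) :=
          Finset.prod_le_prod' fun x _ => hxbound x
      _ = (ENNReal.ofReal B) ^ T
            * ∏ x : (i : Fin K) × Fin (m i),
                ENNReal.ofReal (((n : ℝ) * (ν (A x.1)).toReal + a x.1 x.2)⁻¹) := by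
          rw [Finset.prod_mul_distrib, Finset.prod_const, card_univ, hcard]
      _ = ENNReal.ofReal (B ^ T * ∏ i, ∏ j, 1 / ((n : ℝ) * (ν (A i)).toReal + a i j)) :=
          hfinal.symm
end

section
/- Let A_1 and A_2 be disjoint measurable subsets of a probability space with p_1 = P(X ∈ A_1) > 0 and p_2 = P(X ∈ A_2) > 0, let X_1, …, X_n be i.i.d. copies of X, and set N_i = #{k : X_k ∈ A_i}. Then for any constants a, b ≥ 1, 0 ≤ E[1/((a + N_1)(b + N_2))] − 1/((a + np_1)(b + np_2)) ≤ C · [1/((a+np_1)(b+np_2))] · [1/(a+np_1) + 1/(b+np_2)] for a universal constant C. -/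
open MeasureTheory
open scoped Classical

lemma lint_rpow (c : ℝ) (hc : 0 ≤ c) :
    ∫⁻ t in Set.Ioc (0:ℝ) 1, ENNReal.ofReal (t ^ c) = ENNReal.ofReal (1/(c+1)) := by
  rw [← ofReal_integral_eq_lintegral_ofReal]
  · congr 1
    rw [← intervalIntegral.integral_of_le (by norm_num : (0:ℝ) ≤ 1),
      integral_rpow (Or.inl (by linarith)),
      Real.one_rpow, Real.zero_rpow (by linarith)]
    ring
  · rw [← IntegrableOn, ← intervalIntegrable_iff_integrableOn_Ioc_of_le (by norm_num : (0:ℝ) ≤ 1)]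
    exact intervalIntegral.intervalIntegrable_rpow (Or.inl (by linarith))
  · filter_upwards [ae_restrict_mem measurableSet_Ioc] with t ht
    exact Real.rpow_nonneg ht.1.le c

lemma lint_upper (c m : ℝ) (hc : 1 ≤ c) (hm : 0 ≤ m) :
    ∫⁻ t in Set.Ioc (0:ℝ) 1, ENNReal.ofReal (t ^ (c-1) * Real.exp (-(m*(1-t))))
      ≤ ENNReal.ofReal ((1 + 2/(c+m)) * (1/(c+m))) := by
  set K := c + m with hK
  have hK1 : 1 ≤ K := by simp only [hK]; linarith
  have hK0 : 0 < K := by linarith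
  have hpt : ∀ t ∈ Set.Ioc (0:ℝ) 1,
      t ^ (c-1) * Real.exp (-(m*(1-t))) ≤ Real.exp (-((K-1)*(1-t))) := by
    intro t ht
    have h1 : t ^ (c-1) ≤ Real.exp (-((c-1)*(1-t))) := by
      have h2 : t ≤ Real.exp (t - 1) := by
        have := Real.add_one_le_exp (t - 1); linarith
      calc t ^ (c-1) ≤ (Real.exp (t-1)) ^ (c-1) :=
            Real.rpow_le_rpow ht.1.le h2 (by linarith)
        _ = Real.exp ((t-1)*(c-1)) := by rw [← Real.exp_mul]
        _ = Real.exp (-((c-1)*(1-t))) := by ring_nf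
    calc t ^ (c-1) * Real.exp (-(m*(1-t)))
        ≤ Real.exp (-((c-1)*(1-t))) * Real.exp (-(m*(1-t))) :=
          mul_le_mul_of_nonneg_right h1 (Real.exp_pos _).le
      _ = Real.exp (-((K-1)*(1-t))) := by rw [← Real.exp_add, hK]; ring_nf
  by_cases h2K : K ≤ 2
  · have hb : ∫⁻ t in Set.Ioc (0:ℝ) 1, ENNReal.ofReal (t ^ (c-1) * Real.exp (-(m*(1-t))))
        ≤ ∫⁻ _ in Set.Ioc (0:ℝ) 1, 1 := by
      apply setLIntegral_mono' measurableSet_Ioc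
      intro t ht
      have h1 : t ^ (c-1) ≤ 1 := Real.rpow_le_one ht.1.le ht.2 (by linarith)
      have h2 : Real.exp (-(m*(1-t))) ≤ 1 := by
        apply Real.exp_le_one_iff.2; nlinarith [ht.2]
      calc ENNReal.ofReal (t ^ (c-1) * Real.exp (-(m*(1-t))))
          ≤ ENNReal.ofReal 1 :=
            ENNReal.ofReal_le_ofReal (by nlinarith [Real.rpow_nonneg ht.1.le (c-1)])
        _ = 1 := ENNReal.ofReal_one
    refine hb.trans ?_
    rw [setLIntegral_one]
    simp only [Real.volume_Ioc]
    rw [show (1:ℝ) - 0 = 1 by ring, ENNReal.ofReal_one, ← ENNReal.ofReal_one]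
    apply ENNReal.ofReal_le_ofReal
    have hu : 1/2 ≤ 1/K := by
      rw [div_le_div_iff₀ (by norm_num) hK0]; linarith
    have hu0 : 0 < 1/K := by positivity
    have e : (1 + 2/K) * (1/K) = 1/K + 2*((1/K)*(1/K)) := by ring
    rw [e]
    nlinarith [hu, hu0, mul_le_mul hu hu (by norm_num) hu0.le]
  · push_neg at h2K
    have hKm1 : (0:ℝ) < K - 1 := by linarith
    have hb : ∫⁻ t in Set.Ioc (0:ℝ) 1, ENNReal.ofReal (t ^ (c-1) * Real.exp (-(m*(1-t))))
        ≤ ∫⁻ t in Set.Ioc (0:ℝ) 1, ENNReal.ofReal (Real.exp (-((K-1)*(1-t)))) := by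
      apply setLIntegral_mono' measurableSet_Ioc
      intro t ht
      exact ENNReal.ofReal_le_ofReal (hpt t ht)
    refine hb.trans ?_
    have hint : ∫⁻ t in Set.Ioc (0:ℝ) 1, ENNReal.ofReal (Real.exp (-((K-1)*(1-t))))
        = ENNReal.ofReal ((1 - Real.exp (-(K-1))) / (K-1)) := by
      rw [← ofReal_integral_eq_lintegral_ofReal]
      · congr 1
        rw [← intervalIntegral.integral_of_le (by norm_num : (0:ℝ) ≤ 1)]
        have heq : ∀ t : ℝ, Real.exp (-((K-1)*(1-t))) = Real.exp ((K-1) * t + (-(K-1))) := by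
          intro t; ring_nf
        rw [intervalIntegral.integral_congr (g := fun t => Real.exp ((K-1) * t + (-(K-1))))
          (fun t _ => heq t)]
        rw [intervalIntegral.integral_comp_mul_add Real.exp (ne_of_gt hKm1) (-(K-1))]
        rw [integral_exp]
        simp only [smul_eq_mul, mul_zero, zero_add, mul_one,
          show K - 1 + -(K-1) = 0 from by ring, Real.exp_zero, Real.exp_neg]
        ring
      · rw [← IntegrableOn, ← intervalIntegrable_iff_integrableOn_Ioc_of_le (by norm_num : (0:ℝ) ≤ 1)]
        apply Continuous.intervalIntegrable
        continuity
      · filter_upwards with t using (Real.exp_pos _).le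
    rw [hint]
    apply ENNReal.ofReal_le_ofReal
    have h1 : (1 - Real.exp (-(K-1))) / (K-1) ≤ 1 / (K-1) :=
      (div_le_div_iff_of_pos_right hKm1).mpr (by have := (Real.exp_pos (-(K-1))).le; linarith)
    refine h1.trans ?_
    have key : K^2 ≤ (K+2)*(K-1) := by nlinarith
    rw [div_le_iff₀ hKm1]
    have e : (1 + 2/K) * (1/K) * (K - 1) = (K+2)*(K-1) / K^2 := by
      field_simp
    rw [e, le_div_iff₀ (by positivity)]
    nlinarith

lemma prod_ite_count {α : Type} (A₁ A₂ : Set α) (hd : Disjoint A₁ A₂) (t s : ℝ) {n : ℕ}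
    (ω : Fin n → α) :
    ∏ k : Fin n, (if ω k ∈ A₁ then t else if ω k ∈ A₂ then s else 1)
      = t ^ (Finset.univ.filter fun k => ω k ∈ A₁).card
        * s ^ (Finset.univ.filter fun k => ω k ∈ A₂).card := by
  rw [← Finset.prod_filter_mul_prod_filter_not Finset.univ (fun k => ω k ∈ A₁)]
  congr 1
  · rw [Finset.prod_congr rfl (fun k hk => ?_), Finset.prod_const]
    rw [Finset.mem_filter] at hk
    simp [hk.2]
  · rw [Finset.prod_congr rfl (g := fun k => if ω k ∈ A₂ then s else 1) (fun k hk => ?_)]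
    · rw [← Finset.prod_filter_mul_prod_filter_not _ (fun k => ω k ∈ A₂)]
      rw [Finset.prod_congr rfl (g := fun _ => s)
        (fun k hk => if_pos (Finset.mem_filter.1 hk).2), Finset.prod_const]
      rw [Finset.prod_congr rfl (g := fun _ => (1:ℝ))
        (fun k hk => if_neg (Finset.mem_filter.1 hk).2), Finset.prod_const_one, mul_one,
        Finset.filter_filter]
      congr 2
      apply Finset.filter_congr
      intro k _
      constructor
      · intro h; exact h.2
      · intro h; exact ⟨fun h1 => (Set.disjoint_left.1 hd h1) h, h⟩
    · rw [Finset.mem_filter] at hk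
      simp [hk.2]

lemma count_measurable {α : Type} [MeasurableSpace α] (A : Set α) (hA : MeasurableSet A) (n : ℕ) :
    Measurable (fun ω : Fin n → α => ((Finset.univ.filter fun k => ω k ∈ A).card : ℕ)) := by
  have h : (fun ω : Fin n → α => (Finset.univ.filter fun k => ω k ∈ A).card)
      = fun ω => ∑ k : Fin n, if ω k ∈ A then 1 else 0 := by
    funext ω; rw [Finset.card_filter]
  rw [h]
  exact Finset.measurable_sum _ (fun k _ =>
    Measurable.ite ((measurable_pi_apply k) hA) measurable_const measurable_const)

lemma pi_lintegral_prod {α : Type} [MeasurableSpace α] (ν : Measure α) [IsProbabilityMeasure ν]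
    (n : ℕ) (g : α → ℝ) (hgi : Integrable g ν) (hg0 : ∀ x, 0 ≤ g x) :
    ∫⁻ ω : Fin n → α, ENNReal.ofReal (∏ k, g (ω k)) ∂(Measure.pi fun _ => ν)
      = ENNReal.ofReal (∫ x, g x ∂ν) ^ n := by
  letI : MeasureSpace α := ⟨ν⟩
  haveI : SigmaFinite (volume : Measure α) := by
    show SigmaFinite ν; infer_instance
  have hvol : (Measure.pi fun _ : Fin n => ν) = (volume : Measure (Fin n → α)) := by
    rw [volume_pi]; rfl
  rw [hvol, ← ofReal_integral_eq_lintegral_ofReal]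
  · rw [show (∫ ω : Fin n → α, ∏ k, g (ω k)) = (∫ x, g x) ^ (Fintype.card (Fin n)) from
      integral_fintype_prod_eq_pow (ι := Fin n) g, Fintype.card_fin,
      ENNReal.ofReal_pow (integral_nonneg hg0)]
    rfl
  · exact Integrable.fintype_prod (f := fun _ : Fin n => g) (fun _ => hgi)
  · filter_upwards with ω using Finset.prod_nonneg (fun k _ => hg0 (ω k))

lemma arith_final (u v : ℝ) (hu0 : 0 < u) (hv0 : 0 < v) (hu1 : u ≤ 1) (hv1 : v ≤ 1) :
    ((1+2*u)*u)*((1+2*v)*v) - u*v ≤ 6*(u*v)*(u+v) := by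
  have h1 : (0:ℝ) ≤ u + v - u*v := by nlinarith [mul_nonneg hu0.le (sub_nonneg.2 hv1)]
  have h2 : (0:ℝ) ≤ u*v := mul_nonneg hu0.le hv0.le
  nlinarith [mul_nonneg h2 h1]


set_option maxHeartbeats 2000000 in
/-- for disjoint cells `A₁, A₂` with positive probabilities `p₁, p₂`, sample
counts `N₁, N₂` from an i.i.d. sample of size `n`, and constants `a, b ≥ 1`,
`0 ≤ E[1/((a+N₁)(b+N₂))] − 1/((a+np₁)(b+np₂))
   ≤ C · [1/((a+np₁)(b+np₂))] · [1/(a+np₁) + 1/(b+np₂)]` for a universal constant `C`. -/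
theorem stmt6 :
    ∃ C : ℝ, 0 < C ∧
      ∀ (α : Type) [MeasurableSpace α] (ν : Measure α) [IsProbabilityMeasure ν]
        (n : ℕ) (A₁ A₂ : Set α) (a b : ℝ),
        MeasurableSet A₁ → MeasurableSet A₂ → Disjoint A₁ A₂ →
        0 < (ν A₁).toReal → 0 < (ν A₂).toReal → 1 ≤ a → 1 ≤ b →
        0 ≤ (∫ ω : Fin n → α,
              1 / ((a + ((Finset.univ.filter fun k => ω k ∈ A₁).card : ℝ))
                  * (b + ((Finset.univ.filter fun k => ω k ∈ A₂).card : ℝ)))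
              ∂(Measure.pi fun _ => ν))
            - 1 / ((a + (n : ℝ) * (ν A₁).toReal) * (b + (n : ℝ) * (ν A₂).toReal)) ∧
        (∫ ω : Fin n → α,
              1 / ((a + ((Finset.univ.filter fun k => ω k ∈ A₁).card : ℝ))
                  * (b + ((Finset.univ.filter fun k => ω k ∈ A₂).card : ℝ)))
              ∂(Measure.pi fun _ => ν))
            - 1 / ((a + (n : ℝ) * (ν A₁).toReal) * (b + (n : ℝ) * (ν A₂).toReal))
          ≤ C * (1 / ((a + (n : ℝ) * (ν A₁).toReal) * (b + (n : ℝ) * (ν A₂).toReal)))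
              * (1 / (a + (n : ℝ) * (ν A₁).toReal) + 1 / (b + (n : ℝ) * (ν A₂).toReal)) := by
  refine ⟨6, by norm_num, ?_⟩
  intro α mα ν hν n A₁ A₂ a b hA₁ hA₂ hdisj hp₁pos hp₂pos ha hb
  set p₁ := (ν A₁).toReal with hp₁d
  set p₂ := (ν A₂).toReal with hp₂d
  set μ : Measure (Fin n → α) := Measure.pi fun _ => ν with hμd
  haveI hμprob : IsProbabilityMeasure μ :=
    inferInstanceAs (IsProbabilityMeasure (Measure.pi fun _ : Fin n => ν))
  set K := a + (n : ℝ) * p₁ with hKd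
  set L := b + (n : ℝ) * p₂ with hLd
  have hnp₁ : 0 ≤ (n : ℝ) * p₁ := mul_nonneg (Nat.cast_nonneg n) hp₁pos.le
  have hnp₂ : 0 ≤ (n : ℝ) * p₂ := mul_nonneg (Nat.cast_nonneg n) hp₂pos.le
  have hK1 : 1 ≤ K := by rw [hKd]; linarith
  have hL1 : 1 ≤ L := by rw [hLd]; linarith
  have hK0 : (0:ℝ) < K := by linarith
  have hL0 : (0:ℝ) < L := by linarith
  have hsum : p₁ + p₂ ≤ 1 := by
    have h1 : ν A₁ + ν A₂ = ν (A₁ ∪ A₂) := (measure_union hdisj hA₂).symm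
    have h2 : ν (A₁ ∪ A₂) ≤ 1 := prob_le_one
    have h3 : p₁ + p₂ = (ν (A₁ ∪ A₂)).toReal := by
      rw [hp₁d, hp₂d, ← ENNReal.toReal_add (measure_ne_top ν _) (measure_ne_top ν _), h1]
    rw [h3]
    have := ENNReal.toReal_mono ENNReal.one_ne_top h2
    simpa using this
  set N₁ : (Fin n → α) → ℕ := fun ω => (Finset.univ.filter fun k => ω k ∈ A₁).card with hN₁d
  set N₂ : (Fin n → α) → ℕ := fun ω => (Finset.univ.filter fun k => ω k ∈ A₂).card with hN₂d
  have hN₁m : Measurable N₁ := count_measurable A₁ hA₁ n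
  have hN₂m : Measurable N₂ := count_measurable A₂ hA₂ n
  set f : (Fin n → α) → ℝ := fun ω => 1 / ((a + (N₁ ω : ℝ)) * (b + (N₂ ω : ℝ))) with hfd
  have hIf : (∫ ω : Fin n → α,
      1 / ((a + ((Finset.univ.filter fun k => ω k ∈ A₁).card : ℝ))
          * (b + ((Finset.univ.filter fun k => ω k ∈ A₂).card : ℝ))) ∂μ) = ∫ ω, f ω ∂μ := rfl
  rw [hIf]
  set I := ∫ ω, f ω ∂μ with hId
  have haN : ∀ ω, (0:ℝ) < a + (N₁ ω : ℝ) := fun ω => by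
    have : (0:ℝ) ≤ (N₁ ω : ℝ) := Nat.cast_nonneg _
    linarith
  have hbN : ∀ ω, (0:ℝ) < b + (N₂ ω : ℝ) := fun ω => by
    have : (0:ℝ) ≤ (N₂ ω : ℝ) := Nat.cast_nonneg _
    linarith
  have hfm : Measurable f := by
    have h1 : Measurable fun ω => (a + (N₁ ω:ℝ)) * (b + (N₂ ω:ℝ)) :=
      (measurable_const.add (measurable_from_nat.comp hN₁m)).mul
        (measurable_const.add (measurable_from_nat.comp hN₂m))
    simpa only [hfd, one_div, Pi.inv_def] using h1.inv
  set J := ∫⁻ ω, ENNReal.ofReal (f ω) ∂μ with hJd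
  -- the ω-integral for fixed t, s
  have hWle : ∀ t ∈ Set.Ioc (0:ℝ) 1, ∀ s ∈ Set.Ioc (0:ℝ) 1,
      (∫⁻ ω, ENNReal.ofReal (t^(a-1+(N₁ ω:ℝ))) * ENNReal.ofReal (s^(b-1+(N₂ ω:ℝ))) ∂μ)
        = ENNReal.ofReal ((t^(a-1) * s^(b-1)) * (1+(t-1)*p₁+(s-1)*p₂)^n) := by
    intro t ht s hs
    have hD0 : (0:ℝ) ≤ 1+(t-1)*p₁+(s-1)*p₂ := by nlinarith [ht.1, ht.2, hs.1, hs.2, hp₁pos, hp₂pos]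
    set g : α → ℝ := fun x => 1 + A₁.indicator (fun _ => t-1) x + A₂.indicator (fun _ => s-1) x
        with hgd
    have hg_ite : ∀ x, g x = if x ∈ A₁ then t else if x ∈ A₂ then s else 1 := by
      intro x
      by_cases h1 : x ∈ A₁
      · have h2 : x ∉ A₂ := fun h2 => (Set.disjoint_left.1 hdisj h1) h2
        simp [hgd, Set.indicator_of_mem h1, Set.indicator_of_notMem h2, h1, h2]
      · by_cases h2 : x ∈ A₂
        · simp [hgd, Set.indicator_of_notMem h1, Set.indicator_of_mem h2, h1, h2]
        · simp [hgd, Set.indicator_of_notMem h1, Set.indicator_of_notMem h2, h1, h2]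
    have hg0 : ∀ x, 0 ≤ g x := by
      intro x; rw [hg_ite]
      split_ifs
      · exact ht.1.le
      · exact hs.1.le
      · norm_num
    have hgi : Integrable g ν :=
      ((integrable_const 1).add ((integrable_const (t-1)).indicator hA₁)).add
        ((integrable_const (s-1)).indicator hA₂)
    have hgint : ∫ x, g x ∂ν = 1+(t-1)*p₁+(s-1)*p₂ := by
      have e : g = (fun _ => (1:ℝ)) + (A₁.indicator fun _ => t-1) + (A₂.indicator fun _ => s-1) := by
        funext x; simp [hgd]
      rw [e, integral_add' ((integrable_const 1).add ((integrable_const (t-1)).indicator hA₁))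
        ((integrable_const (s-1)).indicator hA₂),
        integral_add' (integrable_const 1) ((integrable_const (t-1)).indicator hA₁),
        integral_const, integral_indicator_const _ hA₁, integral_indicator_const _ hA₂]
      simp only [Measure.real, measure_univ, ENNReal.toReal_one, smul_eq_mul, one_smul]
      rw [← hp₁d, ← hp₂d]; ring
    have step1 : (∫⁻ ω, ENNReal.ofReal (t^(a-1+(N₁ ω:ℝ))) * ENNReal.ofReal (s^(b-1+(N₂ ω:ℝ))) ∂μ)
        = ∫⁻ ω, ENNReal.ofReal (t^(a-1) * s^(b-1)) * ENNReal.ofReal (∏ k, g (ω k)) ∂μ := by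
      apply lintegral_congr
      intro ω
      have e1 : t^(a-1+(N₁ ω:ℝ)) = t^(a-1) * t^(N₁ ω) := by
        rw [Real.rpow_add ht.1, Real.rpow_natCast]
      have e2 : s^(b-1+(N₂ ω:ℝ)) = s^(b-1) * s^(N₂ ω) := by
        rw [Real.rpow_add hs.1, Real.rpow_natCast]
      have e3 : ∏ k, g (ω k) = t ^ (N₁ ω) * s ^ (N₂ ω) := by
        rw [Finset.prod_congr rfl (fun k _ => hg_ite (ω k))]
        exact prod_ite_count A₁ A₂ hdisj t s ω
      have hn1 : (0:ℝ) ≤ t^(a-1) * t^(N₁ ω) :=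
        mul_nonneg (Real.rpow_nonneg ht.1.le _) (pow_nonneg ht.1.le _)
      have hn2 : (0:ℝ) ≤ t^(a-1) * s^(b-1) :=
        mul_nonneg (Real.rpow_nonneg ht.1.le _) (Real.rpow_nonneg hs.1.le _)
      rw [e1, e2, e3, ← ENNReal.ofReal_mul hn1, ← ENNReal.ofReal_mul hn2]
      congr 1; ring
    have hn3 : (0:ℝ) ≤ t^(a-1) * s^(b-1) :=
      mul_nonneg (Real.rpow_nonneg ht.1.le _) (Real.rpow_nonneg hs.1.le _)
    rw [step1, lintegral_const_mul' _ _ ENNReal.ofReal_ne_top]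
    rw [show (∫⁻ ω, ENNReal.ofReal (∏ k, g (ω k)) ∂μ)
        = ENNReal.ofReal (∫ x, g x ∂ν) ^ n from pi_lintegral_prod ν n g hgi hg0]
    rw [hgint, ← ENNReal.ofReal_pow hD0, ← ENNReal.ofReal_mul hn3]
  -- measurability for Fubini swaps
  have hmeas1 : Measurable (fun p : (Fin n → α) × ℝ =>
      ENNReal.ofReal (p.2 ^ (a - 1 + (N₁ p.1 : ℝ))) * ENNReal.ofReal (1/(b + (N₂ p.1 : ℝ)))) := by
    apply Measurable.fun_mul
    · exact ENNReal.measurable_ofReal.comp (measurable_snd.pow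
        (measurable_const.add ((measurable_from_nat.comp hN₁m).comp measurable_fst)))
    · exact (measurable_from_nat (f := fun k : ℕ => ENNReal.ofReal (1/(b + (k:ℝ))))).comp
        (hN₂m.comp measurable_fst)
  have hmeas2 : ∀ t : ℝ, Measurable (fun p : (Fin n → α) × ℝ =>
      ENNReal.ofReal (t ^ (a - 1 + (N₁ p.1 : ℝ))) * ENNReal.ofReal (p.2 ^ (b - 1 + (N₂ p.1 : ℝ)))) := by
    intro t
    apply Measurable.fun_mul
    · exact (measurable_from_nat (f := fun k : ℕ => ENNReal.ofReal (t ^ (a - 1 + (k:ℝ))))).comp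
        (hN₁m.comp measurable_fst)
    · exact ENNReal.measurable_ofReal.comp (measurable_snd.pow
        (measurable_const.add ((measurable_from_nat.comp hN₂m).comp measurable_fst)))
  -- representation of J as a double integral
  have hrep1 : J = ∫⁻ t in Set.Ioc (0:ℝ) 1, ∫⁻ ω,
      ENNReal.ofReal (t ^ (a-1+(N₁ ω:ℝ))) * ENNReal.ofReal (1/(b+(N₂ ω:ℝ))) ∂μ := by
    have h0 : J = ∫⁻ ω, (∫⁻ t in Set.Ioc (0:ℝ) 1,
        ENNReal.ofReal (t ^ (a-1+(N₁ ω:ℝ))) * ENNReal.ofReal (1/(b+(N₂ ω:ℝ)))) ∂μ := by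
      apply lintegral_congr
      intro ω
      rw [lintegral_mul_const' _ _ ENNReal.ofReal_ne_top,
        lint_rpow (a-1+(N₁ ω:ℝ)) (by linarith [(Nat.cast_nonneg (N₁ ω) : (0:ℝ) ≤ (N₁ ω:ℝ))]),
        show a - 1 + (N₁ ω:ℝ) + 1 = a + (N₁ ω:ℝ) from by ring,
        ← ENNReal.ofReal_mul (le_of_lt (one_div_pos.2 (haN ω))), one_div_mul_one_div]
    rw [h0]
    exact lintegral_lintegral_swap hmeas1.aemeasurable
  have hrep2 : J = ∫⁻ t in Set.Ioc (0:ℝ) 1, ∫⁻ s in Set.Ioc (0:ℝ) 1, ∫⁻ ω,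
      ENNReal.ofReal (t ^ (a-1+(N₁ ω:ℝ))) * ENNReal.ofReal (s ^ (b-1+(N₂ ω:ℝ))) ∂μ := by
    rw [hrep1]
    apply lintegral_congr
    intro t
    have h1 : (∫⁻ ω, ENNReal.ofReal (t ^ (a-1+(N₁ ω:ℝ))) * ENNReal.ofReal (1/(b+(N₂ ω:ℝ))) ∂μ)
        = ∫⁻ ω, (∫⁻ s in Set.Ioc (0:ℝ) 1,
            ENNReal.ofReal (t ^ (a-1+(N₁ ω:ℝ))) * ENNReal.ofReal (s ^ (b-1+(N₂ ω:ℝ)))) ∂μ := by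
      apply lintegral_congr
      intro ω
      rw [lintegral_const_mul' _ _ ENNReal.ofReal_ne_top,
        lint_rpow (b-1+(N₂ ω:ℝ)) (by linarith [(Nat.cast_nonneg (N₂ ω) : (0:ℝ) ≤ (N₂ ω:ℝ))]),
        show b - 1 + (N₂ ω:ℝ) + 1 = b + (N₂ ω:ℝ) from by ring]
    rw [h1]
    exact lintegral_lintegral_swap (hmeas2 t).aemeasurable
  -- lower bound
  have hKint : (∫⁻ t in Set.Ioc (0:ℝ) 1, ENNReal.ofReal (t^(a-1+(n:ℝ)*p₁)))
      = ENNReal.ofReal (1/K) := by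
    rw [lint_rpow _ (by linarith : (0:ℝ) ≤ a-1+(n:ℝ)*p₁),
      show a-1+(n:ℝ)*p₁+1 = K from by rw [hKd]; ring]
  have hLint : (∫⁻ s in Set.Ioc (0:ℝ) 1, ENNReal.ofReal (s^(b-1+(n:ℝ)*p₂)))
      = ENNReal.ofReal (1/L) := by
    rw [lint_rpow _ (by linarith : (0:ℝ) ≤ b-1+(n:ℝ)*p₂),
      show b-1+(n:ℝ)*p₂+1 = L from by rw [hLd]; ring]
  have hlowJ : ENNReal.ofReal (1/(K*L)) ≤ J := by
    have h0 : (∫⁻ t in Set.Ioc (0:ℝ) 1, ∫⁻ s in Set.Ioc (0:ℝ) 1,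
        ENNReal.ofReal (t^(a-1+(n:ℝ)*p₁)) * ENNReal.ofReal (s^(b-1+(n:ℝ)*p₂)))
        = ENNReal.ofReal (1/(K*L)) := by
      rw [lintegral_congr (fun t => lintegral_const_mul' _ _ ENNReal.ofReal_ne_top)]
      simp only [hLint]
      rw [lintegral_mul_const' _ _ ENNReal.ofReal_ne_top, hKint,
        ← ENNReal.ofReal_mul (le_of_lt (one_div_pos.2 hK0)), one_div_mul_one_div]
    rw [← h0, hrep2]
    apply setLIntegral_mono' measurableSet_Ioc
    intro t ht
    apply setLIntegral_mono' measurableSet_Ioc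
    intro s hs
    rw [hWle t ht s hs, ← ENNReal.ofReal_mul (Real.rpow_nonneg ht.1.le _)]
    apply ENNReal.ofReal_le_ofReal
    -- real inequality via weighted AM-GM
    have h3 : (0:ℝ) ≤ 1 - p₁ - p₂ := by linarith
    have hgm : t^p₁ * s^p₂ ≤ 1+(t-1)*p₁+(s-1)*p₂ := by
      have h4 := Real.geom_mean_le_arith_mean3_weighted hp₁pos.le hp₂pos.le h3 ht.1.le hs.1.le
        zero_le_one (by ring)
      rw [Real.one_rpow, mul_one] at h4
      have h5 : p₁*t+p₂*s+(1-p₁-p₂)*1 = 1+(t-1)*p₁+(s-1)*p₂ := by ring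
      linarith [h4, h5.le]
    have e1 : t ^ (a-1+(n:ℝ)*p₁) = t^(a-1) * (t^p₁)^n := by
      rw [Real.rpow_add ht.1, show (n:ℝ)*p₁ = p₁*(n:ℝ) from by ring,
        Real.rpow_mul ht.1.le, Real.rpow_natCast]
    have e2 : s ^ (b-1+(n:ℝ)*p₂) = s^(b-1) * (s^p₂)^n := by
      rw [Real.rpow_add hs.1, show (n:ℝ)*p₂ = p₂*(n:ℝ) from by ring,
        Real.rpow_mul hs.1.le, Real.rpow_natCast]
    have hDn : (t^p₁*s^p₂)^n ≤ (1+(t-1)*p₁+(s-1)*p₂)^n :=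
      pow_le_pow_left₀ (mul_nonneg (Real.rpow_nonneg ht.1.le _) (Real.rpow_nonneg hs.1.le _)) hgm n
    calc t ^ (a-1+(n:ℝ)*p₁) * s ^ (b-1+(n:ℝ)*p₂)
        = (t^(a-1) * s^(b-1)) * ((t^p₁*s^p₂)^n) := by rw [e1, e2]; ring
      _ ≤ (t^(a-1) * s^(b-1)) * ((1+(t-1)*p₁+(s-1)*p₂)^n) := by
          apply mul_le_mul_of_nonneg_left hDn
          exact mul_nonneg (Real.rpow_nonneg ht.1.le _) (Real.rpow_nonneg hs.1.le _)
  -- upper bound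
  have hupJ : J ≤ ENNReal.ofReal ((1+2/K)*(1/K)) * ENNReal.ofReal ((1+2/L)*(1/L)) := by
    rw [hrep2]
    calc (∫⁻ t in Set.Ioc (0:ℝ) 1, ∫⁻ s in Set.Ioc (0:ℝ) 1, ∫⁻ ω,
          ENNReal.ofReal (t ^ (a-1+(N₁ ω:ℝ))) * ENNReal.ofReal (s ^ (b-1+(N₂ ω:ℝ))) ∂μ)
        ≤ ∫⁻ t in Set.Ioc (0:ℝ) 1, ∫⁻ s in Set.Ioc (0:ℝ) 1,
            ENNReal.ofReal (t^(a-1) * Real.exp (-((n:ℝ)*p₁*(1-t))))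
            * ENNReal.ofReal (s^(b-1) * Real.exp (-((n:ℝ)*p₂*(1-s)))) := by
          apply setLIntegral_mono' measurableSet_Ioc
          intro t ht
          apply setLIntegral_mono' measurableSet_Ioc
          intro s hs
          rw [hWle t ht s hs,
            ← ENNReal.ofReal_mul (mul_nonneg (Real.rpow_nonneg ht.1.le _) ((Real.exp_pos _).le))]
          apply ENNReal.ofReal_le_ofReal
          have hD0 : (0:ℝ) ≤ 1+(t-1)*p₁+(s-1)*p₂ := by
            nlinarith [ht.1, ht.2, hs.1, hs.2, hp₁pos, hp₂pos]
          set x : ℝ := -(p₁*(1-t)) + -(p₂*(1-s)) with hxd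
          have hDx : 1+(t-1)*p₁+(s-1)*p₂ = x + 1 := by rw [hxd]; ring
          have hDexp : 1+(t-1)*p₁+(s-1)*p₂ ≤ Real.exp x := by
            rw [hDx]; exact Real.add_one_le_exp x
          have hDn : (1+(t-1)*p₁+(s-1)*p₂)^n ≤ (Real.exp x)^n := pow_le_pow_left₀ hD0 hDexp n
          have hexpn : (Real.exp x)^n
              = Real.exp (-((n:ℝ)*p₁*(1-t))) * Real.exp (-((n:ℝ)*p₂*(1-s))) := by
            rw [← Real.exp_nat_mul, ← Real.exp_add]
            congr 1
            rw [hxd]; ring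
          calc t^(a-1) * s^(b-1) * (1+(t-1)*p₁+(s-1)*p₂)^n
              ≤ t^(a-1) * s^(b-1) * ((Real.exp x)^n) := by
                apply mul_le_mul_of_nonneg_left hDn
                exact mul_nonneg (Real.rpow_nonneg ht.1.le _) (Real.rpow_nonneg hs.1.le _)
            _ = t^(a-1) * Real.exp (-((n:ℝ)*p₁*(1-t)))
                * (s^(b-1) * Real.exp (-((n:ℝ)*p₂*(1-s)))) := by rw [hexpn]; ring
      _ = ∫⁻ t in Set.Ioc (0:ℝ) 1, (ENNReal.ofReal (t^(a-1) * Real.exp (-((n:ℝ)*p₁*(1-t))))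
            * ∫⁻ s in Set.Ioc (0:ℝ) 1, ENNReal.ofReal (s^(b-1) * Real.exp (-((n:ℝ)*p₂*(1-s))))) :=
          lintegral_congr (fun t => lintegral_const_mul' _ _ ENNReal.ofReal_ne_top)
      _ ≤ ∫⁻ t in Set.Ioc (0:ℝ) 1, (ENNReal.ofReal (t^(a-1) * Real.exp (-((n:ℝ)*p₁*(1-t))))
            * ENNReal.ofReal ((1+2/L)*(1/L))) := by
          apply setLIntegral_mono' measurableSet_Ioc
          intro t _
          exact mul_le_mul_right (lint_upper b ((n:ℝ)*p₂) hb hnp₂) _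
      _ = (∫⁻ t in Set.Ioc (0:ℝ) 1, ENNReal.ofReal (t^(a-1) * Real.exp (-((n:ℝ)*p₁*(1-t)))))
            * ENNReal.ofReal ((1+2/L)*(1/L)) :=
          lintegral_mul_const' _ _ ENNReal.ofReal_ne_top
      _ ≤ ENNReal.ofReal ((1+2/K)*(1/K)) * ENNReal.ofReal ((1+2/L)*(1/L)) :=
          mul_le_mul_left (lint_upper a ((n:ℝ)*p₁) ha hnp₁) _
  -- convert to real statement
  have hJtop : J ≠ ⊤ :=
    ne_top_of_le_ne_top (ENNReal.mul_ne_top ENNReal.ofReal_ne_top ENNReal.ofReal_ne_top) hupJ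
  have hIJ : I = J.toReal := by
    rw [hId, hJd]
    apply integral_eq_lintegral_of_nonneg_ae
    · filter_upwards with ω
      have := mul_pos (haN ω) (hbN ω)
      rw [hfd]
      positivity
    · exact hfm.aestronglyMeasurable
  have hu0 : (0:ℝ) < 1/K := one_div_pos.2 hK0
  have hv0 : (0:ℝ) < 1/L := one_div_pos.2 hL0
  have hu1 : 1/K ≤ 1 := by rw [div_le_one hK0]; linarith
  have hv1 : 1/L ≤ 1 := by rw [div_le_one hL0]; linarith
  have hA0 : (0:ℝ) ≤ (1+2/K)*(1/K) := by
    have : (0:ℝ) < 2/K := div_pos two_pos hK0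
    nlinarith
  have hB0 : (0:ℝ) ≤ (1+2/L)*(1/L) := by
    have : (0:ℝ) < 2/L := div_pos two_pos hL0
    nlinarith
  have hlowR : 1/(K*L) ≤ I := by
    rw [hIJ]
    exact (ENNReal.ofReal_le_iff_le_toReal hJtop).1 hlowJ
  have hupR : I ≤ ((1+2/K)*(1/K))*((1+2/L)*(1/L)) := by
    rw [hIJ]
    apply ENNReal.toReal_le_of_le_ofReal (mul_nonneg hA0 hB0)
    rw [ENNReal.ofReal_mul hA0]
    exact hupJ
  have huv : 1/(K*L) = (1/K)*(1/L) := (one_div_mul_one_div K L).symm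
  clear_value K L I
  constructor
  · linarith only [hlowR]
  · rw [huv] at hlowR ⊢
    have harith := arith_final (1/K) (1/L) hu0 hv0 hu1 hv1
    have e : ((1+2/K)*(1/K))*((1+2/L)*(1/L))
        = ((1+2*(1/K))*(1/K))*((1+2*(1/L))*(1/L)) := by ring
    rw [e] at hupR
    linarith only [hupR, harith, hlowR]
end

section
/- Let P and P' be two overlapping measurable sets with p = P(X ∈ P), p' = P(X ∈ P'), and p_0 = P(X ∈ P ∩ P') > 0. Let X_1,…,X_n be i.i.d. copies of X, and N = #{i : X_i ∈ P}, N' = #{i : X_i ∈ P'}. Then for any a ≥ 1: 0 ≤ E[1/((a+N)(a+N'))] − 1/((a+np)(a+np')) ≤ C · [1/((a+np)(a+np'))] · [1/(a+np) + 1/(a+np')] for a universal constant C. -/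
open MeasureTheory
open scoped Classical

namespace Stmt7Aux


variable {α : Type} [MeasurableSpace α]

/-- product formula wrapper for an arbitrary probability measure -/
theorem prod_integral (ν : Measure α) [IsProbabilityMeasure ν] (n : ℕ)
    (f : Fin n → α → ℝ) :
    ∫ ω : Fin n → α, ∏ i, f i (ω i) ∂(Measure.pi fun _ => ν) = ∏ i, ∫ x, f i x ∂ν := by
  letI : MeasureSpace α := ⟨ν⟩
  rw [show (Measure.pi fun _ : Fin n => ν) = (volume : Measure (Fin n → α)) from
    (MeasureTheory.volume_pi).symm]
  exact MeasureTheory.integral_fintype_prod_eq_prod f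

theorem prod_integrable (ν : Measure α) [IsProbabilityMeasure ν] (n : ℕ)
    (f : Fin n → α → ℝ) (hf : ∀ i, Integrable (f i) ν) :
    Integrable (fun ω : Fin n → α => ∏ i, f i (ω i)) (Measure.pi fun _ => ν) := by
  letI : MeasureSpace α := ⟨ν⟩
  rw [show (Measure.pi fun _ : Fin n => ν) = (volume : Measure (Fin n → α)) from
    (MeasureTheory.volume_pi).symm]
  exact MeasureTheory.Integrable.fintype_prod hf



variable {α : Type} [MeasurableSpace α]

theorem integrable_ite_mem (ν : Measure α) [IsProbabilityMeasure ν] {P : Set α}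
    (hP : MeasurableSet P) (c d : ℝ) :
    Integrable (fun x => if x ∈ P then c else d) ν := by
  have : (fun x => if x ∈ P then c else d)
      = fun x => P.indicator (fun _ => c - d) x + d := by
    funext x
    by_cases h : x ∈ P <;> simp [Set.indicator, h]
  rw [this]
  exact ((integrable_const (c - d)).indicator hP).add (integrable_const d)

theorem integral_ite_mem (ν : Measure α) [IsProbabilityMeasure ν] {P : Set α}
    (hP : MeasurableSet P) (c d : ℝ) :
    ∫ x, (if x ∈ P then c else d) ∂ν = c * (ν P).toReal + d * (1 - (ν P).toReal) := by
  have : (fun x => if x ∈ P then c else d)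
      = fun x => P.indicator (fun _ => c - d) x + d := by
    funext x
    by_cases h : x ∈ P <;> simp [Set.indicator, h]
  rw [this, integral_add ((integrable_const (c - d)).indicator hP) (integrable_const d),
    integral_indicator_const _ hP, integral_const]
  have h1 : (ν Set.univ).toReal = 1 := by simp
  simp [smul_eq_mul]
  simp only [measureReal_def]
  ring



variable {α : Type} [MeasurableSpace α]

theorem integral_single (ν : Measure α) [IsProbabilityMeasure ν] {n : ℕ} (k : Fin n)
    (g : α → ℝ) :
    ∫ ω : Fin n → α, g (ω k) ∂(Measure.pi fun _ => ν) = ∫ x, g x ∂ν := by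
  letI : MeasureSpace α := ⟨ν⟩
  have h : ∀ ω : Fin n → α, g (ω k) = ∏ i, (fun x => if i = k then g x else 1) (ω i) := by
    intro ω
    rw [Finset.prod_eq_single k (fun i _ hik => by simp [hik]) (by simp)]
    simp
  calc ∫ ω : Fin n → α, g (ω k) ∂(Measure.pi fun _ => ν)
      = ∫ ω : Fin n → α, ∏ i, (fun x => if i = k then g x else 1) (ω i)
          ∂(Measure.pi fun _ => ν) := by simp_rw [h]
    _ = ∏ i, ∫ x, (if i = k then g x else 1) ∂ν := by
        exact prod_integral ν n (fun i x => if i = k then g x else 1)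
    _ = ∫ x, g x ∂ν := by
        rw [Finset.prod_eq_single k (fun i _ hik => by simp [hik]) (by simp)]
        simp

theorem integral_pair (ν : Measure α) [IsProbabilityMeasure ν] {n : ℕ} {j k : Fin n}
    (hjk : j ≠ k) (g h : α → ℝ) :
    ∫ ω : Fin n → α, g (ω j) * h (ω k) ∂(Measure.pi fun _ => ν)
      = (∫ x, g x ∂ν) * ∫ x, h x ∂ν := by
  set f : Fin n → α → ℝ := fun i x => (if i = j then g x else 1) * (if i = k then h x else 1)
    with hf
  have hpt : ∀ ω : Fin n → α, g (ω j) * h (ω k) = ∏ i, f i (ω i) := by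
    intro ω
    rw [hf]
    simp_rw [Finset.prod_mul_distrib]
    rw [Finset.prod_eq_single j (fun i _ hij => by simp [hij]) (by simp),
      Finset.prod_eq_single k (fun i _ hik => by simp [hik]) (by simp)]
    simp
  have hint : ∀ i, ∫ x, f i x ∂ν = (if i = j then ∫ x, g x ∂ν else 1)
      * (if i = k then ∫ x, h x ∂ν else 1) := by
    intro i
    rcases eq_or_ne i j with rfl | hij
    · simp [hf, if_neg hjk, if_neg (hjk ∘ Eq.symm)]
    · rcases eq_or_ne i k with rfl | hik
      · simp [hf, if_neg hij]
      · simp [hf, if_neg hij, if_neg hik]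
  calc ∫ ω : Fin n → α, g (ω j) * h (ω k) ∂(Measure.pi fun _ => ν)
      = ∫ ω : Fin n → α, ∏ i, f i (ω i) ∂(Measure.pi fun _ => ν) := by simp_rw [hpt]
    _ = ∏ i, ∫ x, f i x ∂ν := prod_integral ν n f
    _ = (∫ x, g x ∂ν) * ∫ x, h x ∂ν := by
        simp_rw [hint]
        rw [Finset.prod_mul_distrib,
          Finset.prod_eq_single j (fun i _ hij => by simp [hij]) (by simp),
          Finset.prod_eq_single k (fun i _ hik => by simp [hik]) (by simp)]
        simp



theorem integrable_of_bdd {β : Type*} [MeasurableSpace β] {μ : Measure β} [IsFiniteMeasure μ]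
    {f : β → ℝ} (hm : Measurable f) (C : ℝ) (hC : ∀ x, |f x| ≤ C) : Integrable f μ :=
  Integrable.mono' (integrable_const C) hm.aestronglyMeasurable (Filter.Eventually.of_forall hC)

theorem cnt_sum (n : ℕ) (P : Set α) (ω : Fin n → α) :
    ((Finset.univ.filter fun k => ω k ∈ P).card : ℝ)
      = ∑ k : Fin n, if ω k ∈ P then (1:ℝ) else 0 := by
  rw [Finset.card_filter]
  push_cast
  exact Finset.sum_congr rfl fun k _ => by split <;> norm_num

theorem cnt_prod (n : ℕ) (P : Set α) (ω : Fin n → α) :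
    (1/2:ℝ) ^ ((Finset.univ.filter fun k => ω k ∈ P).card)
      = ∏ k : Fin n, if ω k ∈ P then (1/2:ℝ) else 1 := by
  rw [Finset.prod_ite, Finset.prod_const, Finset.prod_const, one_pow, mul_one]

theorem measurable_cnt (n : ℕ) {P : Set α} (hP : MeasurableSet P) :
    Measurable fun ω : Fin n → α => ((Finset.univ.filter fun k => ω k ∈ P).card : ℝ) := by
  simp_rw [cnt_sum]
  exact Finset.measurable_sum _ fun k _ =>
    Measurable.ite ((measurable_pi_apply k) hP) measurable_const measurable_const

theorem measurable_cnt_nat (n : ℕ) {P : Set α} (hP : MeasurableSet P) :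
    Measurable fun ω : Fin n → α => ((Finset.univ.filter fun k => ω k ∈ P).card) := by
  have : (fun ω : Fin n → α => ((Finset.univ.filter fun k => ω k ∈ P).card))
      = fun ω => ∑ k : Fin n, if ω k ∈ P then 1 else 0 := by
    funext ω; rw [Finset.card_filter]
  rw [this]
  exact Finset.measurable_sum _ fun k _ =>
    Measurable.ite ((measurable_pi_apply k) hP) measurable_const measurable_const

theorem cnt_le (n : ℕ) (P : Set α) (ω : Fin n → α) :
    ((Finset.univ.filter fun k => ω k ∈ P).card : ℝ) ≤ n := by
  have := Finset.card_filter_le (Finset.univ : Finset (Fin n)) (fun k => ω k ∈ P)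
  exact_mod_cast le_trans (Nat.cast_le.2 this) (by simp)

theorem integral_cnt (ν : Measure α) [IsProbabilityMeasure ν] (n : ℕ) {P : Set α}
    (hP : MeasurableSet P) :
    ∫ ω : Fin n → α, ((Finset.univ.filter fun k => ω k ∈ P).card : ℝ)
      ∂(Measure.pi fun _ => ν) = n * (ν P).toReal := by
  simp_rw [cnt_sum]
  rw [integral_finset_sum]
  · have : ∀ k : Fin n, ∫ ω : Fin n → α, (if ω k ∈ P then (1:ℝ) else 0)
        ∂(Measure.pi fun _ => ν) = (ν P).toReal := by
      intro k
      rw [integral_single ν k (fun x => if x ∈ P then (1:ℝ) else 0),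
        integral_ite_mem ν hP 1 0]
      ring
    simp_rw [this, Finset.sum_const, Finset.card_univ, Fintype.card_fin, nsmul_eq_mul]
  · intro k _
    exact integrable_of_bdd (Measurable.ite ((measurable_pi_apply k) hP) measurable_const
      measurable_const) 1 (fun ω => by split <;> norm_num)

theorem integral_half_cnt (ν : Measure α) [IsProbabilityMeasure ν] (n : ℕ) {P : Set α}
    (hP : MeasurableSet P) :
    ∫ ω : Fin n → α, (1/2:ℝ) ^ ((Finset.univ.filter fun k => ω k ∈ P).card)
      ∂(Measure.pi fun _ => ν) = (1 - (ν P).toReal / 2) ^ n := by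
  simp_rw [cnt_prod]
  rw [prod_integral ν n (fun _ x => if x ∈ P then (1/2:ℝ) else 1)]
  rw [Finset.prod_const, Finset.card_univ, Fintype.card_fin,
    integral_ite_mem ν hP (1/2) 1]
  ring_nf

theorem integrable_cnt (ν : Measure α) [IsProbabilityMeasure ν] (n : ℕ) {P : Set α}
    (hP : MeasurableSet P) :
    Integrable (fun ω : Fin n → α => ((Finset.univ.filter fun k => ω k ∈ P).card : ℝ))
      (Measure.pi fun _ => ν) :=
  integrable_of_bdd (measurable_cnt n hP) n fun ω => by
    rw [abs_of_nonneg (by positivity)]; exact cnt_le n P ω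

theorem integral_cnt_sq (ν : Measure α) [IsProbabilityMeasure ν] (n : ℕ) {P : Set α}
    (hP : MeasurableSet P) :
    ∫ ω : Fin n → α, (((Finset.univ.filter fun k => ω k ∈ P).card : ℝ)) ^ 2
      ∂(Measure.pi fun _ => ν)
      = n * (ν P).toReal + (n^2 - n) * (ν P).toReal ^ 2 := by
  set p := (ν P).toReal with hp
  have key : ∀ ω : Fin n → α, (((Finset.univ.filter fun k => ω k ∈ P).card : ℝ)) ^ 2
      = ∑ j : Fin n, ∑ k : Fin n,
          (if ω j ∈ P then (1:ℝ) else 0) * (if ω k ∈ P then (1:ℝ) else 0) := by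
    intro ω
    rw [cnt_sum, sq, Finset.sum_mul_sum]
  simp_rw [key]
  have hI : ∀ j k : Fin n, Integrable (fun ω : Fin n → α =>
      (if ω j ∈ P then (1:ℝ) else 0) * (if ω k ∈ P then (1:ℝ) else 0))
      (Measure.pi fun _ => ν) := by
    intro j k
    refine integrable_of_bdd (Measurable.mul ?_ ?_) 1 (fun ω => ?_)
    · exact Measurable.ite ((measurable_pi_apply j) hP) measurable_const measurable_const
    · exact Measurable.ite ((measurable_pi_apply k) hP) measurable_const measurable_const
    · split <;> split <;> norm_num
  have hval : ∀ j k : Fin n, (∫ ω : Fin n → α,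
      (if ω j ∈ P then (1:ℝ) else 0) * (if ω k ∈ P then (1:ℝ) else 0)
      ∂(Measure.pi fun _ => ν)) = if j = k then p else p^2 := by
    intro j k
    rcases eq_or_ne j k with rfl | hjk
    · have : ∀ ω : Fin n → α, (if ω j ∈ P then (1:ℝ) else 0) * (if ω j ∈ P then (1:ℝ) else 0)
          = (if ω j ∈ P then (1:ℝ) else 0) := by intro ω; split <;> norm_num
      simp_rw [this]
      rw [integral_single ν j (fun x => if x ∈ P then (1:ℝ) else 0), integral_ite_mem ν hP 1 0]
      simp [hp]
    · rw [integral_pair ν hjk (fun x => if x ∈ P then (1:ℝ) else 0)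
        (fun x => if x ∈ P then (1:ℝ) else 0), integral_ite_mem ν hP 1 0]
      simp [hjk, sq, hp]
  rw [integral_finset_sum _ (fun j _ => integrable_finset_sum _ (fun k _ => hI j k))]
  have : ∀ j : Fin n, (∫ ω : Fin n → α, ∑ k : Fin n,
      (if ω j ∈ P then (1:ℝ) else 0) * (if ω k ∈ P then (1:ℝ) else 0)
      ∂(Measure.pi fun _ => ν)) = ∑ k : Fin n, if j = k then p else p^2 := by
    intro j
    rw [integral_finset_sum _ (fun k _ => hI j k)]
    exact Finset.sum_congr rfl fun k _ => hval j k
  simp_rw [this]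
  have hone : ∀ j : Fin n, (∑ k : Fin n, if j = k then p else p^2)
      = n * p^2 + (p - p^2) := by
    intro j
    have : ∀ k : Fin n, (if j = k then p else p^2)
        = p^2 + (if j = k then p - p^2 else 0) := fun k => by split <;> ring
    simp_rw [this]
    rw [Finset.sum_add_distrib, Finset.sum_const, Finset.sum_ite_eq
      (Finset.univ : Finset (Fin n)) j (fun _ => p - p^2)]
    simp [mul_comm]
  simp_rw [hone]
  rw [Finset.sum_const, Finset.card_univ, Fintype.card_fin, nsmul_eq_mul]
  ring

theorem p_le_one (ν : Measure α) [IsProbabilityMeasure ν] (P : Set α) :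
    (ν P).toReal ≤ 1 := by
  have h : ν P ≤ 1 := prob_le_one
  simpa using ENNReal.toReal_mono ENNReal.one_ne_top h

theorem integrable_cnt_sq (ν : Measure α) [IsProbabilityMeasure ν] (n : ℕ) {P : Set α}
    (hP : MeasurableSet P) (t : ℝ) :
    Integrable (fun ω : Fin n → α => (t - ((Finset.univ.filter fun k => ω k ∈ P).card : ℝ))^2)
      (Measure.pi fun _ => ν) := by
  refine integrable_of_bdd ((measurable_const.sub (measurable_cnt n hP)).pow_const 2)
    ((|t| + n)^2) (fun ω => ?_)
  rw [abs_of_nonneg (sq_nonneg _)]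
  have h1 : (0:ℝ) ≤ ((Finset.univ.filter fun k => ω k ∈ P).card : ℝ) := Nat.cast_nonneg _
  have h2 := cnt_le n P ω
  have h3 : |t - ((Finset.univ.filter fun k => ω k ∈ P).card : ℝ)| ≤ |t| + n := by
    rw [abs_sub_comm]
    calc |((Finset.univ.filter fun k => ω k ∈ P).card : ℝ) - t|
        ≤ |((Finset.univ.filter fun k => ω k ∈ P).card : ℝ)| + |t| := abs_sub _ _
      _ ≤ n + |t| := by rw [abs_of_nonneg h1]; linarith
      _ = |t| + n := by ring
    
  calc (t - ((Finset.univ.filter fun k => ω k ∈ P).card : ℝ))^2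
      = |t - ((Finset.univ.filter fun k => ω k ∈ P).card : ℝ)|^2 := (sq_abs _).symm
    _ ≤ (|t| + n)^2 := by
        apply pow_le_pow_left₀ (abs_nonneg _) h3

theorem var_le (ν : Measure α) [IsProbabilityMeasure ν] (n : ℕ) {P : Set α}
    (hP : MeasurableSet P) :
    ∫ ω : Fin n → α,
      ((n:ℝ) * (ν P).toReal - ((Finset.univ.filter fun k => ω k ∈ P).card : ℝ))^2
      ∂(Measure.pi fun _ => ν) ≤ n * (ν P).toReal := by
  set p := (ν P).toReal with hp
  have hp0 : 0 ≤ p := ENNReal.toReal_nonneg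
  set t : ℝ := n * p with htdef
  have hexp : ∀ ω : Fin n → α,
      (t - ((Finset.univ.filter fun k => ω k ∈ P).card : ℝ))^2
      = ((Finset.univ.filter fun k => ω k ∈ P).card : ℝ)^2
        - 2 * t * ((Finset.univ.filter fun k => ω k ∈ P).card : ℝ) + t^2 := by
    intro ω; ring
  simp_rw [hexp]
  have hIsq : Integrable (fun ω : Fin n → α =>
      ((Finset.univ.filter fun k => ω k ∈ P).card : ℝ)^2) (Measure.pi fun _ => ν) := by
    have := integrable_cnt_sq ν n hP 0
    simpa using this
  have hIc := integrable_cnt ν n hP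
  rw [integral_add (f := fun ω : Fin n → α =>
      ((Finset.univ.filter fun k => ω k ∈ P).card : ℝ)^2
        - 2 * t * ((Finset.univ.filter fun k => ω k ∈ P).card : ℝ))
      (g := fun _ => t^2) (hIsq.sub (hIc.const_mul (2*t))) (integrable_const _),
    integral_sub hIsq (hIc.const_mul (2*t)), MeasureTheory.integral_const_mul,
    integral_cnt ν n hP, integral_cnt_sq ν n hP, integral_const]
  simp only [measure_univ, ENNReal.toReal_one, probReal_univ, smul_eq_mul, one_mul]
  rw [← hp, htdef]
  nlinarith [sq_nonneg ((n:ℝ) * p), mul_nonneg (Nat.cast_nonneg (α := ℝ) n) (sq_nonneg p)]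

/-- the Chernoff exponent -/
noncomputable def c0 : ℝ := (1 - Real.log 2) / 2

theorem c0_pos : 0 < c0 := by
  have h := Real.log_two_lt_d9
  unfold c0
  norm_num
  linarith

theorem exp_pow_bound {x : ℝ} (hx : 0 ≤ x) (m : ℕ) (hm : 0 < m) :
    x^m * Real.exp (-x) ≤ (m:ℝ)^m := by
  have hm' : (0:ℝ) < m := Nat.cast_pos.2 hm
  have h2 : Real.exp x = (Real.exp (x/m))^m := by
    rw [← Real.exp_nat_mul]
    congr 1
    field_simp
  have h1 : (x/m)^m ≤ Real.exp x := by
    rw [h2]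
    apply pow_le_pow_left₀ (by positivity)
    linarith [Real.add_one_le_exp (x/m), div_nonneg hx hm'.le]
  rw [Real.exp_neg, ← div_eq_mul_inv, div_le_iff₀ (Real.exp_pos x)]
  calc x^m = (x/m)^m * (m:ℝ)^m := by
        rw [div_pow, div_mul_cancel₀]
        positivity
    _ ≤ Real.exp x * (m:ℝ)^m := by
        apply mul_le_mul_of_nonneg_right h1 (by positivity)
    _ = (m:ℝ)^m * Real.exp x := by ring

theorem half_cnt_tail (ν : Measure α) [IsProbabilityMeasure ν] (n : ℕ) {P : Set α}
    (hP : MeasurableSet P) :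
    (2:ℝ) ^ (((n:ℝ) * (ν P).toReal)/2) * ∫ ω : Fin n → α,
      (1/2:ℝ) ^ ((Finset.univ.filter fun k => ω k ∈ P).card)
      ∂(Measure.pi fun _ => ν) ≤ Real.exp (-(c0 * ((n:ℝ) * (ν P).toReal))) := by
  set p := (ν P).toReal with hpdef
  have hp0 : 0 ≤ p := ENNReal.toReal_nonneg
  have hp1 : p ≤ 1 := p_le_one ν P
  set t : ℝ := n * p with htdef
  have ht0 : 0 ≤ t := by positivity
  rw [integral_half_cnt ν n hP]
  have h1 : (1 - p/2 : ℝ)^n ≤ Real.exp (-(t/2)) := by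
    have : (1 - p/2 : ℝ) ≤ Real.exp (-(p/2)) := by
      linarith [Real.add_one_le_exp (-(p/2))]
    calc (1 - p/2 : ℝ)^n ≤ (Real.exp (-(p/2)))^n :=
          pow_le_pow_left₀ (by linarith) this n
      _ = Real.exp (-(t/2)) := by
          rw [← Real.exp_nat_mul]
          congr 1
          rw [htdef]; ring
  have h2 : (2:ℝ) ^ (t/2) = Real.exp (t/2 * Real.log 2) := by
    rw [Real.rpow_def_of_pos (by norm_num)]
    ring_nf
  calc (2:ℝ) ^ (t/2) * (1 - p/2 : ℝ)^n
      ≤ (2:ℝ) ^ (t/2) * Real.exp (-(t/2)) := by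
        apply mul_le_mul_of_nonneg_left h1 (by positivity)
    _ = Real.exp (-(c0 * t)) := by
        rw [h2, ← Real.exp_add]
        congr 1
        unfold c0
        ring

section Abstract

variable {Ω : Type} [MeasurableSpace Ω] (μ : Measure Ω) [IsProbabilityMeasure μ]

theorem half_pow_prop (M : Ω → ℕ) (hM : Measurable M) :
    Integrable (fun ω => (1/2:ℝ)^(M ω)) μ := by
  refine integrable_of_bdd (measurable_const.pow hM) 1 (fun ω => ?_)
  rw [abs_of_nonneg (by positivity)]
  exact pow_le_one₀ (by norm_num) (by norm_num)

theorem key_pointwise (t a : ℝ) (ht : 0 < t) (ha : 1 ≤ a) (x : ℕ) (m : ℕ) (hm : 1 ≤ m) :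
    (t - (x:ℝ))^2 / (a + x)^m ≤ (2/t)^m * (t - x)^2 + (t^2 * (2:ℝ)^(t/2)) * (1/2:ℝ)^x := by
  have hx0 : (0:ℝ) ≤ x := Nat.cast_nonneg x
  have hden : (1:ℝ) ≤ (a + x)^m := one_le_pow₀ (by linarith)
  by_cases hN : t/2 ≤ (x:ℝ)
  · have hd2 : (t/2)^m ≤ (a + x)^m := pow_le_pow_left₀ (by linarith) (by linarith) m
    have h1 : (t - (x:ℝ))^2 / (a + x)^m ≤ (t - x)^2 / (t/2)^m :=
      div_le_div_of_nonneg_left (sq_nonneg _) (by positivity) hd2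
    have h2 : (t - (x:ℝ))^2 / (t/2)^m = (2/t)^m * (t - x)^2 := by
      rw [div_eq_mul_inv, ← inv_pow, inv_div, mul_comm]
    have h3 : 0 ≤ (t^2 * (2:ℝ)^(t/2)) * (1/2:ℝ)^x := by positivity
    rw [h2] at h1
    linarith
  · push_neg at hN
    have h1 : (t - (x:ℝ))^2 / (a + x)^m ≤ (t - x)^2 :=
      div_le_self (sq_nonneg _) hden
    have h2 : (t - (x:ℝ))^2 ≤ t^2 := by nlinarith
    have h3 : (1:ℝ) ≤ (2:ℝ)^(t/2) * (1/2:ℝ)^x := by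
      have e1 : (1/2:ℝ)^x = (2:ℝ)^(-(x:ℝ)) := by
        rw [Real.rpow_neg (by norm_num : (0:ℝ) ≤ 2), Real.rpow_natCast, one_div, inv_pow]
      rw [e1, ← Real.rpow_add (by norm_num)]
      have : (0:ℝ) ≤ t/2 - x := by linarith
      calc (1:ℝ) = (2:ℝ)^(0:ℝ) := by simp
        _ ≤ (2:ℝ)^(t/2 + -(x:ℝ)) := by
            apply Real.rpow_le_rpow_of_exponent_le (by norm_num)
            linarith
    have h4 : 0 ≤ (2/t)^m * (t - x)^2 := by positivity
    calc (t - (x:ℝ))^2 / (a + x)^m ≤ t^2 := le_trans h1 h2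
      _ = t^2 * 1 := by ring
      _ ≤ t^2 * ((2:ℝ)^(t/2) * (1/2:ℝ)^x) := by
          apply mul_le_mul_of_nonneg_left h3 (sq_nonneg t)
      _ = (t^2 * (2:ℝ)^(t/2)) * (1/2:ℝ)^x := by ring
      _ ≤ _ := by linarith

end Abstract
section Abstract2

variable {Ω : Type} [MeasurableSpace Ω] (μ : Measure Ω) [IsProbabilityMeasure μ]
variable (M : Ω → ℕ) (n : ℕ) (t a : ℝ)

theorem integrable_ratio (hM : Measurable M) (ht0 : 0 ≤ t) (ha : 1 ≤ a)
    (hle : ∀ ω, (M ω : ℝ) ≤ n) (m : ℕ) :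
    Integrable (fun ω => (t - (M ω : ℝ))^2 / (a + M ω)^m) μ := by
  have hmeas : Measurable fun ω => (M ω : ℝ) := measurable_from_top.comp hM
  refine integrable_of_bdd (((measurable_const.sub hmeas).pow_const 2).div
    ((measurable_const.add hmeas).pow_const m)) ((t + n)^2) (fun ω => ?_)
  have h0 : (0:ℝ) ≤ M ω := Nat.cast_nonneg _
  have hden : (1:ℝ) ≤ (a + M ω)^m := one_le_pow₀ (by linarith)
  rw [abs_of_nonneg (by positivity)]
  calc (t - (M ω : ℝ))^2 / (a + M ω)^m ≤ (t - (M ω : ℝ))^2 :=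
        div_le_self (sq_nonneg _) hden
    _ ≤ (t + n)^2 := by nlinarith [hle ω]

theorem integrable_sq' (hM : Measurable M) (ht0 : 0 ≤ t) (ha : 1 ≤ a)
    (hle : ∀ ω, (M ω : ℝ) ≤ n) :
    Integrable (fun ω => (t - (M ω : ℝ))^2) μ := by
  have h := integrable_ratio μ M n t a hM ht0 ha hle 0
  simpa using h

theorem main_est (hM : Measurable M) (ht : 0 < t) (ha : 1 ≤ a)
    (hle : ∀ ω, (M ω : ℝ) ≤ n) (m : ℕ) (hm : 1 ≤ m)
    (hvar : ∫ ω, (t - (M ω : ℝ))^2 ∂μ ≤ t)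
    (htail : (2:ℝ)^(t/2) * ∫ ω, (1/2:ℝ)^(M ω) ∂μ ≤ Real.exp (-(c0 * t))) :
    ∫ ω, (t - (M ω : ℝ))^2 / (a + M ω)^m ∂μ
      ≤ (2/t)^m * t + t^2 * Real.exp (-(c0 * t)) := by
  have hIf := integrable_ratio μ M n t a hM ht.le ha hle m
  have hIsq := integrable_sq' μ M n t a hM ht.le ha hle
  have hIhalf := half_pow_prop μ M hM
  have hg : Integrable (fun ω => (2/t)^m * (t - (M ω : ℝ))^2
      + (t^2 * (2:ℝ)^(t/2)) * (1/2:ℝ)^(M ω)) μ :=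
    (hIsq.const_mul _).add (hIhalf.const_mul _)
  have hmono : ∫ ω, (t - (M ω : ℝ))^2 / (a + M ω)^m ∂μ
      ≤ ∫ ω, ((2/t)^m * (t - (M ω : ℝ))^2 + (t^2 * (2:ℝ)^(t/2)) * (1/2:ℝ)^(M ω)) ∂μ :=
    integral_mono hIf hg (fun ω => key_pointwise t a ht ha (M ω) m hm)
  have hsplit : ∫ ω, ((2/t)^m * (t - (M ω : ℝ))^2 + (t^2 * (2:ℝ)^(t/2)) * (1/2:ℝ)^(M ω)) ∂μ
      = (2/t)^m * (∫ ω, (t - (M ω : ℝ))^2 ∂μ)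
        + (t^2 * (2:ℝ)^(t/2)) * ∫ ω, (1/2:ℝ)^(M ω) ∂μ := by
    rw [integral_add (hIsq.const_mul _) (hIhalf.const_mul _),
      MeasureTheory.integral_const_mul, MeasureTheory.integral_const_mul]
  have hhalf0 : 0 ≤ ∫ ω, (1/2:ℝ)^(M ω) ∂μ :=
    integral_nonneg (fun ω => by positivity)
  have h1 : (2/t)^m * (∫ ω, (t - (M ω : ℝ))^2 ∂μ) ≤ (2/t)^m * t :=
    mul_le_mul_of_nonneg_left hvar (by positivity)
  have h2 : (t^2 * (2:ℝ)^(t/2)) * ∫ ω, (1/2:ℝ)^(M ω) ∂μ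
      ≤ t^2 * Real.exp (-(c0 * t)) := by
    calc (t^2 * (2:ℝ)^(t/2)) * ∫ ω, (1/2:ℝ)^(M ω) ∂μ
        = t^2 * ((2:ℝ)^(t/2) * ∫ ω, (1/2:ℝ)^(M ω) ∂μ) := by ring
      _ ≤ t^2 * Real.exp (-(c0 * t)) := mul_le_mul_of_nonneg_left htail (sq_nonneg t)
  linarith [hmono, hsplit ▸ hmono]

end Abstract2
section Abstract3

variable {Ω : Type} [MeasurableSpace Ω] (μ : Measure Ω) [IsProbabilityMeasure μ]
variable (M : Ω → ℕ) (n : ℕ) (t a : ℝ)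

theorem B1_abstract (hM : Measurable M) (ht0 : 0 ≤ t) (ha : 1 ≤ a)
    (hle : ∀ ω, (M ω : ℝ) ≤ n)
    (hvar : ∫ ω, (t - (M ω : ℝ))^2 ∂μ ≤ t)
    (htail : (2:ℝ)^(t/2) * ∫ ω, (1/2:ℝ)^(M ω) ∂μ ≤ Real.exp (-(c0 * t))) :
    ∫ ω, (t - (M ω : ℝ))^2 / (a + M ω) ∂μ ≤ 2 + 4 / c0^2 := by
  have hc := c0_pos
  have hrw : (fun ω => (t - (M ω : ℝ))^2 / (a + M ω))
      = fun ω => (t - (M ω : ℝ))^2 / (a + M ω)^1 := by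
    funext ω; rw [pow_one]
  by_cases ht : t ≤ 2
  · have hmono : ∫ ω, (t - (M ω : ℝ))^2 / (a + M ω) ∂μ
        ≤ ∫ ω, (t - (M ω : ℝ))^2 ∂μ := by
      rw [hrw]
      refine integral_mono (integrable_ratio μ M n t a hM ht0 ha hle 1)
        (integrable_sq' μ M n t a hM ht0 ha hle) (fun ω => ?_)
      have h0 : (0:ℝ) ≤ M ω := Nat.cast_nonneg _
      exact div_le_self (sq_nonneg _) (one_le_pow₀ (by linarith))
    have : 0 ≤ 4 / c0^2 := by positivity
    linarith
  · push_neg at ht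
    have ht' : 0 < t := by linarith
    have hest := main_est μ M n t a hM ht' ha hle 1 le_rfl hvar htail
    rw [← hrw] at hest
    have e1 : (2/t)^1 * t = 2 := by field_simp
    have e2 : t^2 * Real.exp (-(c0 * t)) ≤ 4 / c0^2 := by
      have hb := exp_pow_bound (mul_nonneg hc.le ht0) 2 (by norm_num)
      norm_num at hb
      rw [le_div_iff₀ (by positivity)]
      have he : t^2 * Real.exp (-(c0 * t)) * c0^2 = (c0*t)^2 * Real.exp (-(c0*t)) := by ring
      linarith [he ▸ le_refl (t^2 * Real.exp (-(c0 * t)) * c0^2), hb, he]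
    rw [e1] at hest
    linarith

theorem B2_abstract (hM : Measurable M) (ht0 : 0 ≤ t) (ha : 1 ≤ a)
    (hle : ∀ ω, (M ω : ℝ) ≤ n)
    (hvar : ∫ ω, (t - (M ω : ℝ))^2 ∂μ ≤ t)
    (htail : (2:ℝ)^(t/2) * ∫ ω, (1/2:ℝ)^(M ω) ∂μ ≤ Real.exp (-(c0 * t))) :
    ∫ ω, (t - (M ω : ℝ))^2 / (a + M ω)^2 ∂μ ≤ (10 + 54 / c0^3) / (a + t) := by
  have hc := c0_pos
  have hat : (0:ℝ) < a + t := by linarith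
  have hC2 : (0:ℝ) < 10 + 54 / c0^3 := by positivity
  by_cases hta : t ≤ a
  · have hmono : ∫ ω, (t - (M ω : ℝ))^2 / (a + M ω)^2 ∂μ
        ≤ ∫ ω, (1/a^2) * (t - (M ω : ℝ))^2 ∂μ := by
      refine integral_mono (integrable_ratio μ M n t a hM ht0 ha hle 2)
        ((integrable_sq' μ M n t a hM ht0 ha hle).const_mul _) (fun ω => ?_)
      have h0 : (0:ℝ) ≤ M ω := Nat.cast_nonneg _
      have : a^2 ≤ (a + M ω)^2 := pow_le_pow_left₀ (by linarith) (by linarith) 2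
      rw [one_div, inv_mul_eq_div]
      exact div_le_div_of_nonneg_left (sq_nonneg _) (by positivity) this
    rw [MeasureTheory.integral_const_mul] at hmono
    have h2 : (1/a^2) * (∫ ω, (t - (M ω : ℝ))^2 ∂μ) ≤ (1/a^2) * t :=
      mul_le_mul_of_nonneg_left hvar (by positivity)
    have h3 : (1/a^2) * t ≤ 2 / (a + t) := by
      rw [one_div, inv_mul_eq_div, div_le_div_iff₀ (by positivity) hat]
      nlinarith
    have h4 : (2:ℝ) / (a + t) ≤ (10 + 54 / c0^3) / (a + t) := by
      have h5 : (0:ℝ) ≤ 54 / c0^3 := by positivity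
      rw [div_le_div_iff₀ hat hat]
      nlinarith
    linarith
  · push_neg at hta
    have ht' : 0 < t := by linarith
    have hest := main_est μ M n t a hM ht' ha hle 2 (by norm_num) hvar htail
    have e1 : (2/t)^2 * t = 4 / t := by field_simp; ring
    have e2 : t^2 * Real.exp (-(c0 * t)) ≤ 27 / (c0^3 * t) := by
      have hb := exp_pow_bound (mul_nonneg hc.le ht0) 3 (by norm_num)
      norm_num at hb
      rw [le_div_iff₀ (by positivity)]
      have he : t^2 * Real.exp (-(c0 * t)) * (c0^3 * t) = (c0*t)^3 * Real.exp (-(c0*t)) := by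
        ring
      linarith [he ▸ le_refl (t^2 * Real.exp (-(c0 * t)) * (c0^3*t)), hb]
    have e3 : 4 / t + 27 / (c0^3 * t) ≤ (10 + 54 / c0^3) / (a + t) := by
      have h2t : a + t ≤ 2 * t := by linarith
      have ha1 : 4 / t ≤ 8 / (a+t) := by
        rw [div_le_div_iff₀ ht' hat]; nlinarith
      have ha2 : 27 / (c0^3 * t) ≤ (54 / c0^3) / (a+t) := by
        rw [div_le_div_iff₀ (by positivity) hat]
        have hrs : 54 / c0^3 * (c0^3 * t) = 54 * t := by
          field_simp
        rw [hrs]; nlinarith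
        
      have ha3 : 8 / (a+t) + (54 / c0^3) / (a+t) = (8 + 54 / c0^3) / (a+t) :=
        (add_div 8 (54 / c0^3) (a+t)).symm
      have ha4 : (8 + 54 / c0^3) / (a+t) ≤ (10 + 54 / c0^3) / (a+t) := by
        rw [div_le_div_iff₀ hat hat]; nlinarith
      linarith
    rw [e1] at hest
    linarith

end Abstract3
theorem amgm3 (u v ub vb : ℝ) (hu : 0 < u) (hv : 0 < v) (hub : 0 < ub) (hvb : 0 < vb) :
    3*(u*v*ub*vb) ≤ ub^2*vb^2 + u^2*(v*vb) + u*(v^2*ub) := by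
  have h := Real.geom_mean_le_arith_mean3_weighted (by norm_num : (0:ℝ) ≤ 1/3)
    (by norm_num : (0:ℝ) ≤ 1/3) (by norm_num : (0:ℝ) ≤ 1/3)
    (by positivity : (0:ℝ) ≤ ub^2*vb^2) (by positivity : (0:ℝ) ≤ u^2*(v*vb))
    (by positivity : (0:ℝ) ≤ u*(v^2*ub)) (by norm_num)
  have hgm : (ub^2*vb^2) ^ ((1:ℝ)/3) * (u^2*(v*vb)) ^ ((1:ℝ)/3) * (u*(v^2*ub)) ^ ((1:ℝ)/3)
      = u*v*ub*vb := by
    rw [← Real.mul_rpow (by positivity) (by positivity),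
      ← Real.mul_rpow (by positivity) (by positivity)]
    have : ub^2*vb^2 * (u^2*(v*vb)) * (u*(v^2*ub)) = (u*v*ub*vb)^(3:ℕ) := by ring
    rw [this, ← Real.rpow_natCast (u*v*ub*vb) 3, ← Real.rpow_mul (by positivity)]
    norm_num
  rw [hgm] at h
  linarith

theorem tangent_pointwise (u v ub vb : ℝ) (hu : 1 ≤ u) (hv : 1 ≤ v)
    (hub : 0 < ub) (hvb : 0 < vb) :
    3/(ub*vb) - u/(ub^2*vb) - v/(ub*vb^2) ≤ 1/(u*v) := by
  have hu0 : (0:ℝ) < u := by linarith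
  have hv0 : (0:ℝ) < v := by linarith
  have hkey := amgm3 u v ub vb hu0 hv0 hub hvb
  have hdiff : 1/(u*v) - (3/(ub*vb) - u/(ub^2*vb) - v/(ub*vb^2))
      = (ub^2*vb^2 + u^2*(v*vb) + u*(v^2*ub) - 3*(u*v*ub*vb)) / (u*v*(ub^2*vb^2)) := by
    field_simp
    ring
  have h0 : 0 ≤ (ub^2*vb^2 + u^2*(v*vb) + u*(v^2*ub) - 3*(u*v*ub*vb)) / (u*v*(ub^2*vb^2)) :=
    div_nonneg (by linarith) (by positivity)
  linarith

section Core

variable {Ω : Type} [MeasurableSpace Ω]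

set_option maxHeartbeats 2000000 in
theorem main_core (μ : Measure Ω) [IsProbabilityMeasure μ]
    (M M' : Ω → ℕ) (n : ℕ) (t t' a : ℝ)
    (hM : Measurable M) (hM' : Measurable M')
    (ht0 : 0 ≤ t) (ht0' : 0 ≤ t') (ha : 1 ≤ a)
    (hle : ∀ ω, (M ω : ℝ) ≤ n) (hle' : ∀ ω, (M' ω : ℝ) ≤ n)
    (hmean : ∫ ω, (M ω : ℝ) ∂μ = t) (hmean' : ∫ ω, (M' ω : ℝ) ∂μ = t')
    (hvar : ∫ ω, (t - (M ω : ℝ))^2 ∂μ ≤ t)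
    (hvar' : ∫ ω, (t' - (M' ω : ℝ))^2 ∂μ ≤ t')
    (htail : (2:ℝ)^(t/2) * ∫ ω, (1/2:ℝ)^(M ω) ∂μ ≤ Real.exp (-(c0 * t)))
    (htail' : (2:ℝ)^(t'/2) * ∫ ω, (1/2:ℝ)^(M' ω) ∂μ ≤ Real.exp (-(c0 * t'))) :
    0 ≤ (∫ ω, 1 / ((a + (M ω : ℝ)) * (a + (M' ω : ℝ))) ∂μ) - 1 / ((a + t) * (a + t'))
    ∧ (∫ ω, 1 / ((a + (M ω : ℝ)) * (a + (M' ω : ℝ))) ∂μ) - 1 / ((a + t) * (a + t'))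
      ≤ ((2 + 4/c0^2) + (10 + 54/c0^3)/2) * (1 / ((a + t) * (a + t')))
          * (1/(a + t) + 1/(a + t')) := by
  have hc := c0_pos
  have hub1 : (1:ℝ) ≤ a + t := by linarith
  have hvb1 : (1:ℝ) ≤ a + t' := by linarith
  have hub0 : (0:ℝ) < a + t := by linarith
  have hvb0 : (0:ℝ) < a + t' := by linarith
  have hu1 : ∀ ω, (1:ℝ) ≤ a + (M ω : ℝ) := fun ω => by
    have : (0:ℝ) ≤ M ω := Nat.cast_nonneg _
    linarith
  have hv1 : ∀ ω, (1:ℝ) ≤ a + (M' ω : ℝ) := fun ω => by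
    have : (0:ℝ) ≤ M' ω := Nat.cast_nonneg _
    linarith
  have hmu : Measurable fun ω => a + (M ω : ℝ) :=
    measurable_const.add (measurable_from_top.comp hM)
  have hmv : Measurable fun ω => a + (M' ω : ℝ) :=
    measurable_const.add (measurable_from_top.comp hM')
  have hmcu : Measurable fun ω => (M ω : ℝ) := measurable_from_top.comp hM
  have hmcv : Measurable fun ω => (M' ω : ℝ) := measurable_from_top.comp hM'
  -- integrabilities
  have I_f : Integrable (fun ω => 1 / ((a + (M ω : ℝ)) * (a + (M' ω : ℝ)))) μ := by
    refine integrable_of_bdd (measurable_const.div (hmu.mul hmv)) 1 (fun ω => ?_)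
    have h1 := hu1 ω; have h2 := hv1 ω
    rw [abs_of_nonneg (by positivity)]
    rw [div_le_one (by nlinarith)]
    nlinarith
  have I_M : Integrable (fun ω => (M ω : ℝ)) μ :=
    integrable_of_bdd hmcu n (fun ω => by
      rw [abs_of_nonneg (Nat.cast_nonneg _)]; exact hle ω)
  have I_M' : Integrable (fun ω => (M' ω : ℝ)) μ :=
    integrable_of_bdd hmcv n (fun ω => by
      rw [abs_of_nonneg (Nat.cast_nonneg _)]; exact hle' ω)
  have I_q : Integrable (fun ω => (t - (M ω : ℝ)) / (a + (M ω : ℝ))) μ := by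
    refine integrable_of_bdd ((measurable_const.sub hmcu).div hmu) (t + n) (fun ω => ?_)
    have h1 := hu1 ω
    have h2 := hle ω
    have h3 : (0:ℝ) ≤ M ω := Nat.cast_nonneg _
    rw [abs_div, abs_of_nonneg (by linarith : (0:ℝ) ≤ a + (M ω:ℝ))]
    calc |t - (M ω : ℝ)| / (a + (M ω:ℝ)) ≤ |t - (M ω : ℝ)| / 1 :=
          div_le_div_of_nonneg_left (abs_nonneg _) one_pos h1
      _ = |t - (M ω : ℝ)| := div_one _
      _ ≤ t + n := abs_sub_le_iff.2 ⟨by linarith, by linarith⟩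
  have I_q' : Integrable (fun ω => (t' - (M' ω : ℝ)) / (a + (M' ω : ℝ))) μ := by
    refine integrable_of_bdd ((measurable_const.sub hmcv).div hmv) (t' + n) (fun ω => ?_)
    have h1 := hv1 ω
    have h2 := hle' ω
    have h3 : (0:ℝ) ≤ M' ω := Nat.cast_nonneg _
    rw [abs_div, abs_of_nonneg (by linarith : (0:ℝ) ≤ a + (M' ω:ℝ))]
    calc |t' - (M' ω : ℝ)| / (a + (M' ω:ℝ)) ≤ |t' - (M' ω : ℝ)| / 1 :=
          div_le_div_of_nonneg_left (abs_nonneg _) one_pos h1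
      _ = |t' - (M' ω : ℝ)| := div_one _
      _ ≤ t' + n := abs_sub_le_iff.2 ⟨by linarith, by linarith⟩
  have I_qq : Integrable (fun ω => ((t - (M ω : ℝ)) / (a + (M ω : ℝ)))
      * ((t' - (M' ω : ℝ)) / (a + (M' ω : ℝ)))) μ := by
    refine integrable_of_bdd (((measurable_const.sub hmcu).div hmu).mul
      ((measurable_const.sub hmcv).div hmv)) ((t + n) * (t' + n)) (fun ω => ?_)
    have h1 := hu1 ω; have h2 := hle ω; have h3 : (0:ℝ) ≤ M ω := Nat.cast_nonneg _
    have h1' := hv1 ω; have h2' := hle' ω; have h3' : (0:ℝ) ≤ M' ω := Nat.cast_nonneg _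
    rw [abs_mul]
    have b1 : |(t - (M ω : ℝ)) / (a + (M ω : ℝ))| ≤ t + n := by
      rw [abs_div, abs_of_nonneg (by linarith : (0:ℝ) ≤ a + (M ω:ℝ))]
      calc |t - (M ω : ℝ)| / (a + (M ω:ℝ)) ≤ |t - (M ω : ℝ)| / 1 :=
            div_le_div_of_nonneg_left (abs_nonneg _) one_pos h1
        _ = |t - (M ω : ℝ)| := div_one _
        _ ≤ t + n := abs_sub_le_iff.2 ⟨by linarith, by linarith⟩
    have b2 : |(t' - (M' ω : ℝ)) / (a + (M' ω : ℝ))| ≤ t' + n := by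
      rw [abs_div, abs_of_nonneg (by linarith : (0:ℝ) ≤ a + (M' ω:ℝ))]
      calc |t' - (M' ω : ℝ)| / (a + (M' ω:ℝ)) ≤ |t' - (M' ω : ℝ)| / 1 :=
            div_le_div_of_nonneg_left (abs_nonneg _) one_pos h1'
        _ = |t' - (M' ω : ℝ)| := div_one _
        _ ≤ t' + n := abs_sub_le_iff.2 ⟨by linarith, by linarith⟩
    exact mul_le_mul b1 b2 (abs_nonneg _) (by linarith)
  have I_r1 : Integrable (fun ω => (t - (M ω : ℝ))^2 / (a + (M ω : ℝ))) μ := by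
    have h := integrable_ratio μ M n t a hM ht0 ha hle 1
    simpa using h
  have I_r1' : Integrable (fun ω => (t' - (M' ω : ℝ))^2 / (a + (M' ω : ℝ))) μ := by
    have h := integrable_ratio μ M' n t' a hM' ht0' ha hle' 1
    simpa using h
  have I_r2 : Integrable (fun ω => (t - (M ω : ℝ))^2 / (a + (M ω : ℝ))^2) μ :=
    integrable_ratio μ M n t a hM ht0 ha hle 2
  have I_r2' : Integrable (fun ω => (t' - (M' ω : ℝ))^2 / (a + (M' ω : ℝ))^2) μ :=
    integrable_ratio μ M' n t' a hM' ht0' ha hle' 2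
  -- the mean of q
  have hq_eq : ∫ ω, (t - (M ω : ℝ)) / (a + (M ω : ℝ)) ∂μ
      = (∫ ω, (t - (M ω : ℝ))^2 / (a + (M ω : ℝ)) ∂μ) / (a + t) := by
    have hpt : ∀ ω, (t - (M ω : ℝ)) / (a + (M ω : ℝ))
        = (t - (M ω : ℝ))^2 / (a + (M ω : ℝ)) / (a + t) + (t - (M ω : ℝ)) / (a + t) := by
      intro ω
      have h1 := hu1 ω
      field_simp
      ring
    calc ∫ ω, (t - (M ω : ℝ)) / (a + (M ω : ℝ)) ∂μ
        = ∫ ω, ((t - (M ω : ℝ))^2 / (a + (M ω : ℝ)) / (a + t)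
            + (t - (M ω : ℝ)) / (a + t)) ∂μ := by simp_rw [hpt]
      _ = (∫ ω, (t - (M ω : ℝ))^2 / (a + (M ω : ℝ)) ∂μ) / (a + t)
            + (∫ ω, (t - (M ω : ℝ)) ∂μ) / (a + t) := by
          rw [integral_add (f := fun ω => (t - (M ω : ℝ))^2 / (a + (M ω : ℝ)) / (a + t))
            (g := fun ω => (t - (M ω : ℝ)) / (a + t))
            (I_r1.div_const _) (((integrable_const t).sub I_M).div_const _),
            integral_div, integral_div]
      _ = (∫ ω, (t - (M ω : ℝ))^2 / (a + (M ω : ℝ)) ∂μ) / (a + t) := by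
          rw [integral_sub (f := fun _ => t) (g := fun ω => (M ω : ℝ))
            (integrable_const t) I_M, integral_const, hmean]
          simp
  have hq_eq' : ∫ ω, (t' - (M' ω : ℝ)) / (a + (M' ω : ℝ)) ∂μ
      = (∫ ω, (t' - (M' ω : ℝ))^2 / (a + (M' ω : ℝ)) ∂μ) / (a + t') := by
    have hpt : ∀ ω, (t' - (M' ω : ℝ)) / (a + (M' ω : ℝ))
        = (t' - (M' ω : ℝ))^2 / (a + (M' ω : ℝ)) / (a + t') + (t' - (M' ω : ℝ)) / (a + t') := by
      intro ω
      have h1 := hv1 ω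
      field_simp
      ring
    calc ∫ ω, (t' - (M' ω : ℝ)) / (a + (M' ω : ℝ)) ∂μ
        = ∫ ω, ((t' - (M' ω : ℝ))^2 / (a + (M' ω : ℝ)) / (a + t')
            + (t' - (M' ω : ℝ)) / (a + t')) ∂μ := by simp_rw [hpt]
      _ = (∫ ω, (t' - (M' ω : ℝ))^2 / (a + (M' ω : ℝ)) ∂μ) / (a + t')
            + (∫ ω, (t' - (M' ω : ℝ)) ∂μ) / (a + t') := by
          rw [integral_add (f := fun ω => (t' - (M' ω : ℝ))^2 / (a + (M' ω : ℝ)) / (a + t'))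
            (g := fun ω => (t' - (M' ω : ℝ)) / (a + t'))
            (I_r1'.div_const _) (((integrable_const t').sub I_M').div_const _),
            integral_div, integral_div]
      _ = (∫ ω, (t' - (M' ω : ℝ))^2 / (a + (M' ω : ℝ)) ∂μ) / (a + t') := by
          rw [integral_sub (f := fun _ => t') (g := fun ω => (M' ω : ℝ))
            (integrable_const t') I_M', integral_const, hmean']
          simp
  have hr1_nonneg : 0 ≤ ∫ ω, (t - (M ω : ℝ))^2 / (a + (M ω : ℝ)) ∂μ :=
    integral_nonneg (fun ω => div_nonneg (sq_nonneg _) (by linarith [hu1 ω]))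
  have hr1_nonneg' : 0 ≤ ∫ ω, (t' - (M' ω : ℝ))^2 / (a + (M' ω : ℝ)) ∂μ :=
    integral_nonneg (fun ω => div_nonneg (sq_nonneg _) (by linarith [hv1 ω]))
  have hB1 := B1_abstract μ M n t a hM ht0 ha hle hvar htail
  have hB1' := B1_abstract μ M' n t' a hM' ht0' ha hle' hvar' htail'
  have hB2 := B2_abstract μ M n t a hM ht0 ha hle hvar htail
  have hB2' := B2_abstract μ M' n t' a hM' ht0' ha hle' hvar' htail'
  -- central identity
  have hident : ∀ ω, 1 / ((a + (M ω : ℝ)) * (a + (M' ω : ℝ)))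
      = 1 / ((a + t) * (a + t'))
        + (((t - (M ω : ℝ)) / (a + (M ω : ℝ))) * ((t' - (M' ω : ℝ)) / (a + (M' ω : ℝ)))
          + (t - (M ω : ℝ)) / (a + (M ω : ℝ))
          + (t' - (M' ω : ℝ)) / (a + (M' ω : ℝ))) / ((a + t) * (a + t')) := by
    intro ω
    have h1 := hu1 ω
    have h2 := hv1 ω
    field_simp
    ring
  have hsplit : (∫ ω, 1 / ((a + (M ω : ℝ)) * (a + (M' ω : ℝ))) ∂μ)
      = 1 / ((a + t) * (a + t'))
        + ((∫ ω, ((t - (M ω : ℝ)) / (a + (M ω : ℝ)))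
              * ((t' - (M' ω : ℝ)) / (a + (M' ω : ℝ))) ∂μ)
          + (∫ ω, (t - (M ω : ℝ)) / (a + (M ω : ℝ)) ∂μ)
          + (∫ ω, (t' - (M' ω : ℝ)) / (a + (M' ω : ℝ)) ∂μ)) / ((a + t) * (a + t')) := by
    calc (∫ ω, 1 / ((a + (M ω : ℝ)) * (a + (M' ω : ℝ))) ∂μ)
        = ∫ ω, (1 / ((a + t) * (a + t'))
            + (((t - (M ω : ℝ)) / (a + (M ω : ℝ))) * ((t' - (M' ω : ℝ)) / (a + (M' ω : ℝ)))
              + (t - (M ω : ℝ)) / (a + (M ω : ℝ))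
              + (t' - (M' ω : ℝ)) / (a + (M' ω : ℝ))) / ((a + t) * (a + t'))) ∂μ := by
          simp_rw [hident]
      _ = 1 / ((a + t) * (a + t'))
          + ((∫ ω, ((t - (M ω : ℝ)) / (a + (M ω : ℝ)))
                * ((t' - (M' ω : ℝ)) / (a + (M' ω : ℝ))) ∂μ)
            + (∫ ω, (t - (M ω : ℝ)) / (a + (M ω : ℝ)) ∂μ)
            + (∫ ω, (t' - (M' ω : ℝ)) / (a + (M' ω : ℝ)) ∂μ)) / ((a + t) * (a + t')) := by
          rw [integral_add (f := fun _ => 1 / ((a + t) * (a + t')))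
            (g := fun ω => (((t - (M ω : ℝ)) / (a + (M ω : ℝ)))
                * ((t' - (M' ω : ℝ)) / (a + (M' ω : ℝ)))
              + (t - (M ω : ℝ)) / (a + (M ω : ℝ))
              + (t' - (M' ω : ℝ)) / (a + (M' ω : ℝ))) / ((a + t) * (a + t')))
            (integrable_const _) (((I_qq.add I_q).add I_q').div_const _),
            integral_const, integral_div,
            integral_add (f := fun ω => ((t - (M ω : ℝ)) / (a + (M ω : ℝ)))
                * ((t' - (M' ω : ℝ)) / (a + (M' ω : ℝ)))
              + (t - (M ω : ℝ)) / (a + (M ω : ℝ)))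
            (g := fun ω => (t' - (M' ω : ℝ)) / (a + (M' ω : ℝ)))
            (I_qq.add I_q) I_q',
            integral_add (f := fun ω => ((t - (M ω : ℝ)) / (a + (M ω : ℝ)))
                * ((t' - (M' ω : ℝ)) / (a + (M' ω : ℝ))))
            (g := fun ω => (t - (M ω : ℝ)) / (a + (M ω : ℝ))) I_qq I_q]
          simp
  constructor
  · -- lower bound via AM-GM tangent
    have hg_int : ∫ ω, (3/((a+t)*(a+t')) - (a + (M ω : ℝ))/((a+t)^2*(a+t'))
        - (a + (M' ω : ℝ))/((a+t)*(a+t')^2)) ∂μ = 1 / ((a + t) * (a + t')) := by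
      rw [integral_sub (f := fun ω => 3/((a+t)*(a+t'))
            - (a + (M ω : ℝ))/((a+t)^2*(a+t')))
          (g := fun ω => (a + (M' ω : ℝ))/((a+t)*(a+t')^2))
          (((integrable_const _).sub
            (((integrable_const a).add I_M).div_const _)))
          (((integrable_const a).add I_M').div_const _),
        integral_sub (f := fun _ => 3/((a+t)*(a+t')))
          (g := fun ω => (a + (M ω : ℝ))/((a+t)^2*(a+t')))
          (integrable_const _) (((integrable_const a).add I_M).div_const _),
        integral_div, integral_div, integral_div,
        integral_add (f := fun _ => a) (g := fun ω => (M ω : ℝ)) (integrable_const a) I_M,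
        integral_add (f := fun _ => a) (g := fun ω => (M' ω : ℝ)) (integrable_const a) I_M',
        integral_const, integral_const, hmean, hmean']
      simp only [measure_univ, ENNReal.toReal_one, probReal_univ, smul_eq_mul, one_mul]
      field_simp
      ring
    have hmono : ∫ ω, (3/((a+t)*(a+t')) - (a + (M ω : ℝ))/((a+t)^2*(a+t'))
        - (a + (M' ω : ℝ))/((a+t)*(a+t')^2)) ∂μ
        ≤ ∫ ω, 1 / ((a + (M ω : ℝ)) * (a + (M' ω : ℝ))) ∂μ := by
      refine integral_mono ((((integrable_const _).sub
            (((integrable_const a).add I_M).div_const _))).sub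
          (((integrable_const a).add I_M').div_const _)) I_f (fun ω => ?_)
      exact tangent_pointwise (a + (M ω : ℝ)) (a + (M' ω : ℝ)) (a+t) (a+t')
        (hu1 ω) (hv1 ω) hub0 hvb0
    rw [hg_int] at hmono
    linarith
  · -- upper bound
    have hqq_le : ∫ ω, ((t - (M ω : ℝ)) / (a + (M ω : ℝ)))
        * ((t' - (M' ω : ℝ)) / (a + (M' ω : ℝ))) ∂μ
        ≤ (1/2) * ((∫ ω, (t - (M ω : ℝ))^2 / (a + (M ω : ℝ))^2 ∂μ)
          + (∫ ω, (t' - (M' ω : ℝ))^2 / (a + (M' ω : ℝ))^2 ∂μ)) := by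
      have hmono : ∫ ω, ((t - (M ω : ℝ)) / (a + (M ω : ℝ)))
          * ((t' - (M' ω : ℝ)) / (a + (M' ω : ℝ))) ∂μ
          ≤ ∫ ω, (1/2) * ((t - (M ω : ℝ))^2 / (a + (M ω : ℝ))^2
            + (t' - (M' ω : ℝ))^2 / (a + (M' ω : ℝ))^2) ∂μ := by
        refine integral_mono I_qq ((I_r2.add I_r2').const_mul _) (fun ω => ?_)
        have e1 : (t - (M ω : ℝ))^2 / (a + (M ω : ℝ))^2
            = ((t - (M ω : ℝ)) / (a + (M ω : ℝ)))^2 := (div_pow _ _ 2).symm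
        have e2 : (t' - (M' ω : ℝ))^2 / (a + (M' ω : ℝ))^2
            = ((t' - (M' ω : ℝ)) / (a + (M' ω : ℝ)))^2 := (div_pow _ _ 2).symm
        rw [e1, e2]
        nlinarith [sq_nonneg ((t - (M ω : ℝ)) / (a + (M ω : ℝ))
          - (t' - (M' ω : ℝ)) / (a + (M' ω : ℝ)))]
      rw [MeasureTheory.integral_const_mul, integral_add I_r2 I_r2'] at hmono
      exact hmono
    have hq_ub : (∫ ω, (t - (M ω : ℝ)) / (a + (M ω : ℝ)) ∂μ) ≤ (2 + 4/c0^2)/(a+t) := by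
      rw [hq_eq]
      exact (div_le_div_iff_of_pos_right hub0).2 hB1
    have hq_ub' : (∫ ω, (t' - (M' ω : ℝ)) / (a + (M' ω : ℝ)) ∂μ) ≤ (2 + 4/c0^2)/(a+t') := by
      rw [hq_eq']
      exact (div_le_div_iff_of_pos_right hvb0).2 hB1'
    have hqq2 : ∫ ω, ((t - (M ω : ℝ)) / (a + (M ω : ℝ)))
        * ((t' - (M' ω : ℝ)) / (a + (M' ω : ℝ))) ∂μ
        ≤ (1/2) * ((10 + 54/c0^3)/(a+t) + (10 + 54/c0^3)/(a+t')) := by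
      have := hqq_le
      nlinarith [hB2, hB2']
    set S := (∫ ω, ((t - (M ω : ℝ)) / (a + (M ω : ℝ)))
              * ((t' - (M' ω : ℝ)) / (a + (M' ω : ℝ))) ∂μ)
          + (∫ ω, (t - (M ω : ℝ)) / (a + (M ω : ℝ)) ∂μ)
          + (∫ ω, (t' - (M' ω : ℝ)) / (a + (M' ω : ℝ)) ∂μ) with hSdef
    have hexpand : ((2 + 4/c0^2) + (10 + 54/c0^3)/2) * (1/(a+t) + 1/(a+t'))
        = (2 + 4/c0^2)/(a+t) + (2 + 4/c0^2)/(a+t')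
          + (1/2) * ((10 + 54/c0^3)/(a+t) + (10 + 54/c0^3)/(a+t')) := by
      field_simp
    have hS : S ≤ ((2 + 4/c0^2) + (10 + 54/c0^3)/2) * (1/(a+t) + 1/(a+t')) := by
      rw [hexpand, hSdef]
      linarith
    have hfin : S / ((a+t)*(a+t'))
        ≤ (((2 + 4/c0^2) + (10 + 54/c0^3)/2) * (1/(a+t) + 1/(a+t'))) / ((a+t)*(a+t')) :=
      (div_le_div_iff_of_pos_right (mul_pos hub0 hvb0)).2 hS
    have heq2 : (((2 + 4/c0^2) + (10 + 54/c0^3)/2) * (1/(a+t) + 1/(a+t'))) / ((a+t)*(a+t'))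
        = ((2 + 4/c0^2) + (10 + 54/c0^3)/2) * (1 / ((a + t) * (a + t')))
          * (1/(a + t) + 1/(a + t')) := by
      ring
    rw [hsplit]
    linarith

end Core
end Stmt7Aux

/-- for overlapping measurable sets `P, P'` with `p = P(X∈P)`, `p' = P(X∈P')`,
`p₀ = P(X∈P∩P') > 0`, sample counts `N, N'` from an i.i.d. sample of size `n`, and `a ≥ 1`:
`0 ≤ E[1/((a+N)(a+N'))] − 1/((a+np)(a+np'))
   ≤ C · [1/((a+np)(a+np'))] · [1/(a+np) + 1/(a+np')]` for a universal constant `C`. -/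
theorem stmt7 :
    ∃ C : ℝ, 0 < C ∧
      ∀ (α : Type) [MeasurableSpace α] (ν : Measure α) [IsProbabilityMeasure ν]
        (n : ℕ) (P P' : Set α) (a : ℝ),
        MeasurableSet P → MeasurableSet P' →
        0 < (ν (P ∩ P')).toReal → 1 ≤ a →
        0 ≤ (∫ ω : Fin n → α,
              1 / ((a + ((Finset.univ.filter fun k => ω k ∈ P).card : ℝ))
                  * (a + ((Finset.univ.filter fun k => ω k ∈ P').card : ℝ)))
              ∂(Measure.pi fun _ => ν))
            - 1 / ((a + (n : ℝ) * (ν P).toReal) * (a + (n : ℝ) * (ν P').toReal)) ∧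
        (∫ ω : Fin n → α,
              1 / ((a + ((Finset.univ.filter fun k => ω k ∈ P).card : ℝ))
                  * (a + ((Finset.univ.filter fun k => ω k ∈ P').card : ℝ)))
              ∂(Measure.pi fun _ => ν))
            - 1 / ((a + (n : ℝ) * (ν P).toReal) * (a + (n : ℝ) * (ν P').toReal))
          ≤ C * (1 / ((a + (n : ℝ) * (ν P).toReal) * (a + (n : ℝ) * (ν P').toReal)))
              * (1 / (a + (n : ℝ) * (ν P).toReal) + 1 / (a + (n : ℝ) * (ν P').toReal)) := by
  have hc := Stmt7Aux.c0_pos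
  refine ⟨(2 + 4/Stmt7Aux.c0^2) + (10 + 54/Stmt7Aux.c0^3)/2, ?_, ?_⟩
  · have h1 : 0 < 4/Stmt7Aux.c0^2 := div_pos (by norm_num) (pow_pos hc 2)
    have h2 : 0 < 54/Stmt7Aux.c0^3 := div_pos (by norm_num) (pow_pos hc 3)
    linarith
  · intro α _ ν _ n P P' a hP hP' _ ha
    exact Stmt7Aux.main_core (Measure.pi fun _ => ν)
      (fun ω => (Finset.univ.filter fun k => ω k ∈ P).card)
      (fun ω => (Finset.univ.filter fun k => ω k ∈ P').card)
      n ((n : ℝ) * (ν P).toReal) ((n : ℝ) * (ν P').toReal) a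
      (Stmt7Aux.measurable_cnt_nat n hP) (Stmt7Aux.measurable_cnt_nat n hP')
      (by positivity) (by positivity) ha
      (Stmt7Aux.cnt_le n P) (Stmt7Aux.cnt_le n P')
      (Stmt7Aux.integral_cnt ν n hP) (Stmt7Aux.integral_cnt ν n hP')
      (Stmt7Aux.var_le ν n hP) (Stmt7Aux.var_le ν n hP')
      (Stmt7Aux.half_cnt_tail ν n hP) (Stmt7Aux.half_cnt_tail ν n hP')
end

section
/- Let μ be a square-integrable function, P = {P_i} and P' = {P'_j} finite measurable partitions with positive-probability cells, and μ_P = Σ_i E[μ(X)|X ∈ P_i] 1_{P_i} the projection of μ onto σ(P). Define Cov_μ(P,P') = Σ_{i,j} E[(μ(X) − E[μ|P_i])(μ(X) − E[μ|P'_j]) | X ∈ P_i ∩ P'_j] · P(X ∈ P_i ∩ P'_j)^2/(P(X ∈ P_i) P(X ∈ P'_j)) and Var_μ(P) = Σ_i Var(μ(X) | X ∈ P_i). Then Cov_μ(P, P') ≤ √(Var_μ(P) · Var_μ(P')). -/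
open MeasureTheory

/-- Conditional mean `E[f(X) | X ∈ A]` of `f` on a set `A` (junk value `0` if `ν A = 0`). -/
noncomputable def condMean {α : Type*} [MeasurableSpace α] (ν : Measure α)
    (A : Set α) (f : α → ℝ) : ℝ :=
  (∫ x in A, f x ∂ν) / (ν A).toReal

/-- The signal-induced cross-partition covariance function `Cov_μ(P,P')`. -/
noncomputable def covMu {α : Type*} [MeasurableSpace α] (ν : Measure α)
    (μ : α → ℝ) (P P' : Finset (Set α)) : ℝ :=
  ∑ A ∈ P, ∑ B ∈ P',
    condMean ν (A ∩ B) (fun x => (μ x - condMean ν A μ) * (μ x - condMean ν B μ))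
      * (ν (A ∩ B)).toReal ^ 2 / ((ν A).toReal * (ν B).toReal)

/-- The signal-induced variance function `Var_μ(P) = Σ_i Var(μ(X) | X ∈ P_i)`. -/
noncomputable def varMu {α : Type*} [MeasurableSpace α] (ν : Measure α)
    (μ : α → ℝ) (P : Finset (Set α)) : ℝ :=
  ∑ A ∈ P, condMean ν A (fun x => (μ x - condMean ν A μ) ^ 2)

/-- Cauchy–Schwarz for integrals of real functions in `L²`. -/
lemma integral_mul_le_sqrt' {α : Type*} [MeasurableSpace α] (ρ : Measure α)
    {f g : α → ℝ} (hf : MemLp f 2 ρ) (hg : MemLp g 2 ρ) :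
    ∫ x, f x * g x ∂ρ ≤ Real.sqrt (∫ x, f x ^ 2 ∂ρ) * Real.sqrt (∫ x, g x ^ 2 ∂ρ) := by
  set F : Lp ℝ 2 ρ := hf.toLp f
  set G : Lp ℝ 2 ρ := hg.toLp g
  have hF : (F : α → ℝ) =ᵐ[ρ] f := hf.coeFn_toLp
  have hG : (G : α → ℝ) =ᵐ[ρ] g := hg.coeFn_toLp
  have h1 : ∫ x, f x * g x ∂ρ = (inner ℝ F G : ℝ) := by
    rw [L2.inner_def]
    refine integral_congr_ae ?_
    filter_upwards [hF, hG] with x hx hy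
    simp [hx, hy, mul_comm]
  have hFn : ‖F‖ = Real.sqrt (∫ x, f x ^ 2 ∂ρ) := by
    have : (inner ℝ F F : ℝ) = ∫ x, f x ^ 2 ∂ρ := by
      rw [L2.inner_def]
      refine integral_congr_ae ?_
      filter_upwards [hF] with x hx
      simp [hx, sq]
    rw [← this, real_inner_self_eq_norm_sq, Real.sqrt_sq (norm_nonneg _)]
  have hGn : ‖G‖ = Real.sqrt (∫ x, g x ^ 2 ∂ρ) := by
    have : (inner ℝ G G : ℝ) = ∫ x, g x ^ 2 ∂ρ := by
      rw [L2.inner_def]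
      refine integral_congr_ae ?_
      filter_upwards [hG] with x hx
      simp [hx, sq]
    rw [← this, real_inner_self_eq_norm_sq, Real.sqrt_sq (norm_nonneg _)]
  calc ∫ x, f x * g x ∂ρ = (inner ℝ F G : ℝ) := h1
    _ ≤ ‖F‖ * ‖G‖ := real_inner_le_norm F G
    _ = _ := by rw [hFn, hGn]

/-- for a square-integrable `μ` and finite measurable partitions `P, P'` with
positive-probability cells, `Cov_μ(P,P') ≤ √(Var_μ(P) · Var_μ(P'))`. -/
theorem stmt11 {α : Type*} [MeasurableSpace α] (ν : Measure α) [IsProbabilityMeasure ν]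
    (μ : α → ℝ) (hmeas : Measurable μ) (hsq : Integrable (fun x => μ x ^ 2) ν)
    (P P' : Finset (Set α))
    (hPm : ∀ A ∈ P, MeasurableSet A) (hP'm : ∀ B ∈ P', MeasurableSet B)
    (hPpos : ∀ A ∈ P, 0 < ν A) (hP'pos : ∀ B ∈ P', 0 < ν B)
    (hPdisj : (P : Set (Set α)).PairwiseDisjoint id)
    (hP'disj : (P' : Set (Set α)).PairwiseDisjoint id)
    (hPcov : ⋃₀ (P : Set (Set α)) = Set.univ)
    (hP'cov : ⋃₀ (P' : Set (Set α)) = Set.univ) :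
    covMu ν μ P P' ≤ Real.sqrt (varMu ν μ P * varMu ν μ P') := by
  classical
  have hμ2 : MemLp μ 2 ν := (memLp_two_iff_integrable_sq hmeas.aestronglyMeasurable).2 hsq
  have hdiff : ∀ c : ℝ, MemLp (fun x => μ x - c) 2 ν := fun c => hμ2.sub (memLp_const c)
  have hsqint : ∀ c : ℝ, Integrable (fun x => (μ x - c) ^ 2) ν := fun c => (hdiff c).integrable_sq
  -- the two families of nonnegative numbers for Cauchy–Schwarz
  set a : Set α → Set α → ℝ := fun A B =>
    Real.sqrt ((ν (A ∩ B)).toReal * ∫ x in A ∩ B, (μ x - condMean ν A μ) ^ 2 ∂ν)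
      / (ν A).toReal with ha
  set b : Set α → Set α → ℝ := fun A B =>
    Real.sqrt ((ν (A ∩ B)).toReal * ∫ x in A ∩ B, (μ x - condMean ν B μ) ^ 2 ∂ν)
      / (ν B).toReal with hb
  have hI1 : ∀ (A B : Set α), (0:ℝ) ≤ ∫ x in A ∩ B, (μ x - condMean ν A μ) ^ 2 ∂ν :=
    fun A B => integral_nonneg fun x => sq_nonneg _
  have hI2 : ∀ (A B : Set α), (0:ℝ) ≤ ∫ x in A ∩ B, (μ x - condMean ν B μ) ^ 2 ∂ν :=
    fun A B => integral_nonneg fun x => sq_nonneg _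
  have hab : ∀ (A B : Set α), 0 ≤ a A B ∧ 0 ≤ b A B := fun A B =>
    ⟨div_nonneg (Real.sqrt_nonneg _) ENNReal.toReal_nonneg,
     div_nonneg (Real.sqrt_nonneg _) ENNReal.toReal_nonneg⟩
  -- per-cell bound
  have key : ∀ A ∈ P, ∀ B ∈ P',
      condMean ν (A ∩ B) (fun x => (μ x - condMean ν A μ) * (μ x - condMean ν B μ))
        * (ν (A ∩ B)).toReal ^ 2 / ((ν A).toReal * (ν B).toReal) ≤ a A B * b A B := by
    intro A hA B hB
    have hApos : 0 < (ν A).toReal := ENNReal.toReal_pos (hPpos A hA).ne' (measure_ne_top ν A)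
    have hBpos : 0 < (ν B).toReal := ENNReal.toReal_pos (hP'pos B hB).ne' (measure_ne_top ν B)
    by_cases h0 : ν (A ∩ B) = 0
    · have h2 : (ν (A ∩ B)).toReal = 0 := by simp [h0]
      rw [h2]
      simpa using mul_nonneg (hab A B).1 (hab A B).2
    · have ht : 0 < (ν (A ∩ B)).toReal := ENNReal.toReal_pos h0 (measure_ne_top _ _)
      have hCS : ∫ x in A ∩ B, (μ x - condMean ν A μ) * (μ x - condMean ν B μ) ∂ν
          ≤ Real.sqrt (∫ x in A ∩ B, (μ x - condMean ν A μ) ^ 2 ∂ν)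
            * Real.sqrt (∫ x in A ∩ B, (μ x - condMean ν B μ) ^ 2 ∂ν) :=
        integral_mul_le_sqrt' _ ((hdiff (condMean ν A μ)).restrict _)
          ((hdiff (condMean ν B μ)).restrict _)
      have lhs_eq : condMean ν (A ∩ B)
            (fun x => (μ x - condMean ν A μ) * (μ x - condMean ν B μ))
            * (ν (A ∩ B)).toReal ^ 2 / ((ν A).toReal * (ν B).toReal)
          = (∫ x in A ∩ B, (μ x - condMean ν A μ) * (μ x - condMean ν B μ) ∂ν)
            * (ν (A ∩ B)).toReal / ((ν A).toReal * (ν B).toReal) := by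
        rw [condMean]
        field_simp
      have rhs_eq : a A B * b A B
          = Real.sqrt (∫ x in A ∩ B, (μ x - condMean ν A μ) ^ 2 ∂ν)
            * Real.sqrt (∫ x in A ∩ B, (μ x - condMean ν B μ) ^ 2 ∂ν)
            * (ν (A ∩ B)).toReal / ((ν A).toReal * (ν B).toReal) := by
        rw [ha, hb]
        simp only
        rw [Real.sqrt_mul ht.le, Real.sqrt_mul ht.le, div_mul_div_comm]
        rw [show Real.sqrt (ν (A ∩ B)).toReal
              * Real.sqrt (∫ x in A ∩ B, (μ x - condMean ν A μ) ^ 2 ∂ν)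
              * (Real.sqrt (ν (A ∩ B)).toReal
                * Real.sqrt (∫ x in A ∩ B, (μ x - condMean ν B μ) ^ 2 ∂ν))
            = Real.sqrt (ν (A ∩ B)).toReal * Real.sqrt (ν (A ∩ B)).toReal
              * (Real.sqrt (∫ x in A ∩ B, (μ x - condMean ν A μ) ^ 2 ∂ν)
                * Real.sqrt (∫ x in A ∩ B, (μ x - condMean ν B μ) ^ 2 ∂ν)) by ring,
          Real.mul_self_sqrt ht.le]
        ring
      rw [lhs_eq, rhs_eq]
      gcongr <;> exact hCS
  -- partition sums of integrals
  have hpartB : ∀ (A : Set α), MeasurableSet A → ∀ c : ℝ,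
      ∑ B ∈ P', ∫ x in A ∩ B, (μ x - c) ^ 2 ∂ν = ∫ x in A, (μ x - c) ^ 2 ∂ν := by
    intro A hA c
    have hU : (⋃ B ∈ P', A ∩ B) = A := by
      rw [← Set.inter_iUnion₂, ← Finset.set_biUnion_coe, ← Set.sUnion_eq_biUnion, hP'cov, Set.inter_univ]
    rw [← integral_biUnion_finset P' (fun B hB => hA.inter (hP'm B hB))
        (fun B hB B' hB' hne =>
          ((hP'disj hB hB' hne).mono_left Set.inter_subset_right).mono_right
            Set.inter_subset_right)
        (fun B _ => (hsqint c).integrableOn), hU]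
  have hpartA : ∀ (B : Set α), MeasurableSet B → ∀ c : ℝ,
      ∑ A ∈ P, ∫ x in A ∩ B, (μ x - c) ^ 2 ∂ν = ∫ x in B, (μ x - c) ^ 2 ∂ν := by
    intro B hB c
    have hU : (⋃ A ∈ P, A ∩ B) = B := by
      rw [← Set.iUnion₂_inter, ← Finset.set_biUnion_coe, ← Set.sUnion_eq_biUnion, hPcov, Set.univ_inter]
    rw [← integral_biUnion_finset P (fun A hA => (hPm A hA).inter hB)
        (fun A hA A' hA' hne =>
          ((hPdisj hA hA' hne).mono_left Set.inter_subset_left).mono_right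
            Set.inter_subset_left)
        (fun A _ => (hsqint c).integrableOn), hU]
  -- sum of squares bounds
  have hA2 : ∑ A ∈ P, ∑ B ∈ P', a A B ^ 2 ≤ varMu ν μ P := by
    unfold varMu
    refine Finset.sum_le_sum fun A hA => ?_
    have hApos : 0 < (ν A).toReal := ENNReal.toReal_pos (hPpos A hA).ne' (measure_ne_top ν A)
    calc ∑ B ∈ P', a A B ^ 2
        ≤ ∑ B ∈ P', (∫ x in A ∩ B, (μ x - condMean ν A μ) ^ 2 ∂ν) / (ν A).toReal := by
          refine Finset.sum_le_sum fun B _ => ?_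
          rw [ha]; simp only
          rw [div_pow, Real.sq_sqrt (mul_nonneg ENNReal.toReal_nonneg (hI1 A B))]
          have hle : (ν (A ∩ B)).toReal ≤ (ν A).toReal :=
            ENNReal.toReal_mono (measure_ne_top ν A) (measure_mono Set.inter_subset_left)
          rw [div_le_div_iff₀ (by positivity) hApos]
          nlinarith [mul_nonneg (mul_nonneg (hI1 A B) hApos.le) (sub_nonneg.2 hle)]
      _ = condMean ν A (fun x => (μ x - condMean ν A μ) ^ 2) := by
          rw [← Finset.sum_div, hpartB A (hPm A hA) _]; rfl
  have hB2 : ∑ A ∈ P, ∑ B ∈ P', b A B ^ 2 ≤ varMu ν μ P' := by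
    rw [Finset.sum_comm]
    unfold varMu
    refine Finset.sum_le_sum fun B hB => ?_
    have hBpos : 0 < (ν B).toReal := ENNReal.toReal_pos (hP'pos B hB).ne' (measure_ne_top ν B)
    calc ∑ A ∈ P, b A B ^ 2
        ≤ ∑ A ∈ P, (∫ x in A ∩ B, (μ x - condMean ν B μ) ^ 2 ∂ν) / (ν B).toReal := by
          refine Finset.sum_le_sum fun A _ => ?_
          rw [hb]; simp only
          rw [div_pow, Real.sq_sqrt (mul_nonneg ENNReal.toReal_nonneg (hI2 A B))]
          have hle : (ν (A ∩ B)).toReal ≤ (ν B).toReal :=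
            ENNReal.toReal_mono (measure_ne_top ν B) (measure_mono Set.inter_subset_right)
          rw [div_le_div_iff₀ (by positivity) hBpos]
          nlinarith [mul_nonneg (mul_nonneg (hI2 A B) hBpos.le) (sub_nonneg.2 hle)]
      _ = condMean ν B (fun x => (μ x - condMean ν B μ) ^ 2) := by
          rw [← Finset.sum_div, hpartA B (hP'm B hB) _]; rfl
  have hvarP : 0 ≤ varMu ν μ P := by
    unfold varMu
    exact Finset.sum_nonneg fun A _ =>
      div_nonneg (integral_nonneg fun x => sq_nonneg _) ENNReal.toReal_nonneg
  have hsumb2 : 0 ≤ ∑ A ∈ P, ∑ B ∈ P', b A B ^ 2 :=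
    Finset.sum_nonneg fun A _ => Finset.sum_nonneg fun B _ => sq_nonneg _
  -- Cauchy–Schwarz for the double sum
  have hCSsum : ∑ A ∈ P, ∑ B ∈ P', a A B * b A B
      ≤ Real.sqrt ((∑ A ∈ P, ∑ B ∈ P', a A B ^ 2) * (∑ A ∈ P, ∑ B ∈ P', b A B ^ 2)) := by
    have e1 : (∑ p ∈ P ×ˢ P', a p.1 p.2 * b p.1 p.2) = ∑ A ∈ P, ∑ B ∈ P', a A B * b A B :=
      Finset.sum_product' P P' (fun A B => a A B * b A B)
    have e2 : (∑ p ∈ P ×ˢ P', a p.1 p.2 ^ 2) = ∑ A ∈ P, ∑ B ∈ P', a A B ^ 2 :=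
      Finset.sum_product' P P' (fun A B => a A B ^ 2)
    have e3 : (∑ p ∈ P ×ˢ P', b p.1 p.2 ^ 2) = ∑ A ∈ P, ∑ B ∈ P', b A B ^ 2 :=
      Finset.sum_product' P P' (fun A B => b A B ^ 2)
    rw [← e1, ← e2, ← e3]
    have hnn : 0 ≤ ∑ p ∈ P ×ˢ P', a p.1 p.2 * b p.1 p.2 :=
      Finset.sum_nonneg fun p _ => mul_nonneg (hab p.1 p.2).1 (hab p.1 p.2).2
    calc ∑ p ∈ P ×ˢ P', a p.1 p.2 * b p.1 p.2
        = Real.sqrt ((∑ p ∈ P ×ˢ P', a p.1 p.2 * b p.1 p.2) ^ 2) := by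
          rw [Real.sqrt_sq hnn]
      _ ≤ _ := Real.sqrt_le_sqrt
          (Finset.sum_mul_sq_le_sq_mul_sq (P ×ˢ P') (fun p => a p.1 p.2) (fun p => b p.1 p.2))
  calc covMu ν μ P P' ≤ ∑ A ∈ P, ∑ B ∈ P', a A B * b A B := by
        unfold covMu
        exact Finset.sum_le_sum fun A hA => Finset.sum_le_sum fun B hB => key A hA B hB
    _ ≤ Real.sqrt ((∑ A ∈ P, ∑ B ∈ P', a A B ^ 2) * (∑ A ∈ P, ∑ B ∈ P', b A B ^ 2)) := hCSsum
    _ ≤ Real.sqrt (varMu ν μ P * varMu ν μ P') :=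
        Real.sqrt_le_sqrt (mul_le_mul hA2 hB2 hsumb2 hvarP)
end

section
/- Let P, P' be measurable sets with intersection P_0 = P ∩ P' of positive probability p_0, and set P_1 = P \ P', P_2 = P' \ P with probabilities p, p', p_1, p_2 as appropriate. For any square-integrable function μ, E[(μ(X) − E[μ|X∈P])(μ(X) − E[μ|X∈P']) | X ∈ P_0] = Var(μ(X)|X ∈ P_0) + (E[μ|X∈P_0] − E[μ|X∈P_1])(E[μ|X∈P_0] − E[μ|X∈P_2]) · (p_1 p_2)/(p p'), provided p_1 > 0 and p_2 > 0. -/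
open MeasureTheory

/-- for measurable sets `P, P'` with `p₀ = P(X ∈ P ∩ P') > 0`,
`p₁ = P(X ∈ P \ P') > 0`, `p₂ = P(X ∈ P' \ P) > 0`, and square-integrable `μ`,
`E[(μ − E[μ|P])(μ − E[μ|P']) | P₀]
  = Var(μ|P₀) + (E[μ|P₀] − E[μ|P₁])(E[μ|P₀] − E[μ|P₂]) · p₁p₂/(pp')`. -/
theorem stmt13 {α : Type*} [MeasurableSpace α] (ν : Measure α) [IsProbabilityMeasure ν]
    (P P' : Set α) (μ : α → ℝ) (hP : MeasurableSet P) (hP' : MeasurableSet P')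
    (hmeas : Measurable μ) (hsq : Integrable (fun x => μ x ^ 2) ν)
    (h0 : 0 < (ν (P ∩ P')).toReal)
    (h1 : 0 < (ν (P \ P')).toReal) (h2 : 0 < (ν (P' \ P)).toReal) :
    condMean ν (P ∩ P') (fun x => (μ x - condMean ν P μ) * (μ x - condMean ν P' μ))
      = condMean ν (P ∩ P') (fun x => (μ x - condMean ν (P ∩ P') μ) ^ 2)
        + (condMean ν (P ∩ P') μ - condMean ν (P \ P') μ)
          * (condMean ν (P ∩ P') μ - condMean ν (P' \ P) μ)
          * ((ν (P \ P')).toReal * (ν (P' \ P)).toReal)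
          / ((ν P).toReal * (ν P').toReal) := by
  have hμ : Integrable μ ν := by
    have h2 : MemLp μ 2 ν := (memLp_two_iff_integrable_sq hmeas.aestronglyMeasurable).mpr hsq
    exact (h2.mono_exponent (by norm_num)).integrable le_rfl
  set p0 := (ν (P ∩ P')).toReal with hp0
  set p1 := (ν (P \ P')).toReal with hp1
  set p2 := (ν (P' \ P)).toReal with hp2
  set I1 := ∫ x in P ∩ P', μ x ∂ν with hI1
  set I2 := ∫ x in P ∩ P', μ x ^ 2 ∂ν with hI2
  set J1 := ∫ x in P \ P', μ x ∂ν with hJ1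
  set K1 := ∫ x in P' \ P, μ x ∂ν with hK1
  have hνP : (ν P).toReal = p0 + p1 := by
    rw [hp0, hp1, ← ENNReal.toReal_add (measure_ne_top _ _) (measure_ne_top _ _),
      measure_inter_add_diff P hP']
  have hνP' : (ν P').toReal = p0 + p2 := by
    have h' : P' ∩ P = P ∩ P' := Set.inter_comm _ _
    rw [hp0, hp2, ← h', ← ENNReal.toReal_add (measure_ne_top _ _) (measure_ne_top _ _),
      measure_inter_add_diff P' hP]
  have hintP : ∫ x in P, μ x ∂ν = I1 + J1 := by
    rw [hI1, hJ1, ← setIntegral_union (Set.disjoint_sdiff_right.mono_left Set.inter_subset_right)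
      (hP.diff hP') hμ.integrableOn hμ.integrableOn, Set.inter_union_diff]
  have hintP' : ∫ x in P', μ x ∂ν = I1 + K1 := by
    have h' : P ∩ P' = P' ∩ P := Set.inter_comm _ _
    rw [hI1, hK1, h', ← setIntegral_union (Set.disjoint_sdiff_right.mono_left Set.inter_subset_right)
      (hP'.diff hP) hμ.integrableOn hμ.integrableOn, Set.inter_union_diff]
  have hexp : ∀ a b : ℝ, ∫ x in P ∩ P', (μ x - a) * (μ x - b) ∂ν
      = I2 - (a + b) * I1 + a * b * p0 := by
    intro a b
    have h : ∀ x, (μ x - a) * (μ x - b) = μ x ^ 2 - (a + b) * μ x + a * b := by intro x; ring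
    simp_rw [h]
    have hA : ∫ x in P ∩ P', (μ x ^ 2 - (a + b) * μ x + a * b) ∂ν
        = (∫ x in P ∩ P', (μ x ^ 2 - (a + b) * μ x) ∂ν) + ∫ _x in P ∩ P', a * b ∂ν :=
      integral_add (hsq.integrableOn.sub ((hμ.integrableOn).const_mul _)) (integrable_const _)
    have hB : ∫ x in P ∩ P', (μ x ^ 2 - (a + b) * μ x) ∂ν
        = I2 - ∫ x in P ∩ P', (a + b) * μ x ∂ν :=
      integral_sub hsq.integrableOn ((hμ.integrableOn).const_mul _)
    have hC : ∫ x in P ∩ P', (a + b) * μ x ∂ν = (a + b) * I1 := integral_const_mul _ _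
    have hD : ∫ _x in P ∩ P', (a * b : ℝ) ∂ν = a * b * p0 := by
      rw [setIntegral_const, smul_eq_mul, measureReal_def]; ring
    rw [hA, hB, hC, hD]
  have key : ∀ a b : ℝ, condMean ν (P ∩ P') (fun x => (μ x - a) * (μ x - b))
      = (I2 - (a + b) * I1 + a * b * p0) / p0 := by
    intro a b
    unfold condMean
    rw [hexp]
  have keysq : ∀ c : ℝ, condMean ν (P ∩ P') (fun x => (μ x - c) ^ 2)
      = (I2 - (c + c) * I1 + c * c * p0) / p0 := by
    intro c
    have h : (fun x => (μ x - c) ^ 2) = fun x => (μ x - c) * (μ x - c) := by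
      funext x; ring
    rw [h, key]
  have e0 : condMean ν (P ∩ P') μ = I1 / p0 := rfl
  have e1 : condMean ν (P \ P') μ = J1 / p1 := rfl
  have e2 : condMean ν (P' \ P) μ = K1 / p2 := rfl
  have eP : condMean ν P μ = (I1 + J1) / (p0 + p1) := by
    unfold condMean; rw [hintP, hνP]
  have eP' : condMean ν P' μ = (I1 + K1) / (p0 + p2) := by
    unfold condMean; rw [hintP', hνP']
  rw [key, keysq, e0, e1, e2, eP, eP', hνP, hνP']
  have h0' : p0 ≠ 0 := ne_of_gt h0
  have h1' : p1 ≠ 0 := ne_of_gt h1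
  have h2' : p2 ≠ 0 := ne_of_gt h2
  have hs1 : p0 + p1 ≠ 0 := by positivity
  have hs2 : p0 + p2 ≠ 0 := by positivity
  field_simp
  ring
end

section
/- Fix γ ∈ (0,1], integers 1 ≤ s ≤ d with ⌈γd⌉ ≤ d − s, and define W_{γ,d}(x) = ∏_{k=0}^{⌈γd⌉−1} (1 − x/(d−k)) for 0 ≤ x ≤ s. Then for every integer 0 ≤ i ≤ s, 1 − W_{γ,d}(i) ≥ i · W_{γ,d}(s) · ⌈γd⌉/d. -/
open Finset

private lemma stmt14_factor_nonneg {d s k m : ℕ} (hm : m + s ≤ d) (hk : k < m) {x : ℝ}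
    (hx0 : 0 ≤ x) (hxs : x ≤ s) : 0 ≤ 1 - x / ((d : ℝ) - k) := by
  have h : ((k : ℝ) + s + 1) ≤ d := by exact_mod_cast (by omega : k + s + 1 ≤ d)
  have hpos : (0 : ℝ) < (d : ℝ) - k := by linarith
  rw [sub_nonneg, div_le_one hpos]; linarith

private lemma stmt14_factor_mono {d s k m : ℕ} (hm : m + s ≤ d) (hk : k < m) {x y : ℝ}
    (hxy : x ≤ y) : 1 - y / ((d : ℝ) - k) ≤ 1 - x / ((d : ℝ) - k) := by
  have h : ((k : ℝ) + s + 1) ≤ d := by exact_mod_cast (by omega : k + s + 1 ≤ d)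
  have hpos : (0 : ℝ) < (d : ℝ) - k := by linarith
  gcongr

private lemma stmt14_step (d s i : ℕ) (hi : i + 1 ≤ s) :
    ∀ m, m + s ≤ d →
      (∏ k ∈ range m, (1 - (i : ℝ) / ((d : ℝ) - k)))
        - (∏ k ∈ range m, (1 - ((i : ℝ) + 1) / ((d : ℝ) - k)))
      ≥ (m : ℝ) / (d : ℝ) * ∏ k ∈ range m, (1 - (s : ℝ) / ((d : ℝ) - k)) := by
  intro m
  induction m with
  | zero => simp
  | succ n ih =>
    intro hm
    have hm' : n + s ≤ d := by omega
    have hd : (0 : ℝ) < d := by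
      have : 0 < d := by omega
      exact_mod_cast this
    have hdn : ((n : ℝ) + s + 1) ≤ d := by exact_mod_cast (by omega : n + s + 1 ≤ d)
    have hdnpos : (0 : ℝ) < (d : ℝ) - n := by
      have hs0 : (0:ℝ) ≤ s := Nat.cast_nonneg s
      linarith
    have his : (i : ℝ) + 1 ≤ s := by exact_mod_cast hi
    set A := ∏ k ∈ range n, (1 - (i : ℝ) / ((d : ℝ) - k)) with hA
    set B := ∏ k ∈ range n, (1 - ((i : ℝ) + 1) / ((d : ℝ) - k)) with hB
    set Q := ∏ k ∈ range n, (1 - (s : ℝ) / ((d : ℝ) - k)) with hQdef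
    rw [prod_range_succ, prod_range_succ, prod_range_succ]
    set a := 1 - (i : ℝ) / ((d : ℝ) - n) with ha
    set b := 1 - ((i : ℝ) + 1) / ((d : ℝ) - n) with hb
    set c := 1 - (s : ℝ) / ((d : ℝ) - n) with hc
    have hQ0 : 0 ≤ Q := by
      apply prod_nonneg
      intro k hk
      exact stmt14_factor_nonneg hm' (mem_range.mp hk) (Nat.cast_nonneg s) le_rfl
    have hc0 : 0 ≤ c := by
      rw [hc, sub_nonneg, div_le_one hdnpos]; linarith
    have hc1 : c ≤ 1 := by
      rw [hc]
      have : 0 ≤ (s : ℝ) / ((d : ℝ) - n) := div_nonneg (Nat.cast_nonneg s) hdnpos.le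
      linarith
    have hca : c ≤ a := by
      rw [hc, ha]
      gcongr
      linarith
    have hBQ : Q ≤ B := by
      apply prod_le_prod
      · intro k hk
        exact stmt14_factor_nonneg hm' (mem_range.mp hk) (Nat.cast_nonneg s) le_rfl
      · intro k hk
        exact stmt14_factor_mono (s := s) hm' (mem_range.mp hk) his
    have hAB : A - B ≥ (n : ℝ) / d * Q := ih hm'
    have hab : a - b = 1 / ((d : ℝ) - n) := by
      rw [ha, hb]; field_simp; ring
    have h1 : c / d ≤ 1 / ((d : ℝ) - n) := by
      rw [div_le_div_iff₀ hd hdnpos]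
      have : c * ((d : ℝ) - n) = (d : ℝ) - n - s := by
        rw [hc]; field_simp
      rw [this]
      have hn0 : (0:ℝ) ≤ n := Nat.cast_nonneg n
      have hs0 : (0:ℝ) ≤ s := Nat.cast_nonneg s
      linarith
    have h2 : (n : ℝ) / d * Q * c ≤ (A - B) * a := by
      apply mul_le_mul hAB hca hc0
      have : (0 : ℝ) ≤ (n : ℝ) / d * Q :=
        mul_nonneg (div_nonneg (Nat.cast_nonneg n) hd.le) hQ0
      linarith
    have h3 : Q * (c / d) ≤ B * (a - b) := by
      rw [hab]
      exact mul_le_mul hBQ h1 (div_nonneg hc0 hd.le) (le_trans hQ0 hBQ)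
    have key : A * a - B * b = (A - B) * a + B * (a - b) := by ring
    have rhs : ((n + 1 : ℕ) : ℝ) / d * (Q * c) = (n : ℝ) / d * Q * c + Q * (c / d) := by
      push_cast; ring
    rw [ge_iff_le, key] at *
    push_cast
    have : ((n : ℝ) + 1) / d * (Q * c) = (n : ℝ) / d * Q * c + Q * (c / d) := by ring
    linarith

/-- for `γ ∈ (0,1]`, integers `1 ≤ s ≤ d` with `⌈γd⌉ ≤ d − s`, and
`W_{γ,d}(x) = ∏_{k=0}^{⌈γd⌉−1} (1 − x/(d−k))`, one has, for every integer `0 ≤ i ≤ s`,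
`1 − W_{γ,d}(i) ≥ i · W_{γ,d}(s) · ⌈γd⌉/d`. -/
theorem stmt14 (γ : ℝ) (d s : ℕ) (hγ0 : 0 < γ) (hγ1 : γ ≤ 1)
    (hs1 : 1 ≤ s) (hsd : s ≤ d) (hm : ⌈γ * (d : ℝ)⌉₊ ≤ d - s) :
    ∀ i : ℕ, i ≤ s →
      1 - (∏ k ∈ Finset.range ⌈γ * (d : ℝ)⌉₊, (1 - (i : ℝ) / ((d : ℝ) - (k : ℝ))))
        ≥ (i : ℝ)
            * (∏ k ∈ Finset.range ⌈γ * (d : ℝ)⌉₊, (1 - (s : ℝ) / ((d : ℝ) - (k : ℝ))))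
            * (⌈γ * (d : ℝ)⌉₊ : ℝ) / (d : ℝ) := by
  set M := ⌈γ * (d : ℝ)⌉₊ with hM
  have hMs : M + s ≤ d := by omega
  have hd : (0 : ℝ) < d := by
    have : 0 < d := by omega
    exact_mod_cast this
  intro i
  induction i with
  | zero => intro _; simp
  | succ n ih =>
    intro hi
    have ih' := ih (by omega)
    have hstep := stmt14_step d s n (by omega) M hMs
    set Q := ∏ k ∈ Finset.range M, (1 - (s : ℝ) / ((d : ℝ) - k)) with hQdef
    push_cast
    rw [ge_iff_le] at *
    have : ((n : ℝ) + 1) * Q * (M : ℝ) / d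
        = (n : ℝ) * Q * (M : ℝ) / d + (M : ℝ) / d * Q := by ring
    push_cast at ih' hstep ⊢
    linarith
end
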